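/- arXiv:2210.17373 — 4 statements merged into one kernel-verified Lean document; each statement's English description precedes it below -/
import Mathlib

section
/- Let (I ∪ J, w_A) be an assignment game induced by a nonnegative matrix A. If (I ∪ J, w_A) is PMAS-admissible, then its nucleolus coincides with its tau-value: η(w_A) = τ(w_A). -/
open Finset

/-- A population monotonic allocation scheme (PMAS) for the TU game `w` on the
finite player set `α`: subgame efficiency on every nonempty coalition, and
individual payoff monotonicity along coalition inclusion. -/
def IsPMAS {α : Type*} [Fintype α] (w : Finset α → ℝ) (x : Finset α → α → ℝ) : Prop :=
  (∀ S : Finset α, S.Nonempty → ∑ i ∈ S, x S i = w S) ∧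
  (∀ S T : Finset α, S ⊆ T → ∀ i ∈ S, x S i ≤ x T i)

/-- `μ` is a matching inside coalition `S`: every pair uses players of `S`,
and each player appears in at most one pair. -/
def IsMatching {I J : Type*} (S : Finset (I ⊕ J)) (μ : Finset (I × J)) : Prop :=
  (∀ p ∈ μ, Sum.inl p.1 ∈ S ∧ Sum.inr p.2 ∈ S) ∧
  (∀ p ∈ μ, ∀ q ∈ μ, p.1 = q.1 → p = q) ∧
  (∀ p ∈ μ, ∀ q ∈ μ, p.2 = q.2 → p = q)

/-- The assignment game induced by the matrix `A`. -/
noncomputable def assignGame {I J : Type*} [Fintype I] [Fintype J]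
    (A : I → J → ℝ) (S : Finset (I ⊕ J)) : ℝ :=
  sSup ((fun μ : Finset (I × J) => ∑ p ∈ μ, A p.1 p.2) '' {μ | IsMatching S μ})

/-- `x` is a core allocation of the game `w`. -/
def InCore {α : Type*} [Fintype α] (w : Finset α → ℝ) (x : α → ℝ) : Prop :=
  (∑ i, x i) = w Finset.univ ∧ ∀ S : Finset α, w S ≤ ∑ i ∈ S, x i

/-- `x` is PMAS-extendable in the game `w`. -/
def PMASExtendable {α : Type*} [Fintype α] (w : Finset α → ℝ) (x : α → ℝ) : Prop :=
  ∃ y, IsPMAS w y ∧ ∀ i, y Finset.univ i = x i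

/-- The upper (utopia) vector. -/
noncomputable def upperVec {α : Type*} [Fintype α] [DecidableEq α]
    (v : Finset α → ℝ) (i : α) : ℝ :=
  v Finset.univ - v (Finset.univ.erase i)

/-- The lower (minimal right) vector. -/
noncomputable def lowerVec {α : Type*} [Fintype α] [DecidableEq α]
    (v : Finset α → ℝ) (i : α) : ℝ :=
  sSup {t | ∃ S : Finset α, i ∈ S ∧ t = v S - ∑ j ∈ S.erase i, upperVec v j}

/-- `τ` is a tau-value of the game `v`. -/
def IsTauValue {α : Type*} [Fintype α] [DecidableEq α] (v : Finset α → ℝ) (τ : α → ℝ) : Prop :=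
  ∃ κ : ℝ, 0 ≤ κ ∧ κ ≤ 1 ∧ (∀ i, τ i = κ * upperVec v i + (1 - κ) * lowerVec v i) ∧
    ∑ i, τ i = v Finset.univ

open scoped Classical in
/-- The nondecreasingly ordered list of satisfactions of the nonempty proper
coalitions at allocation `x`. -/
noncomputable def satList {α : Type*} [Fintype α] (v : Finset α → ℝ) (x : α → ℝ) : List ℝ :=
  ((Finset.univ.filter (fun S : Finset α => S.Nonempty ∧ S ≠ Finset.univ)).val.map
    (fun S => ∑ i ∈ S, x i - v S)).sort (· ≤ ·)

/-- `x` is the nucleolus of `v`: a core allocation lexicographically maximizing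
the nondecreasingly ordered satisfaction vector over the core. -/
noncomputable def IsNucleolus {α : Type*} [Fintype α] (v : Finset α → ℝ) (x : α → ℝ) : Prop :=
  InCore v x ∧ ∀ y, InCore v y →
    satList v y = satList v x ∨ List.Lex (· < ·) (satList v y) (satList v x)

/-- `A` has Γ-shaped support with corner `(i1, j1)`. -/
def GammaShaped {I J : Type*} (A : I → J → ℝ) (i1 : I) (j1 : J) : Prop :=
  (∀ k l, (k = i1 ∨ l = j1) → 0 < A k l) ∧ (∀ k l, k ≠ i1 → l ≠ j1 → A k l = 0)

/-- The corner `(i1, j1)` of `A` is dominant. -/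
def DominantCorner {I J : Type*} (A : I → J → ℝ) (i1 : I) (j1 : J) : Prop :=
  ∀ k l, k ≠ i1 → l ≠ j1 → A i1 l + A k j1 ≤ A i1 j1

set_option linter.unusedSectionVars false
set_option maxHeartbeats 1000000

namespace AssignPMAS

variable {I J : Type*} [Fintype I] [Fintype J] [DecidableEq I] [DecidableEq J]

lemma isMatching_empty (S : Finset (I ⊕ J)) : IsMatching S (∅ : Finset (I × J)) :=
  ⟨by simp, by simp, by simp⟩

variable (A : I → J → ℝ)

/-- sum of a matching -/
noncomputable def msum (μ : Finset (I × J)) : ℝ := ∑ p ∈ μ, A p.1 p.2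

lemma assignGame_def (S : Finset (I ⊕ J)) :
    assignGame A S = sSup (msum A '' {μ | IsMatching S μ}) := rfl

lemma bdd (S : Finset (I ⊕ J)) : BddAbove (msum A '' {μ | IsMatching S μ}) :=
  (Set.toFinite _).image _ |>.bddAbove

lemma sum_le_assignGame {S : Finset (I ⊕ J)} {μ : Finset (I × J)} (h : IsMatching S μ) :
    msum A μ ≤ assignGame A S :=
  le_csSup (bdd A S) ⟨μ, h, rfl⟩

lemma exists_assignGame_eq (S : Finset (I ⊕ J)) :
    ∃ μ, IsMatching S μ ∧ assignGame A S = msum A μ := by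
  have hfin : (msum A '' {μ | IsMatching S μ}).Finite := (Set.toFinite _).image _
  have hne : (msum A '' {μ | IsMatching S μ}).Nonempty :=
    ⟨msum A ∅, Set.mem_image_of_mem _ (by exact isMatching_empty S)⟩
  obtain ⟨μ, hμ, hval⟩ := hne.csSup_mem hfin
  exact ⟨μ, hμ, hval.symm⟩

lemma assignGame_le {S : Finset (I ⊕ J)} {b : ℝ}
    (h : ∀ μ, IsMatching S μ → msum A μ ≤ b) : assignGame A S ≤ b := by
  apply csSup_le ⟨msum A ∅, Set.mem_image_of_mem _ (by exact isMatching_empty S)⟩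
  rintro x ⟨μ, hμ, rfl⟩; exact h μ hμ

lemma assignGame_nonneg (S : Finset (I ⊕ J)) : 0 ≤ assignGame A S := by
  have := sum_le_assignGame A (isMatching_empty S)
  simpa [msum] using this

lemma isMatching_mono {S T : Finset (I ⊕ J)} {μ : Finset (I × J)} (hST : S ⊆ T)
    (h : IsMatching S μ) : IsMatching T μ :=
  ⟨fun p hp => ⟨hST (h.1 p hp).1, hST (h.1 p hp).2⟩, h.2.1, h.2.2⟩

lemma assignGame_mono {S T : Finset (I ⊕ J)} (hST : S ⊆ T) :
    assignGame A S ≤ assignGame A T := by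
  obtain ⟨μ, hμ, hval⟩ := exists_assignGame_eq A S
  rw [hval]
  exact sum_le_assignGame A (isMatching_mono hST hμ)

lemma assignGame_singleton_left (i : I) : assignGame A {Sum.inl i} = 0 := by
  refine le_antisymm (assignGame_le A fun μ hμ => ?_) (assignGame_nonneg A _)
  have : μ = ∅ := by
    rw [Finset.eq_empty_iff_forall_notMem]
    intro p hp
    have := (hμ.1 p hp).2
    simp at this
  simp [this, msum]

lemma assignGame_singleton_right (j : J) : assignGame A {Sum.inr j} = 0 := by
  refine le_antisymm (assignGame_le A fun μ hμ => ?_) (assignGame_nonneg A _)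
  have : μ = ∅ := by
    rw [Finset.eq_empty_iff_forall_notMem]
    intro p hp
    have := (hμ.1 p hp).1
    simp at this
  simp [this, msum]

lemma isMatching_single {i : I} {j : J} {S : Finset (I ⊕ J)} (hi : Sum.inl i ∈ S)
    (hj : Sum.inr j ∈ S) : IsMatching S ({(i, j)} : Finset (I × J)) := by
  refine ⟨?_, ?_, ?_⟩ <;> simp_all

lemma msum_single (i : I) (j : J) : msum A ({(i,j)} : Finset (I × J)) = A i j := by
  simp [msum]

variable (hA : ∀ i j, 0 ≤ A i j)
include hA

lemma assignGame_pair (i : I) (j : J) :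
    assignGame A {Sum.inl i, Sum.inr j} = A i j := by
  refine le_antisymm (assignGame_le A fun μ hμ => ?_) ?_
  · have hsub : μ ⊆ {(i,j)} := by
      intro p hp
      have h1 := (hμ.1 p hp).1
      have h2 := (hμ.1 p hp).2
      simp only [Finset.mem_insert, Finset.mem_singleton] at h1 h2
      have : p.1 = i := by rcases h1 with h | h <;> simp_all
      have : p.2 = j := by rcases h2 with h | h <;> simp_all
      simp only [Finset.mem_singleton]
      cases p; simp_all
    have h1 : msum A μ ≤ msum A {(i,j)} :=
      Finset.sum_le_sum_of_subset_of_nonneg hsub (fun p _ _ => hA p.1 p.2)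
    rw [msum_single A i j] at h1
    exact h1
  · rw [← msum_single A i j]
    exact sum_le_assignGame A (isMatching_single (by simp) (by simp))

lemma assignGame_tripleRow (i k : I) (j : J) :
    assignGame A {Sum.inl i, Sum.inl k, Sum.inr j} = max (A i j) (A k j) := by
  refine le_antisymm (assignGame_le A fun μ hμ => ?_) ?_
  · rcases Finset.eq_empty_or_nonempty μ with rfl | ⟨p, hp⟩
    · simpa [msum] using le_max_of_le_left (hA i j)
    · have hone : μ = {p} := by
        apply Finset.eq_singleton_iff_unique_mem.2 ⟨hp, fun q hq => ?_⟩
        apply hμ.2.2 q hq p hp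
        have h2 := (hμ.1 q hq).2
        have h2' := (hμ.1 p hp).2
        simp only [Finset.mem_insert, Finset.mem_singleton] at h2 h2'
        have : q.2 = j := by rcases h2 with h | h | h <;> simp_all
        have : p.2 = j := by rcases h2' with h | h | h <;> simp_all
        simp_all
      have h1 := (hμ.1 p hp).1
      have h2 := (hμ.1 p hp).2
      simp only [Finset.mem_insert, Finset.mem_singleton] at h1 h2
      have hp2 : p.2 = j := by rcases h2 with h | h | h <;> simp_all
      have hp1 : p.1 = i ∨ p.1 = k := by rcases h1 with h | h | h <;> simp_all
      rw [hone, msum, Finset.sum_singleton, hp2]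
      rcases hp1 with h | h <;> rw [h]
      · exact le_max_left _ _
      · exact le_max_right _ _
  · rw [max_le_iff]
    constructor
    · rw [← msum_single A i j]
      exact sum_le_assignGame A (isMatching_single (by simp) (by simp))
    · rw [← msum_single A k j]
      exact sum_le_assignGame A (isMatching_single (by simp) (by simp))

lemma assignGame_tripleCol (i : I) (j l : J) :
    assignGame A {Sum.inl i, Sum.inr j, Sum.inr l} = max (A i j) (A i l) := by
  refine le_antisymm (assignGame_le A fun μ hμ => ?_) ?_
  · rcases Finset.eq_empty_or_nonempty μ with rfl | ⟨p, hp⟩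
    · simpa [msum] using le_max_of_le_left (hA i j)
    · have hone : μ = {p} := by
        apply Finset.eq_singleton_iff_unique_mem.2 ⟨hp, fun q hq => ?_⟩
        apply hμ.2.1 q hq p hp
        have h2 := (hμ.1 q hq).1
        have h2' := (hμ.1 p hp).1
        simp only [Finset.mem_insert, Finset.mem_singleton] at h2 h2'
        have : q.1 = i := by rcases h2 with h | h | h <;> simp_all
        have : p.1 = i := by rcases h2' with h | h | h <;> simp_all
        simp_all
      have h1 := (hμ.1 p hp).1
      have h2 := (hμ.1 p hp).2
      simp only [Finset.mem_insert, Finset.mem_singleton] at h1 h2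
      have hp1 : p.1 = i := by rcases h1 with h | h | h <;> simp_all
      have hp2 : p.2 = j ∨ p.2 = l := by rcases h2 with h | h | h <;> simp_all
      rw [hone, msum, Finset.sum_singleton, hp1]
      rcases hp2 with h | h <;> rw [h]
      · exact le_max_left _ _
      · exact le_max_right _ _
  · rw [max_le_iff]
    constructor
    · rw [← msum_single A i j]
      exact sum_le_assignGame A (isMatching_single (by simp) (by simp))
    · rw [← msum_single A i l]
      exact sum_le_assignGame A (isMatching_single (by simp) (by simp))

open scoped Classical

omit hA

/-- rows matched by Γ -/
def Rows (Γ : Finset (I × J)) : Finset I := Γ.image Prod.fst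
def Cols (Γ : Finset (I × J)) : Finset J := Γ.image Prod.snd

lemma mem_Rows {Γ : Finset (I × J)} {i : I} : i ∈ Rows Γ ↔ ∃ c ∈ Γ, c.1 = i :=
  Finset.mem_image

lemma mem_Cols {Γ : Finset (I × J)} {j : J} : j ∈ Cols Γ ↔ ∃ c ∈ Γ, c.2 = j :=
  Finset.mem_image

lemma mem_Rows' {Γ : Finset (I × J)} {i : I} (h : i ∈ Rows Γ) : ∃ q, (i, q) ∈ Γ := by
  obtain ⟨c, hc, h1⟩ := mem_Rows.1 h
  exact ⟨c.2, by rw [← h1, Prod.mk.eta]; exact hc⟩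

lemma mem_Cols' {Γ : Finset (I × J)} {j : J} (h : j ∈ Cols Γ) : ∃ p, (p, j) ∈ Γ := by
  obtain ⟨c, hc, h1⟩ := mem_Cols.1 h
  exact ⟨c.1, by rw [← h1, Prod.mk.eta]; exact hc⟩

structure Good (Γ : Finset (I × J)) : Prop where
  inj1 : ∀ c ∈ Γ, ∀ c' ∈ Γ, c.1 = c'.1 → c = c'
  inj2 : ∀ c ∈ Γ, ∀ c' ∈ Γ, c.2 = c'.2 → c = c'
  pos : ∀ c ∈ Γ, 0 < A c.1 c.2
  tri : ∀ i j, 0 < A i j → (i, j) ∈ Γ ∨ (i ∈ Rows Γ ∧ j ∉ Cols Γ) ∨ (i ∉ Rows Γ ∧ j ∈ Cols Γ)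
  dom : ∀ c ∈ Γ, ∀ k ∉ Rows Γ, ∀ l ∉ Cols Γ, A c.1 l + A k c.2 ≤ A c.1 c.2
  dom1 : ∀ c ∈ Γ, ∀ l ∉ Cols Γ, A c.1 l ≤ A c.1 c.2
  dom2 : ∀ c ∈ Γ, ∀ k ∉ Rows Γ, A k c.2 ≤ A c.1 c.2
  uniqR : ∀ l ∉ Cols Γ, ∀ c ∈ Γ, ∀ c' ∈ Γ, 0 < A c.1 l → 0 < A c'.1 l → c = c'
  uniqC : ∀ k ∉ Rows Γ, ∀ c ∈ Γ, ∀ c' ∈ Γ, 0 < A k c.2 → 0 < A k c'.2 → c = c'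
  opt : assignGame A Finset.univ = msum A Γ

section PMASfacts

variable {y : Finset (I ⊕ J) → (I ⊕ J) → ℝ} (hy : IsPMAS (assignGame A) y)
include hy

lemma pmas_single_left (i : I) : y {Sum.inl i} (Sum.inl i) = 0 := by
  have := hy.1 {Sum.inl i} (by simp)
  rw [Finset.sum_singleton] at this
  rw [this, assignGame_singleton_left]

lemma pmas_single_right (j : J) : y {Sum.inr j} (Sum.inr j) = 0 := by
  have := hy.1 {Sum.inr j} (by simp)
  rw [Finset.sum_singleton] at this
  rw [this, assignGame_singleton_right]

lemma pmas_nonneg {S : Finset (I ⊕ J)} {i : I ⊕ J} (hi : i ∈ S) : 0 ≤ y S i := by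
  rcases i with i | j
  · rw [← pmas_single_left A hy i]
    exact hy.2 {Sum.inl i} S (by simpa using hi) _ (by simp)
  · rw [← pmas_single_right A hy j]
    exact hy.2 {Sum.inr j} S (by simpa using hi) _ (by simp)

include hA

lemma pmas_pair_eff (i : I) (j : J) :
    y {Sum.inl i, Sum.inr j} (Sum.inl i) + y {Sum.inl i, Sum.inr j} (Sum.inr j) = A i j := by
  have h := hy.1 {Sum.inl i, Sum.inr j} (by simp)
  rw [Finset.sum_pair (by simp)] at h
  rw [h, assignGame_pair A hA]

lemma pmas_key_row (i : I) (j : J) (k : I) (hk : k ≠ i) :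
    y {Sum.inl i, Sum.inr j} (Sum.inl i) ≤ max (A i j) (A k j) - A k j := by
  set S3 : Finset (I ⊕ J) := {Sum.inl i, Sum.inl k, Sum.inr j} with hS3
  have heff := hy.1 S3 (by simp [hS3])
  have hw : assignGame A S3 = max (A i j) (A k j) := assignGame_tripleRow A hA i k j
  have hsum : ∑ x ∈ S3, y S3 x
      = y S3 (Sum.inl i) + (y S3 (Sum.inl k) + y S3 (Sum.inr j)) := by
    rw [hS3]
    rw [Finset.sum_insert (by simp [hk.symm]), Finset.sum_pair (by simp)]
  have h1 : y {Sum.inl i, Sum.inr j} (Sum.inl i) ≤ y S3 (Sum.inl i) :=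
    hy.2 _ S3 (by intro x hx; simp at hx; rcases hx with h | h <;> simp [hS3, h]) _ (by simp)
  have h2 : y {Sum.inl k, Sum.inr j} (Sum.inl k) ≤ y S3 (Sum.inl k) :=
    hy.2 _ S3 (by intro x hx; simp at hx; rcases hx with h | h <;> simp [hS3, h]) _ (by simp)
  have h3 : y {Sum.inl k, Sum.inr j} (Sum.inr j) ≤ y S3 (Sum.inr j) :=
    hy.2 _ S3 (by intro x hx; simp at hx; rcases hx with h | h <;> simp [hS3, h]) _ (by simp)
  have hkj := pmas_pair_eff A hA hy k j
  have : y {Sum.inl i, Sum.inr j} (Sum.inl i) + A k j ≤ max (A i j) (A k j) := by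
    rw [← hw, ← heff, hsum, ← hkj]
    gcongr
  linarith

lemma pmas_key_col (i : I) (j : J) (l : J) (hl : l ≠ j) :
    y {Sum.inl i, Sum.inr j} (Sum.inr j) ≤ max (A i j) (A i l) - A i l := by
  set S3 : Finset (I ⊕ J) := {Sum.inl i, Sum.inr j, Sum.inr l} with hS3
  have heff := hy.1 S3 (by simp [hS3])
  have hw : assignGame A S3 = max (A i j) (A i l) := assignGame_tripleCol A hA i j l
  have hsum : ∑ x ∈ S3, y S3 x
      = y S3 (Sum.inr j) + (y S3 (Sum.inl i) + y S3 (Sum.inr l)) := by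
    rw [hS3]
    rw [Finset.sum_insert (by simp), Finset.sum_pair (by simp [hl.symm]  )]
    ring
  have h1 : y {Sum.inl i, Sum.inr j} (Sum.inr j) ≤ y S3 (Sum.inr j) :=
    hy.2 _ S3 (by intro x hx; simp at hx; rcases hx with h | h <;> simp [hS3, h]) _ (by simp)
  have h2 : y {Sum.inl i, Sum.inr l} (Sum.inl i) ≤ y S3 (Sum.inl i) :=
    hy.2 _ S3 (by intro x hx; simp at hx; rcases hx with h | h <;> simp [hS3, h]) _ (by simp)
  have h3 : y {Sum.inl i, Sum.inr l} (Sum.inr l) ≤ y S3 (Sum.inr l) :=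
    hy.2 _ S3 (by intro x hx; simp at hx; rcases hx with h | h <;> simp [hS3, h]) _ (by simp)
  have hil := pmas_pair_eff A hA hy i l
  have : y {Sum.inl i, Sum.inr j} (Sum.inr j) + A i l ≤ max (A i j) (A i l) := by
    rw [← hw, ← heff, hsum, ← hil]
    gcongr
  linarith

lemma pmas_star (i : I) (j : J) (k : I) (l : J) (hk : k ≠ i) (hl : l ≠ j) :
    A i j ≤ (max (A i j) (A k j) - A k j) + (max (A i j) (A i l) - A i l) := by
  have h1 := pmas_key_row A hA hy i j k hk
  have h2 := pmas_key_col A hA hy i j l hl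
  have h3 := pmas_pair_eff A hA hy i j
  linarith

end PMASfacts

section Construction

lemma isMatching_subset {S : Finset (I ⊕ J)} {μ ν : Finset (I × J)} (h : ν ⊆ μ)
    (hμ : IsMatching S μ) : IsMatching S ν :=
  ⟨fun p hp => hμ.1 p (h hp), fun p hp q hq => hμ.2.1 p (h hp) q (h hq),
   fun p hp q hq => hμ.2.2 p (h hp) q (h hq)⟩

lemma isMatching_insert {Γ : Finset (I × J)} (hΓ : IsMatching (Finset.univ : Finset (I ⊕ J)) Γ)
    {c : I × J} (h1 : c.1 ∉ Rows Γ) (h2 : c.2 ∉ Cols Γ) :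
    IsMatching (Finset.univ : Finset (I ⊕ J)) (insert c Γ) := by
  refine ⟨fun p _ => ⟨Finset.mem_univ _, Finset.mem_univ _⟩, ?_, ?_⟩
  · intro p hp q hq hpq
    rcases Finset.mem_insert.1 hp with hp1 | hp1 <;> rcases Finset.mem_insert.1 hq with hq1 | hq1
    · rw [hp1, hq1]
    · exact absurd (mem_Rows.2 ⟨q, hq1, by rw [← hpq, hp1]⟩) h1
    · exact absurd (mem_Rows.2 ⟨p, hp1, by rw [hpq, hq1]⟩) h1
    · exact hΓ.2.1 p hp1 q hq1 hpq
  · intro p hp q hq hpq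
    rcases Finset.mem_insert.1 hp with hp1 | hp1 <;> rcases Finset.mem_insert.1 hq with hq1 | hq1
    · rw [hp1, hq1]
    · exact absurd (mem_Cols.2 ⟨q, hq1, by rw [← hpq, hp1]⟩) h2
    · exact absurd (mem_Cols.2 ⟨p, hp1, by rw [hpq, hq1]⟩) h2
    · exact hΓ.2.2 p hp1 q hq1 hpq

include hA

lemma exists_good (hadm : ∃ y, IsPMAS (assignGame A) y) : ∃ Γ : Finset (I × J), Good A Γ := by
  obtain ⟨y, hy⟩ := hadm
  set F : Finset (Finset (I × J)) :=
    Finset.univ.filter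
      (fun μ => IsMatching (Finset.univ : Finset (I ⊕ J)) μ ∧ ∀ p ∈ μ, 0 < A p.1 p.2) with hF
  have hmemF : ∀ μ, μ ∈ F ↔
      IsMatching (Finset.univ : Finset (I ⊕ J)) μ ∧ ∀ p ∈ μ, 0 < A p.1 p.2 := by
    intro μ; simp [hF]
  have hFne : F.Nonempty := ⟨∅, (hmemF ∅).2 ⟨isMatching_empty _, by simp⟩⟩
  set W0 : ℝ := F.sup' hFne (msum A) with hW0
  have hW0w : assignGame A Finset.univ = W0 := by
    apply le_antisymm
    · obtain ⟨ν, hν, hval⟩ := exists_assignGame_eq A Finset.univ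
      rw [hval]
      set ν' := ν.filter (fun p => 0 < A p.1 p.2) with hν'
      have hsub : ν' ⊆ ν := Finset.filter_subset _ _
      have heq : msum A ν = msum A ν' := by
        rw [msum, msum, ← Finset.sum_filter_add_sum_filter_not ν (fun p => 0 < A p.1 p.2)]
        have hz : ∑ p ∈ ν.filter (fun p => ¬ 0 < A p.1 p.2), A p.1 p.2 = 0 := by
          apply Finset.sum_eq_zero
          intro p hp
          rcases Finset.mem_filter.1 hp with ⟨_, h2⟩
          exact le_antisymm (not_lt.1 h2) (hA p.1 p.2)
        rw [hz, add_zero]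
      rw [heq]
      exact Finset.le_sup' (msum A)
        ((hmemF ν').2 ⟨isMatching_subset hsub hν, fun p hp => (Finset.mem_filter.1 hp).2⟩)
    · exact Finset.sup'_le _ _ fun μ hμ => sum_le_assignGame A ((hmemF μ).1 hμ).1
  set F' : Finset (Finset (I × J)) := F.filter (fun μ => msum A μ = W0) with hF'
  have hF'ne : F'.Nonempty := by
    obtain ⟨μ, hμ, hval⟩ := Finset.exists_mem_eq_sup' hFne (msum A)
    exact ⟨μ, Finset.mem_filter.2 ⟨hμ, hval.symm⟩⟩
  obtain ⟨Γ, hΓF', hmin⟩ := F'.exists_min_image Finset.card hF'ne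
  have hΓF := Finset.mem_filter.1 hΓF'
  have hmatch : IsMatching (Finset.univ : Finset (I ⊕ J)) Γ := ((hmemF Γ).1 hΓF.1).1
  have hpos : ∀ c ∈ Γ, 0 < A c.1 c.2 := ((hmemF Γ).1 hΓF.1).2
  have hΓsum : msum A Γ = W0 := hΓF.2
  have hopt : assignGame A Finset.univ = msum A Γ := by rw [hW0w, hΓsum]
  have inj1 : ∀ c ∈ Γ, ∀ c' ∈ Γ, c.1 = c'.1 → c = c' := hmatch.2.1
  have inj2 : ∀ c ∈ Γ, ∀ c' ∈ Γ, c.2 = c'.2 → c = c' := hmatch.2.2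
  -- any matching has value at most msum Γ
  have hle : ∀ ν, IsMatching (Finset.univ : Finset (I ⊕ J)) ν → msum A ν ≤ msum A Γ := by
    intro ν hν
    rw [hopt.symm]
    exact sum_le_assignGame A hν
  -- erasing a corner removes its row/col
  have hrow_erase : ∀ c ∈ Γ, c.1 ∉ Rows (Γ.erase c) := by
    intro c hc hmem
    obtain ⟨c', hc', h1⟩ := mem_Rows.1 hmem
    have := inj1 c' (Finset.mem_of_mem_erase hc') c hc h1
    exact (Finset.ne_of_mem_erase hc') this
  have hcol_erase : ∀ c ∈ Γ, c.2 ∉ Cols (Γ.erase c) := by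
    intro c hc hmem
    obtain ⟨c', hc', h1⟩ := mem_Cols.1 hmem
    have := inj2 c' (Finset.mem_of_mem_erase hc') c hc h1
    exact (Finset.ne_of_mem_erase hc') this
  have hRsub : ∀ (c : I × J), Rows (Γ.erase c) ⊆ Rows Γ :=
    fun c => Finset.image_subset_image (Finset.erase_subset _ _)
  have hCsub : ∀ (c : I × J), Cols (Γ.erase c) ⊆ Cols Γ :=
    fun c => Finset.image_subset_image (Finset.erase_subset _ _)
  -- dominance: single row swap
  have dom1 : ∀ c ∈ Γ, ∀ l ∉ Cols Γ, A c.1 l ≤ A c.1 c.2 := by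
    intro c hc l hl
    set ν := insert (c.1, l) (Γ.erase c) with hν
    have hnotmem : (c.1, l) ∉ Γ.erase c := by
      intro hmem
      exact hl (mem_Cols.2 ⟨(c.1, l), Finset.mem_of_mem_erase hmem, rfl⟩)
    have hνm : IsMatching (Finset.univ : Finset (I ⊕ J)) ν :=
      isMatching_insert (isMatching_subset (Finset.erase_subset _ _) hmatch)
        (hrow_erase c hc) (fun h => hl (hCsub c h))
    have hsum : msum A ν = A c.1 l + (msum A Γ - A c.1 c.2) := by
      rw [hν, msum, Finset.sum_insert hnotmem, Finset.sum_erase_eq_sub hc]; rfl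
    have := hle ν hνm
    rw [hsum] at this
    linarith
  have dom2 : ∀ c ∈ Γ, ∀ k ∉ Rows Γ, A k c.2 ≤ A c.1 c.2 := by
    intro c hc k hk
    set ν := insert (k, c.2) (Γ.erase c) with hν
    have hnotmem : (k, c.2) ∉ Γ.erase c := by
      intro hmem
      exact hk (mem_Rows.2 ⟨(k, c.2), Finset.mem_of_mem_erase hmem, rfl⟩)
    have hνm : IsMatching (Finset.univ : Finset (I ⊕ J)) ν :=
      isMatching_insert (isMatching_subset (Finset.erase_subset _ _) hmatch)
        (fun h => hk (hRsub c h)) (hcol_erase c hc)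
    have hsum : msum A ν = A k c.2 + (msum A Γ - A c.1 c.2) := by
      rw [hν, msum, Finset.sum_insert hnotmem, Finset.sum_erase_eq_sub hc]; rfl
    have := hle ν hνm
    rw [hsum] at this
    linarith
  have dom : ∀ c ∈ Γ, ∀ k ∉ Rows Γ, ∀ l ∉ Cols Γ, A c.1 l + A k c.2 ≤ A c.1 c.2 := by
    intro c hc k hk l hl
    set ν := insert (c.1, l) (insert (k, c.2) (Γ.erase c)) with hν
    have hc1R : c.1 ∈ Rows Γ := mem_Rows.2 ⟨c, hc, rfl⟩
    have hc2C : c.2 ∈ Cols Γ := mem_Cols.2 ⟨c, hc, rfl⟩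
    have hkc : (k, c.2) ∉ Γ.erase c := by
      intro hmem
      exact hk (mem_Rows.2 ⟨(k, c.2), Finset.mem_of_mem_erase hmem, rfl⟩)
    have hinner : IsMatching (Finset.univ : Finset (I ⊕ J)) (insert (k, c.2) (Γ.erase c)) :=
      isMatching_insert (isMatching_subset (Finset.erase_subset _ _) hmatch)
        (fun h => hk (hRsub c h)) (hcol_erase c hc)
    have hrow2 : c.1 ∉ Rows (insert (k, c.2) (Γ.erase c)) := by
      intro hmem
      obtain ⟨c', hc', h1⟩ := mem_Rows.1 hmem
      rcases Finset.mem_insert.1 hc' with hc1 | hc1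
      · have hkc : k = c.1 := by rw [← h1, hc1]
        rw [hkc] at hk
        exact hk hc1R
      · exact hrow_erase c hc (mem_Rows.2 ⟨c', hc1, h1⟩)
    have hcol2 : l ∉ Cols (insert (k, c.2) (Γ.erase c)) := by
      intro hmem
      obtain ⟨c', hc', h1⟩ := mem_Cols.1 hmem
      rcases Finset.mem_insert.1 hc' with hc1 | hc1
      · have hlc : l = c.2 := by rw [← h1, hc1]
        rw [hlc] at hl
        exact hl hc2C
      · exact hl (hCsub c (mem_Cols.2 ⟨c', hc1, h1⟩))
    have hνm : IsMatching (Finset.univ : Finset (I ⊕ J)) ν :=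
      isMatching_insert hinner hrow2 hcol2
    have hnm1 : (c.1, l) ∉ insert (k, c.2) (Γ.erase c) := by
      intro hmem
      rcases Finset.mem_insert.1 hmem with h | h
      · have hck : c.1 = k := congrArg Prod.fst h
        rw [← hck] at hk
        exact hk hc1R
      · exact hl (hCsub c (mem_Cols.2 ⟨_, h, rfl⟩))
    have hsum : msum A ν = A c.1 l + (A k c.2 + (msum A Γ - A c.1 c.2)) := by
      rw [hν, msum, Finset.sum_insert hnm1, Finset.sum_insert hkc,
        Finset.sum_erase_eq_sub hc]; rfl
    have := hle ν hνm
    rw [hsum] at this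
    linarith
  refine ⟨Γ, inj1, inj2, hpos, ?_, dom, dom1, dom2, ?_, ?_, hopt⟩
  · -- trichotomy
    intro i j hij
    by_cases hiR : i ∈ Rows Γ
    · by_cases hjC : j ∈ Cols Γ
      · left
        by_contra hnot
        obtain ⟨q, hciq⟩ := mem_Rows' hiR
        obtain ⟨p, hcpj⟩ := mem_Cols' hjC
        have hqj : q ≠ j := by rintro rfl; exact hnot hciq
        have hpi : p ≠ i := by rintro rfl; exact hnot hcpj
        have hbpos : 0 < A p j := hpos _ hcpj
        have hcpos : 0 < A i q := hpos _ hciq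
        -- optimality: swap the two pairs for (i,j)
        have hne2 : (p, j) ≠ (i, q) := by simp [hpi]
        have hpj_in : (p, j) ∈ Γ.erase (i, q) := Finset.mem_erase.2 ⟨hne2, hcpj⟩
        set ν := insert (i, j) ((Γ.erase (i, q)).erase (p, j)) with hν
        have hij_notin : (i, j) ∉ (Γ.erase (i, q)).erase (p, j) := by
          intro hmem
          exact hnot (Finset.mem_of_mem_erase (Finset.mem_of_mem_erase hmem))
        have hiR2 : i ∉ Rows ((Γ.erase (i, q)).erase (p, j)) := by
          intro hmem
          obtain ⟨c', hc', h1⟩ := mem_Rows.1 hmem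
          have hc'Γ : c' ∈ Γ := Finset.mem_of_mem_erase (Finset.mem_of_mem_erase hc')
          have := inj1 c' hc'Γ (i, q) hciq h1
          rw [this] at hc'
          exact (Finset.ne_of_mem_erase (Finset.mem_of_mem_erase hc')) rfl
        have hjC2 : j ∉ Cols ((Γ.erase (i, q)).erase (p, j)) := by
          intro hmem
          obtain ⟨c', hc', h1⟩ := mem_Cols.1 hmem
          have hc'Γ : c' ∈ Γ := Finset.mem_of_mem_erase (Finset.mem_of_mem_erase hc')
          have := inj2 c' hc'Γ (p, j) hcpj h1
          exact (Finset.ne_of_mem_erase hc') this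
        have hνm : IsMatching (Finset.univ : Finset (I ⊕ J)) ν :=
          isMatching_insert
            (isMatching_subset (Finset.erase_subset _ _)
              (isMatching_subset (Finset.erase_subset _ _) hmatch)) hiR2 hjC2
        have hsumν : msum A ν = A i j + (msum A Γ - A i q - A p j) := by
          rw [hν, msum, Finset.sum_insert hij_notin, Finset.sum_erase_eq_sub hpj_in,
            Finset.sum_erase_eq_sub hciq]
          rfl
        have hopt2 : A i j ≤ A i q + A p j := by
          have := hle ν hνm
          rw [hsumν] at this
          linarith
        -- star inequality
        have hstar := pmas_star A hA hy i j p q hpi hqj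
        have heq : A i j = A i q + A p j := by
          rcases le_total (A i j) (A p j) with h1 | h1 <;>
            rcases le_total (A i j) (A i q) with h2 | h2
          · rw [max_eq_right h1, max_eq_right h2] at hstar; linarith
          · rw [max_eq_right h1, max_eq_left h2] at hstar; linarith
          · rw [max_eq_left h1, max_eq_right h2] at hstar; linarith
          · rw [max_eq_left h1, max_eq_left h2] at hstar; linarith
        -- ν has the same value but smaller cardinality
        have hν_in : ν ∈ F' := by
          refine Finset.mem_filter.2 ⟨(hmemF ν).2 ⟨hνm, ?_⟩, ?_⟩
          · intro c hcν
            rcases Finset.mem_insert.1 hcν with rfl | hcν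
            · exact hij
            · exact hpos c (Finset.mem_of_mem_erase (Finset.mem_of_mem_erase hcν))
          · rw [hsumν, ← hΓsum]; linarith
        have hcard : ν.card < Γ.card := by
          have h2le : 2 ≤ Γ.card := by
            have : ({(p, j), (i, q)} : Finset (I × J)) ⊆ Γ := by
              intro x hx
              rcases Finset.mem_insert.1 hx with rfl | hx
              · exact hcpj
              · rw [Finset.mem_singleton.1 hx]; exact hciq
            calc 2 = ({(p, j), (i, q)} : Finset (I × J)).card := by
                  rw [Finset.card_pair hne2]
              _ ≤ Γ.card := Finset.card_le_card this
          rw [hν, Finset.card_insert_of_notMem hij_notin,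
            Finset.card_erase_of_mem hpj_in, Finset.card_erase_of_mem hciq]
          omega
        exact absurd (hmin ν hν_in) (by omega)
      · right; left; exact ⟨hiR, hjC⟩
    · by_cases hjC : j ∈ Cols Γ
      · right; right; exact ⟨hiR, hjC⟩
      · -- both unmatched: contradiction with optimality
        exfalso
        set ν := insert (i, j) Γ with hν
        have hnm : (i, j) ∉ Γ := fun hmem => hiR (mem_Rows.2 ⟨_, hmem, rfl⟩)
        have hνm : IsMatching (Finset.univ : Finset (I ⊕ J)) ν :=
          isMatching_insert hmatch hiR hjC
        have := hle ν hνm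
        rw [hν, msum, Finset.sum_insert hnm] at this
        have : A i j ≤ 0 := by
          have h0 : (∑ p ∈ Γ, A p.1 p.2) = msum A Γ := rfl
          linarith [h0 ▸ this]
        linarith
  · -- uniqR
    intro l hl c hc c' hc' h1 h2
    by_contra hne
    have hne1 : c.1 ≠ c'.1 := fun h => hne (inj1 c hc c' hc' h)
    have hl2 : c.2 ≠ l := fun h => hl (h ▸ mem_Cols.2 ⟨c, hc, rfl⟩)
    have hstar := pmas_star A hA hy c.1 l c'.1 c.2 hne1.symm hl2
    have hd : A c.1 l ≤ A c.1 c.2 := dom1 c hc l hl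
    rcases le_total (A c.1 l) (A c'.1 l) with h3 | h3
    · rw [max_eq_right h3, max_eq_right hd] at hstar
      linarith
    · rw [max_eq_left h3, max_eq_right hd] at hstar
      linarith
  · -- uniqC
    intro k hk c hc c' hc' h1 h2
    by_contra hne
    have hne2 : c.2 ≠ c'.2 := fun h => hne (inj2 c hc c' hc' h)
    have hk2 : c.1 ≠ k := fun h => hk (h ▸ mem_Rows.2 ⟨c, hc, rfl⟩)
    have hstar := pmas_star A hA hy k c.2 c.1 c'.2 hk2 hne2.symm
    have hd : A k c.2 ≤ A c.1 c.2 := dom2 c hc k hk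
    rcases le_total (A k c.2) (A k c'.2) with h3 | h3
    · rw [max_eq_right hd, max_eq_right h3] at hstar
      linarith
    · rw [max_eq_right hd, max_eq_left h3] at hstar
      linarith

end Construction

section Phi

variable (Γ : Finset (I × J))

noncomputable def rowMax (S : Finset (I ⊕ J)) (p : I) : ℝ :=
  (insert (0:ℝ) ((Finset.univ.filter (fun l : J => l ∉ Cols Γ ∧ Sum.inr l ∈ S)).image
    (fun l => A p l))).max' (Finset.insert_nonempty _ _)

noncomputable def colMax (S : Finset (I ⊕ J)) (q : J) : ℝ :=
  (insert (0:ℝ) ((Finset.univ.filter (fun k : I => k ∉ Rows Γ ∧ Sum.inl k ∈ S)).image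
    (fun k => A k q))).max' (Finset.insert_nonempty _ _)

lemma rowMax_nonneg (S : Finset (I ⊕ J)) (p : I) : 0 ≤ rowMax A Γ S p :=
  Finset.le_max' _ _ (Finset.mem_insert_self _ _)

lemma colMax_nonneg (S : Finset (I ⊕ J)) (q : J) : 0 ≤ colMax A Γ S q :=
  Finset.le_max' _ _ (Finset.mem_insert_self _ _)

lemma le_rowMax {S : Finset (I ⊕ J)} {p : I} {l : J} (h1 : l ∉ Cols Γ) (h2 : Sum.inr l ∈ S) :
    A p l ≤ rowMax A Γ S p := by
  apply Finset.le_max'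
  exact Finset.mem_insert_of_mem (Finset.mem_image.2 ⟨l, Finset.mem_filter.2
    ⟨Finset.mem_univ _, h1, h2⟩, rfl⟩)

lemma le_colMax {S : Finset (I ⊕ J)} {q : J} {k : I} (h1 : k ∉ Rows Γ) (h2 : Sum.inl k ∈ S) :
    A k q ≤ colMax A Γ S q := by
  apply Finset.le_max'
  exact Finset.mem_insert_of_mem (Finset.mem_image.2 ⟨k, Finset.mem_filter.2
    ⟨Finset.mem_univ _, h1, h2⟩, rfl⟩)

lemma rowMax_le {S : Finset (I ⊕ J)} {p : I} {b : ℝ} (h0 : 0 ≤ b)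
    (h : ∀ l, l ∉ Cols Γ → Sum.inr l ∈ S → A p l ≤ b) : rowMax A Γ S p ≤ b := by
  apply Finset.max'_le
  intro x hx
  rcases Finset.mem_insert.1 hx with rfl | hx
  · exact h0
  · obtain ⟨l, hl, rfl⟩ := Finset.mem_image.1 hx
    rcases Finset.mem_filter.1 hl with ⟨-, h1, h2⟩
    exact h l h1 h2

lemma colMax_le {S : Finset (I ⊕ J)} {q : J} {b : ℝ} (h0 : 0 ≤ b)
    (h : ∀ k, k ∉ Rows Γ → Sum.inl k ∈ S → A k q ≤ b) : colMax A Γ S q ≤ b := by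
  apply Finset.max'_le
  intro x hx
  rcases Finset.mem_insert.1 hx with rfl | hx
  · exact h0
  · obtain ⟨k, hk, rfl⟩ := Finset.mem_image.1 hx
    rcases Finset.mem_filter.1 hk with ⟨-, h1, h2⟩
    exact h k h1 h2

lemma rowMax_pos_exists {S : Finset (I ⊕ J)} {p : I} (h : 0 < rowMax A Γ S p) :
    ∃ l, l ∉ Cols Γ ∧ Sum.inr l ∈ S ∧ 0 < A p l ∧ A p l = rowMax A Γ S p := by
  have hmem := Finset.max'_mem
    (insert (0:ℝ) ((Finset.univ.filter (fun l : J => l ∉ Cols Γ ∧ Sum.inr l ∈ S)).image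
      (fun l => A p l))) (Finset.insert_nonempty _ _)
  rcases Finset.mem_insert.1 hmem with h0 | hmem
  · rw [← rowMax] at h0
    rw [h0] at h
    exact absurd h (lt_irrefl 0)
  · obtain ⟨l, hl, hval⟩ := Finset.mem_image.1 hmem
    rcases Finset.mem_filter.1 hl with ⟨-, h1, h2⟩
    rw [← rowMax] at hval
    exact ⟨l, h1, h2, by rw [hval]; exact h, hval⟩

lemma colMax_pos_exists {S : Finset (I ⊕ J)} {q : J} (h : 0 < colMax A Γ S q) :
    ∃ k, k ∉ Rows Γ ∧ Sum.inl k ∈ S ∧ 0 < A k q ∧ A k q = colMax A Γ S q := by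
  have hmem := Finset.max'_mem
    (insert (0:ℝ) ((Finset.univ.filter (fun k : I => k ∉ Rows Γ ∧ Sum.inl k ∈ S)).image
      (fun k => A k q))) (Finset.insert_nonempty _ _)
  rcases Finset.mem_insert.1 hmem with h0 | hmem
  · rw [← colMax] at h0
    rw [h0] at h
    exact absurd h (lt_irrefl 0)
  · obtain ⟨k, hk, hval⟩ := Finset.mem_image.1 hmem
    rcases Finset.mem_filter.1 hk with ⟨-, h1, h2⟩
    rw [← colMax] at hval
    exact ⟨k, h1, h2, by rw [hval]; exact h, hval⟩

lemma rowMax_mono {S T : Finset (I ⊕ J)} (hST : S ⊆ T) (p : I) :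
    rowMax A Γ S p ≤ rowMax A Γ T p := by
  apply rowMax_le A Γ (rowMax_nonneg A Γ T p)
  intro l h1 h2
  exact le_rowMax A Γ h1 (hST h2)

lemma colMax_mono {S T : Finset (I ⊕ J)} (hST : S ⊆ T) (q : J) :
    colMax A Γ S q ≤ colMax A Γ T q := by
  apply colMax_le A Γ (colMax_nonneg A Γ T q)
  intro k h1 h2
  exact le_colMax A Γ h1 (hST h2)

/-- utopia row value -/
noncomputable def Rv (p : I) : ℝ := rowMax A Γ Finset.univ p
/-- utopia column value -/
noncomputable def Cv (q : J) : ℝ := colMax A Γ Finset.univ q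

lemma Rv_def (p : I) : Rv A Γ p = rowMax A Γ Finset.univ p := rfl
lemma Cv_def (q : J) : Cv A Γ q = colMax A Γ Finset.univ q := rfl

lemma Rv_nonneg (p : I) : 0 ≤ Rv A Γ p := rowMax_nonneg A Γ _ p
lemma Cv_nonneg (q : J) : 0 ≤ Cv A Γ q := colMax_nonneg A Γ _ q

lemma rowMax_le_Rv (S : Finset (I ⊕ J)) (p : I) : rowMax A Γ S p ≤ Rv A Γ p :=
  rowMax_mono A Γ (Finset.subset_univ S) p

lemma colMax_le_Cv (S : Finset (I ⊕ J)) (q : J) : colMax A Γ S q ≤ Cv A Γ q :=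
  colMax_mono A Γ (Finset.subset_univ S) q

noncomputable def phi (S : Finset (I ⊕ J)) (c : I × J) : ℝ :=
  if Sum.inl c.1 ∈ S ∧ Sum.inr c.2 ∈ S then A c.1 c.2
  else if Sum.inl c.1 ∈ S then rowMax A Γ S c.1
  else if Sum.inr c.2 ∈ S then colMax A Γ S c.2
  else 0

lemma phi_both {S : Finset (I ⊕ J)} {c : I × J} (h1 : Sum.inl c.1 ∈ S) (h2 : Sum.inr c.2 ∈ S) :
    phi A Γ S c = A c.1 c.2 := by
  rw [phi, if_pos ⟨h1, h2⟩]

lemma phi_row {S : Finset (I ⊕ J)} {c : I × J} (h1 : Sum.inl c.1 ∈ S) (h2 : Sum.inr c.2 ∉ S) :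
    phi A Γ S c = rowMax A Γ S c.1 := by
  rw [phi, if_neg (fun h => h2 h.2), if_pos h1]

lemma phi_col {S : Finset (I ⊕ J)} {c : I × J} (h1 : Sum.inl c.1 ∉ S) (h2 : Sum.inr c.2 ∈ S) :
    phi A Γ S c = colMax A Γ S c.2 := by
  rw [phi, if_neg (fun h => h1 h.1), if_neg h1, if_pos h2]

lemma phi_none {S : Finset (I ⊕ J)} {c : I × J} (h1 : Sum.inl c.1 ∉ S) (h2 : Sum.inr c.2 ∉ S) :
    phi A Γ S c = 0 := by
  rw [phi, if_neg (fun h => h1 h.1), if_neg h1, if_neg h2]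

lemma phi_nonneg (hA : ∀ i j, 0 ≤ A i j) (S : Finset (I ⊕ J)) (c : I × J) :
    0 ≤ phi A Γ S c := by
  rw [phi]
  split_ifs
  · exact hA _ _
  · exact rowMax_nonneg A Γ S c.1
  · exact colMax_nonneg A Γ S c.2
  · exact le_refl 0

/-- local contribution of a corner to an explicit optimal matching of `S` -/
noncomputable def contrib (S : Finset (I ⊕ J)) (c : I × J) : Finset (I × J) :=
  if Sum.inl c.1 ∈ S ∧ Sum.inr c.2 ∈ S then {c}
  else if h : Sum.inl c.1 ∈ S ∧
      ∃ l, l ∉ Cols Γ ∧ Sum.inr l ∈ S ∧ 0 < A c.1 l ∧ A c.1 l = rowMax A Γ S c.1 then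
    {(c.1, h.2.choose)}
  else if h : Sum.inr c.2 ∈ S ∧
      ∃ k, k ∉ Rows Γ ∧ Sum.inl k ∈ S ∧ 0 < A k c.2 ∧ A k c.2 = colMax A Γ S c.2 then
    {(h.2.choose, c.2)}
  else ∅

lemma contrib_cases {S : Finset (I ⊕ J)} {c e : I × J} (he : e ∈ contrib A Γ S c) :
    (e = c ∧ Sum.inl c.1 ∈ S ∧ Sum.inr c.2 ∈ S) ∨
    (e.1 = c.1 ∧ e.2 ∉ Cols Γ ∧ Sum.inr e.2 ∈ S ∧ Sum.inl c.1 ∈ S ∧ Sum.inr c.2 ∉ S ∧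
      0 < A e.1 e.2) ∨
    (e.2 = c.2 ∧ e.1 ∉ Rows Γ ∧ Sum.inl e.1 ∈ S ∧ Sum.inr c.2 ∈ S ∧ Sum.inl c.1 ∉ S ∧
      0 < A e.1 e.2) := by
  rw [contrib] at he
  split_ifs at he with h1 h2 h3
  · left
    exact ⟨Finset.mem_singleton.1 he, h1⟩
  · right; left
    obtain ⟨ha, hb, hc, hd⟩ := h2.2.choose_spec
    rw [Finset.mem_singleton.1 he]
    exact ⟨rfl, ha, hb, h2.1, fun hmem => h1 ⟨h2.1, hmem⟩, hc⟩
  · right; right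
    obtain ⟨ha, hb, hc, hd⟩ := h3.2.choose_spec
    rw [Finset.mem_singleton.1 he]
    refine ⟨rfl, ha, hb, h3.1, ?_, hc⟩
    intro hmem
    by_cases hr : Sum.inr c.2 ∈ S
    · exact h1 ⟨hmem, hr⟩
    · exact hr h3.1
  · exact absurd he (Finset.notMem_empty e)

lemma contrib_card_le_one (S : Finset (I ⊕ J)) (c : I × J) :
    (contrib A Γ S c).card ≤ 1 := by
  rw [contrib]
  split_ifs <;> simp

lemma contrib_subsingleton {S : Finset (I ⊕ J)} {c : I × J} {e e' : I × J}
    (he : e ∈ contrib A Γ S c) (he' : e' ∈ contrib A Γ S c) : e = e' :=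
  Finset.card_le_one.1 (contrib_card_le_one A Γ S c) e he e' he'

lemma contrib_sum {S : Finset (I ⊕ J)} (c : I × J) :
    ∑ e ∈ contrib A Γ S c, A e.1 e.2 = phi A Γ S c := by
  rw [contrib]
  split_ifs with h1 h2 h3
  · rw [Finset.sum_singleton, phi_both A Γ h1.1 h1.2]
  · obtain ⟨ha, hb, hc, hd⟩ := h2.2.choose_spec
    rw [Finset.sum_singleton]
    have hnr : Sum.inr c.2 ∉ S := fun hmem => h1 ⟨h2.1, hmem⟩
    rw [phi_row A Γ h2.1 hnr]
    exact hd
  · obtain ⟨ha, hb, hc, hd⟩ := h3.2.choose_spec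
    rw [Finset.sum_singleton]
    have hnl : Sum.inl c.1 ∉ S := by
      intro hmem
      by_cases hr : Sum.inr c.2 ∈ S
      · exact h1 ⟨hmem, hr⟩
      · exact hr h3.1
    rw [phi_col A Γ hnl h3.1]
    exact hd
  · rw [Finset.sum_empty]
    by_cases hl : Sum.inl c.1 ∈ S
    · by_cases hr : Sum.inr c.2 ∈ S
      · exact absurd ⟨hl, hr⟩ h1
      · rw [phi_row A Γ hl hr]
        rcases eq_or_lt_of_le (rowMax_nonneg A Γ S c.1) with h | h
        · exact h
        · obtain ⟨l, ha, hb, hc, hd⟩ := rowMax_pos_exists A Γ h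
          exact absurd ⟨hl, l, ha, hb, hc, hd⟩ h2
    · by_cases hr : Sum.inr c.2 ∈ S
      · rw [phi_col A Γ hl hr]
        rcases eq_or_lt_of_le (colMax_nonneg A Γ S c.2) with h | h
        · exact h
        · obtain ⟨k, ha, hb, hc, hd⟩ := colMax_pos_exists A Γ h
          exact absurd ⟨hr, k, ha, hb, hc, hd⟩ h3
      · rw [phi_none A Γ hl hr]

end Phi

section WFormula

variable {Γ : Finset (I × J)}

theorem sum_phi_le_assignGame (hA : ∀ i j, 0 ≤ A i j) (hG : Good A Γ) (S : Finset (I ⊕ J)) :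
    ∑ c ∈ Γ, phi A Γ S c ≤ assignGame A S := by
  -- two-case views of contrib membership
  have htwoR : ∀ {c e : I × J}, e ∈ contrib A Γ S c →
      e.1 = c.1 ∨ (e.2 = c.2 ∧ e.1 ∉ Rows Γ ∧ 0 < A e.1 e.2) := by
    intro c e he
    rcases contrib_cases A Γ he with h | h | h
    · left; rw [h.1]
    · left; exact h.1
    · right; exact ⟨h.1, h.2.1, h.2.2.2.2.2⟩
  have htwoC : ∀ {c e : I × J}, e ∈ contrib A Γ S c →
      e.2 = c.2 ∨ (e.1 = c.1 ∧ e.2 ∉ Cols Γ ∧ 0 < A e.1 e.2) := by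
    intro c e he
    rcases contrib_cases A Γ he with h | h | h
    · left; rw [h.1]
    · right; exact ⟨h.1, h.2.1, h.2.2.2.2.2⟩
    · left; exact h.1
  have howner : ∀ c ∈ Γ, ∀ c' ∈ Γ, ∀ e e' : I × J, e ∈ contrib A Γ S c →
      e' ∈ contrib A Γ S c' → e.1 = e'.1 → c = c' := by
    intro c hc c' hc' e e' he he' h11
    rcases htwoR he with h | h <;> rcases htwoR he' with h' | h'
    · exact hG.inj1 c hc c' hc' (by rw [← h, h11, h'])
    · exfalso
      apply h'.2.1
      rw [← h11, h]
      exact mem_Rows.2 ⟨c, hc, rfl⟩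
    · exfalso
      apply h.2.1
      rw [h11, h']
      exact mem_Rows.2 ⟨c', hc', rfl⟩
    · refine hG.uniqC e.1 h.2.1 c hc c' hc' ?_ ?_
      · rw [← h.1]; exact h.2.2
      · rw [← h'.1, h11]; exact h'.2.2
  have hownerC : ∀ c ∈ Γ, ∀ c' ∈ Γ, ∀ e e' : I × J, e ∈ contrib A Γ S c →
      e' ∈ contrib A Γ S c' → e.2 = e'.2 → c = c' := by
    intro c hc c' hc' e e' he he' h22
    rcases htwoC he with h | h <;> rcases htwoC he' with h' | h'
    · exact hG.inj2 c hc c' hc' (by rw [← h, h22, h'])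
    · exfalso
      apply h'.2.1
      rw [← h22, h]
      exact mem_Cols.2 ⟨c, hc, rfl⟩
    · exfalso
      apply h.2.1
      rw [h22, h']
      exact mem_Cols.2 ⟨c', hc', rfl⟩
    · refine hG.uniqR e.2 h.2.1 c hc c' hc' ?_ ?_
      · rw [← h.1]; exact h.2.2
      · rw [← h'.1, h22]; exact h'.2.2
  set ν := Γ.biUnion (contrib A Γ S) with hν
  have hmem_ν : ∀ e ∈ ν, ∃ c ∈ Γ, e ∈ contrib A Γ S c := by
    intro e he
    obtain ⟨c, hc, hec⟩ := Finset.mem_biUnion.1 he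
    exact ⟨c, hc, hec⟩
  have hνm : IsMatching S ν := by
    refine ⟨?_, ?_, ?_⟩
    · intro e he
      obtain ⟨c, hc, hec⟩ := hmem_ν e he
      rcases contrib_cases A Γ hec with h | h | h
      · rw [h.1]; exact ⟨h.2.1, h.2.2⟩
      · exact ⟨by rw [h.1]; exact h.2.2.2.1, h.2.2.1⟩
      · exact ⟨h.2.2.1, by rw [h.1]; exact h.2.2.2.1⟩
    · intro e he e' he' h11
      obtain ⟨c, hc, hec⟩ := hmem_ν e he
      obtain ⟨c', hc', hec'⟩ := hmem_ν e' he'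
      have := howner c hc c' hc' e e' hec hec' h11
      rw [this] at hec
      exact contrib_subsingleton A Γ hec hec'
    · intro e he e' he' h22
      obtain ⟨c, hc, hec⟩ := hmem_ν e he
      obtain ⟨c', hc', hec'⟩ := hmem_ν e' he'
      have := hownerC c hc c' hc' e e' hec hec' h22
      rw [this] at hec
      exact contrib_subsingleton A Γ hec hec'
  have hdisj : Set.PairwiseDisjoint (↑Γ : Set (I × J)) (contrib A Γ S) := by
    intro c hc c' hc' hne
    simp only [Function.onFun]
    rw [Finset.disjoint_left]
    intro e he he'
    exact hne (howner c hc c' hc' e e he he' rfl)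
  have hsum : ∑ c ∈ Γ, phi A Γ S c = msum A ν := by
    rw [hν, msum, Finset.sum_biUnion hdisj]
    exact Finset.sum_congr rfl (fun c _ => (contrib_sum A Γ c).symm)
  rw [hsum]
  exact sum_le_assignGame A hνm

theorem assignGame_le_sum_phi (hA : ∀ i j, 0 ≤ A i j) (hG : Good A Γ) (S : Finset (I ⊕ J)) :
    assignGame A S ≤ ∑ c ∈ Γ, phi A Γ S c := by
  obtain ⟨μ0, hμ0, hval⟩ := exists_assignGame_eq A S
  rw [hval]
  set μp := μ0.filter (fun e => 0 < A e.1 e.2) with hμp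
  have hμpm : IsMatching S μp := isMatching_subset (Finset.filter_subset _ _) hμ0
  have hμp_pos : ∀ e ∈ μp, 0 < A e.1 e.2 := fun e he => (Finset.mem_filter.1 he).2
  have hsum0 : msum A μ0 = ∑ e ∈ μp, A e.1 e.2 := by
    rw [msum, ← Finset.sum_filter_add_sum_filter_not μ0 (fun e => 0 < A e.1 e.2)]
    have hz : ∑ e ∈ μ0.filter (fun e => ¬ 0 < A e.1 e.2), A e.1 e.2 = 0 :=
      Finset.sum_eq_zero (fun e he =>
        le_antisymm (not_lt.1 (Finset.mem_filter.1 he).2) (hA e.1 e.2))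
    rw [hz, add_zero]
  set cl : I × J → I × J := fun e =>
    if h : ∃ q, (e.1, q) ∈ Γ then (e.1, h.choose)
    else if h' : ∃ p, (p, e.2) ∈ Γ then (h'.choose, e.2) else e with hcl
  -- classification of fiber elements
  have hclass : ∀ e ∈ μp, cl e ∈ Γ ∧
      ((e.1 = (cl e).1 ∧ (e.2 = (cl e).2 ∨ (e.2 ∉ Cols Γ ∧ e.2 ≠ (cl e).2))) ∨
        (e.1 ∉ Rows Γ ∧ e.2 = (cl e).2 ∧ e.1 ≠ (cl e).1)) := by
    intro e he
    have hpos := hμp_pos e he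
    by_cases h : ∃ q, (e.1, q) ∈ Γ
    · have hcle : cl e = (e.1, h.choose) := dif_pos h
      have hchoose := h.choose_spec
      rcases hG.tri e.1 e.2 hpos with htri | htri | htri
      · -- e is itself a corner
        have : (e.1, e.2) = (e.1, h.choose) := hG.inj1 _ htri _ hchoose rfl
        refine ⟨by rw [hcle, ← this, Prod.mk.eta]; exact htri, Or.inl ⟨by rw [hcle], Or.inl ?_⟩⟩
        rw [hcle]
        exact congrArg Prod.snd this
      · refine ⟨by rw [hcle]; exact hchoose, Or.inl ⟨by rw [hcle], Or.inr ⟨htri.2, ?_⟩⟩⟩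
        rw [hcle]
        intro heq
        apply htri.2
        rw [heq]
        exact mem_Cols.2 ⟨_, hchoose, rfl⟩
      · exact absurd (mem_Rows.2 ⟨_, hchoose, rfl⟩) htri.1
    · have hnr : e.1 ∉ Rows Γ := fun hmem => h (mem_Rows' hmem)
      rcases hG.tri e.1 e.2 hpos with htri | htri | htri
      · exact absurd (mem_Rows.2 ⟨_, htri, rfl⟩) hnr
      · exact absurd htri.1 hnr
      · obtain ⟨hp⟩ : Nonempty (∃ p, (p, e.2) ∈ Γ) := ⟨mem_Cols' htri.2⟩
        have hcle : cl e = (hp.choose, e.2) := by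
          rw [hcl]
          simp only
          rw [dif_neg h, dif_pos hp]
        have hchoose := hp.choose_spec
        refine ⟨by rw [hcle]; exact hchoose, Or.inr ⟨hnr, by rw [hcle], ?_⟩⟩
        rw [hcle]
        intro heq
        apply hnr
        rw [heq]
        exact mem_Rows.2 ⟨_, hchoose, rfl⟩
  have hmaps : ∀ e ∈ μp, cl e ∈ Γ := fun e he => (hclass e he).1
  rw [hsum0, ← Finset.sum_fiberwise_of_maps_to hmaps (fun e => A e.1 e.2)]
  apply Finset.sum_le_sum
  intro c hc
  set fib := μp.filter (fun e => cl e = c) with hfib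
  have hfib_mem : ∀ e ∈ fib, e ∈ μp ∧ cl e = c := fun e he => Finset.mem_filter.1 he
  have hfibclass : ∀ e ∈ fib,
      (e.1 = c.1 ∧ (e.2 = c.2 ∨ (e.2 ∉ Cols Γ ∧ e.2 ≠ c.2))) ∨
        (e.1 ∉ Rows Γ ∧ e.2 = c.2 ∧ e.1 ≠ c.1) := by
    intro e he
    obtain ⟨he1, he2⟩ := hfib_mem e he
    have := (hclass e he1).2
    rw [he2] at this
    exact this
  set fibR := fib.filter (fun e => e.1 = c.1) with hfibR
  set fibC := fib.filter (fun e => ¬ e.1 = c.1) with hfibC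
  have hsplit : ∑ e ∈ fib, A e.1 e.2 = ∑ e ∈ fibR, A e.1 e.2 + ∑ e ∈ fibC, A e.1 e.2 :=
    (Finset.sum_filter_add_sum_filter_not fib _ _).symm
  have hfibR_sub : ∀ e ∈ fibR, e ∈ fib ∧ e.1 = c.1 := fun e he => Finset.mem_filter.1 he
  have hfibC_sub : ∀ e ∈ fibC, e ∈ fib ∧ e.1 ≠ c.1 := fun e he => Finset.mem_filter.1 he
  have hfib_μp : ∀ e ∈ fib, e ∈ μp := fun e he => (hfib_mem e he).1
  have hRsingle : ∀ e ∈ fibR, ∀ e' ∈ fibR, e = e' := by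
    intro e he e' he'
    exact hμpm.2.1 e (hfib_μp e (hfibR_sub e he).1) e' (hfib_μp e' (hfibR_sub e' he').1)
      (by rw [(hfibR_sub e he).2, (hfibR_sub e' he').2])
  have hCsingle : ∀ e ∈ fibC, ∀ e' ∈ fibC, e = e' := by
    intro e he e' he'
    have h1 := hfibclass e (hfibC_sub e he).1
    have h2 := hfibclass e' (hfibC_sub e' he').1
    rcases h1 with h1 | h1
    · exact absurd h1.1 (hfibC_sub e he).2
    rcases h2 with h2 | h2
    · exact absurd h2.1 (hfibC_sub e' he').2
    exact hμpm.2.2 e (hfib_μp e (hfibC_sub e he).1) e' (hfib_μp e' (hfibC_sub e' he').1)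
      (by rw [h1.2.1, h2.2.1])
  rw [hsplit]
  have hc1C : c.2 ∈ Cols Γ := mem_Cols.2 ⟨c, hc, rfl⟩
  rcases Finset.eq_empty_or_nonempty fibR with hR0 | ⟨eR, heR⟩ <;>
    rcases Finset.eq_empty_or_nonempty fibC with hC0 | ⟨eC, heC⟩
  · rw [hR0, hC0]
    simpa using phi_nonneg A Γ hA S c
  · -- only a column pair
    have hCeq : fibC = {eC} := Finset.eq_singleton_iff_unique_mem.2 ⟨heC, fun e he =>
      hCsingle e he eC heC⟩
    rw [hR0, hCeq]
    rw [Finset.sum_singleton, Finset.sum_empty, zero_add]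
    have hcls := hfibclass eC (hfibC_sub eC heC).1
    rcases hcls with h | h
    · exact absurd h.1 (hfibC_sub eC heC).2
    have heCS := hμpm.1 eC (hfib_μp eC (hfibC_sub eC heC).1)
    have hinrc2 : Sum.inr c.2 ∈ S := by rw [← h.2.1]; exact heCS.2
    by_cases hl : Sum.inl c.1 ∈ S
    · rw [phi_both A Γ hl hinrc2, h.2.1]
      exact hG.dom2 c hc eC.1 h.1
    · rw [phi_col A Γ hl hinrc2, h.2.1]
      exact le_colMax A Γ h.1 heCS.1
  · -- only a row pair
    have hReq : fibR = {eR} := Finset.eq_singleton_iff_unique_mem.2 ⟨heR, fun e he =>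
      hRsingle e he eR heR⟩
    rw [hC0, hReq]
    rw [Finset.sum_singleton, Finset.sum_empty, add_zero]
    have hcls := hfibclass eR (hfibR_sub eR heR).1
    have heRS := hμpm.1 eR (hfib_μp eR (hfibR_sub eR heR).1)
    have hinlc1 : Sum.inl c.1 ∈ S := by rw [← (hfibR_sub eR heR).2]; exact heRS.1
    rcases hcls with h | h
    · rcases h.2 with h2 | h2
      · -- eR = c
        have : eR = c := Prod.ext h.1 h2
        rw [this] at heRS
        rw [phi_both A Γ heRS.1 heRS.2, this]
      · by_cases hr : Sum.inr c.2 ∈ S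
        · rw [phi_both A Γ hinlc1 hr, h.1]
          exact hG.dom1 c hc eR.2 h2.1
        · rw [phi_row A Γ hinlc1 hr, h.1]
          exact le_rowMax A Γ h2.1 heRS.2
    · exact absurd h.2.2 (fun hne => hne (hfibR_sub eR heR).2)
  · -- both a row pair and a column pair
    have hReq : fibR = {eR} := Finset.eq_singleton_iff_unique_mem.2 ⟨heR, fun e he =>
      hRsingle e he eR heR⟩
    have hCeq : fibC = {eC} := Finset.eq_singleton_iff_unique_mem.2 ⟨heC, fun e he =>
      hCsingle e he eC heC⟩
    rw [hReq, hCeq, Finset.sum_singleton, Finset.sum_singleton]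
    have hclsR := hfibclass eR (hfibR_sub eR heR).1
    have hclsC := hfibclass eC (hfibC_sub eC heC).1
    rcases hclsC with hC | hC
    · exact absurd hC.1 (hfibC_sub eC heC).2
    rcases hclsR with hR | hR
    · have heRS := hμpm.1 eR (hfib_μp eR (hfibR_sub eR heR).1)
      have heCS := hμpm.1 eC (hfib_μp eC (hfibC_sub eC heC).1)
      have hinlc1 : Sum.inl c.1 ∈ S := by rw [← hR.1]; exact heRS.1
      have hinrc2 : Sum.inr c.2 ∈ S := by rw [← hC.2.1]; exact heCS.2
      rcases hR.2 with h2 | h2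
      · -- eR.2 = c.2 would force eR = eC
        exfalso
        have : eR = eC := hμpm.2.2 eR (hfib_μp eR (hfibR_sub eR heR).1)
          eC (hfib_μp eC (hfibC_sub eC heC).1) (by rw [h2, hC.2.1])
        rw [this] at hR
        exact (hfibC_sub eC heC).2 hR.1
      · rw [phi_both A Γ hinlc1 hinrc2, hR.1, hC.2.1]
        exact hG.dom c hc eC.1 hC.1 eR.2 h2.1
    · exact absurd hR.2.2 (fun hne => hne (hfibR_sub eR heR).2)

theorem assignGame_eq_sum_phi (hA : ∀ i j, 0 ≤ A i j) (hG : Good A Γ) (S : Finset (I ⊕ J)) :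
    assignGame A S = ∑ c ∈ Γ, phi A Γ S c :=
  le_antisymm (assignGame_le_sum_phi A hA hG S) (sum_phi_le_assignGame A hA hG S)

end WFormula

section Vectors

variable {Γ : Finset (I × J)}

lemma corner_rows_ne {c c' : I × J} (hG : Good A Γ) (hc : c ∈ Γ) (hc' : c' ∈ Γ)
    (hne : c ≠ c') : c.1 ≠ c'.1 :=
  fun h => hne (hG.inj1 c hc c' hc' h)

lemma corner_cols_ne {c c' : I × J} (hG : Good A Γ) (hc : c ∈ Γ) (hc' : c' ∈ Γ)
    (hne : c ≠ c') : c.2 ≠ c'.2 :=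
  fun h => hne (hG.inj2 c hc c' hc' h)

lemma Rv_le (hA : ∀ i j, 0 ≤ A i j) (hG : Good A Γ) {c : I × J} (hc : c ∈ Γ) :
    Rv A Γ c.1 ≤ A c.1 c.2 :=
  rowMax_le A Γ (hA _ _) (fun l hl _ => hG.dom1 c hc l hl)

lemma Cv_le (hA : ∀ i j, 0 ≤ A i j) (hG : Good A Γ) {c : I × J} (hc : c ∈ Γ) :
    Cv A Γ c.2 ≤ A c.1 c.2 :=
  colMax_le A Γ (hA _ _) (fun k hk _ => hG.dom2 c hc k hk)

lemma RvCv_le (hA : ∀ i j, 0 ≤ A i j) (hG : Good A Γ) {c : I × J} (hc : c ∈ Γ) :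
    Rv A Γ c.1 + Cv A Γ c.2 ≤ A c.1 c.2 := by
  rcases eq_or_lt_of_le (Rv_nonneg A Γ c.1) with h1 | h1
  · rw [← h1, zero_add]
    exact Cv_le A hA hG hc
  · rcases eq_or_lt_of_le (Cv_nonneg A Γ c.2) with h2 | h2
    · rw [← h2, add_zero]
      exact Rv_le A hA hG hc
    · obtain ⟨l, hl1, -, -, hl4⟩ := rowMax_pos_exists A Γ h1
      obtain ⟨k, hk1, -, -, hk4⟩ := colMax_pos_exists A Γ h2
      rw [Rv_def, Cv_def, ← hl4, ← hk4]
      exact hG.dom c hc k hk1 l hl1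

lemma phi_univ (c : I × J) : phi A Γ Finset.univ c = A c.1 c.2 :=
  phi_both A Γ (Finset.mem_univ _) (Finset.mem_univ _)

lemma w_univ (hA : ∀ i j, 0 ≤ A i j) (hG : Good A Γ) :
    assignGame A Finset.univ = ∑ c ∈ Γ, A c.1 c.2 := by
  rw [assignGame_eq_sum_phi A hA hG]
  exact Finset.sum_congr rfl (fun c _ => phi_univ A c)

lemma colMax_erase_row (hG : Good A Γ) {p : I} (hp : p ∈ Rows Γ) (q : J) :
    colMax A Γ (Finset.univ.erase (Sum.inl p)) q = Cv A Γ q := by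
  apply le_antisymm (colMax_mono A Γ (Finset.erase_subset _ _) q)
  apply colMax_le A Γ (colMax_nonneg A Γ _ q)
  intro k hk _
  apply le_colMax A Γ hk
  apply Finset.mem_erase.2
  refine ⟨?_, Finset.mem_univ _⟩
  intro h
  rw [Sum.inl.injEq] at h
  exact hk (h ▸ hp)

lemma rowMax_erase_col (hG : Good A Γ) {q : J} (hq : q ∈ Cols Γ) (p : I) :
    rowMax A Γ (Finset.univ.erase (Sum.inr q)) p = Rv A Γ p := by
  apply le_antisymm (rowMax_mono A Γ (Finset.erase_subset _ _) p)
  apply rowMax_le A Γ (rowMax_nonneg A Γ _ p)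
  intro l hl _
  apply le_rowMax A Γ hl
  apply Finset.mem_erase.2
  refine ⟨?_, Finset.mem_univ _⟩
  intro h
  rw [Sum.inr.injEq] at h
  exact hl (h ▸ hq)

lemma upper_corner_row (hA : ∀ i j, 0 ≤ A i j) (hG : Good A Γ) {c : I × J} (hc : c ∈ Γ) :
    upperVec (assignGame A) (Sum.inl c.1) = A c.1 c.2 - Cv A Γ c.2 := by
  rw [upperVec, w_univ A hA hG, assignGame_eq_sum_phi A hA hG]
  have hW : ∑ c' ∈ Γ, phi A Γ (Finset.univ.erase (Sum.inl c.1)) c'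
      = ∑ c' ∈ Γ.erase c, A c'.1 c'.2 + Cv A Γ c.2 := by
    rw [← Finset.add_sum_erase _ _ hc]
    have h1 : phi A Γ (Finset.univ.erase (Sum.inl c.1)) c = Cv A Γ c.2 := by
      rw [phi_col A Γ (Finset.notMem_erase _ _)
        (Finset.mem_erase.2 ⟨by simp, Finset.mem_univ _⟩)]
      exact colMax_erase_row A hG (mem_Rows.2 ⟨c, hc, rfl⟩) c.2
    rw [h1, add_comm]
    congr 1
    apply Finset.sum_congr rfl
    intro c' hc'
    have hne : c' ≠ c := Finset.ne_of_mem_erase hc'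
    have hc'Γ := Finset.mem_of_mem_erase hc'
    apply phi_both A Γ
    · apply Finset.mem_erase.2
      refine ⟨?_, Finset.mem_univ _⟩
      rw [Ne, Sum.inl.injEq]
      exact corner_rows_ne A hG hc'Γ hc hne
    · exact Finset.mem_erase.2 ⟨by simp, Finset.mem_univ _⟩
  rw [hW, ← Finset.add_sum_erase _ _ hc]
  ring

lemma upper_corner_col (hA : ∀ i j, 0 ≤ A i j) (hG : Good A Γ) {c : I × J} (hc : c ∈ Γ) :
    upperVec (assignGame A) (Sum.inr c.2) = A c.1 c.2 - Rv A Γ c.1 := by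
  rw [upperVec, w_univ A hA hG, assignGame_eq_sum_phi A hA hG]
  have hW : ∑ c' ∈ Γ, phi A Γ (Finset.univ.erase (Sum.inr c.2)) c'
      = ∑ c' ∈ Γ.erase c, A c'.1 c'.2 + Rv A Γ c.1 := by
    rw [← Finset.add_sum_erase _ _ hc]
    have h1 : phi A Γ (Finset.univ.erase (Sum.inr c.2)) c = Rv A Γ c.1 := by
      rw [phi_row A Γ (Finset.mem_erase.2 ⟨by simp, Finset.mem_univ _⟩)
        (Finset.notMem_erase _ _)]
      exact rowMax_erase_col A hG (mem_Cols.2 ⟨c, hc, rfl⟩) c.1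
    rw [h1, add_comm]
    congr 1
    apply Finset.sum_congr rfl
    intro c' hc'
    have hne : c' ≠ c := Finset.ne_of_mem_erase hc'
    have hc'Γ := Finset.mem_of_mem_erase hc'
    apply phi_both A Γ
    · exact Finset.mem_erase.2 ⟨by simp, Finset.mem_univ _⟩
    · apply Finset.mem_erase.2
      refine ⟨?_, Finset.mem_univ _⟩
      rw [Ne, Sum.inr.injEq]
      exact corner_cols_ne A hG hc'Γ hc hne
  rw [hW, ← Finset.add_sum_erase _ _ hc]
  ring

lemma upper_nonrow (hA : ∀ i j, 0 ≤ A i j) (hG : Good A Γ) {k : I} (hk : k ∉ Rows Γ) :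
    upperVec (assignGame A) (Sum.inl k) = 0 := by
  rw [upperVec, w_univ A hA hG, assignGame_eq_sum_phi A hA hG]
  have : ∑ c ∈ Γ, phi A Γ (Finset.univ.erase (Sum.inl k)) c = ∑ c ∈ Γ, A c.1 c.2 := by
    apply Finset.sum_congr rfl
    intro c hc
    apply phi_both A Γ
    · apply Finset.mem_erase.2
      refine ⟨?_, Finset.mem_univ _⟩
      rw [Ne, Sum.inl.injEq]
      intro h
      exact hk (h ▸ mem_Rows.2 ⟨c, hc, rfl⟩)
    · exact Finset.mem_erase.2 ⟨by simp, Finset.mem_univ _⟩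
  rw [this]
  ring

lemma upper_noncol (hA : ∀ i j, 0 ≤ A i j) (hG : Good A Γ) {l : J} (hl : l ∉ Cols Γ) :
    upperVec (assignGame A) (Sum.inr l) = 0 := by
  rw [upperVec, w_univ A hA hG, assignGame_eq_sum_phi A hA hG]
  have : ∑ c ∈ Γ, phi A Γ (Finset.univ.erase (Sum.inr l)) c = ∑ c ∈ Γ, A c.1 c.2 := by
    apply Finset.sum_congr rfl
    intro c hc
    apply phi_both A Γ
    · exact Finset.mem_erase.2 ⟨by simp, Finset.mem_univ _⟩
    · apply Finset.mem_erase.2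
      refine ⟨?_, Finset.mem_univ _⟩
      rw [Ne, Sum.inr.injEq]
      intro h
      exact hl (h ▸ mem_Cols.2 ⟨c, hc, rfl⟩)
  rw [this]
  ring

/-- decomposition of a sum of a function supported on corner players -/
lemma sum_corner_decomp (hG : Good A Γ) (f : I ⊕ J → ℝ)
    (h1 : ∀ k, k ∉ Rows Γ → f (Sum.inl k) = 0) (h2 : ∀ l, l ∉ Cols Γ → f (Sum.inr l) = 0)
    (T : Finset (I ⊕ J)) :
    ∑ x ∈ T, f x = ∑ c ∈ Γ, ((if Sum.inl c.1 ∈ T then f (Sum.inl c.1) else 0) +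
      (if Sum.inr c.2 ∈ T then f (Sum.inr c.2) else 0)) := by
  have hstep1 : ∑ x ∈ T, f x = ∑ x : I ⊕ J, (if x ∈ T then f x else 0) := by
    rw [Finset.sum_ite_mem, Finset.univ_inter]
  rw [hstep1, Fintype.sum_sum_type]
  have hrows : ∑ k : I, (if Sum.inl k ∈ T then f (Sum.inl k) else 0)
      = ∑ c ∈ Γ, (if Sum.inl c.1 ∈ T then f (Sum.inl c.1) else 0) := by
    have hr1 : ∑ k ∈ Rows Γ, (if Sum.inl k ∈ T then f (Sum.inl k) else 0)
        = ∑ c ∈ Γ, (if Sum.inl c.1 ∈ T then f (Sum.inl c.1) else 0) :=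
      Finset.sum_image (fun x hx y hy h => hG.inj1 x hx y hy h)
    rw [← hr1]
    apply (Finset.sum_subset (Finset.subset_univ _) _).symm
    intro k _ hk
    rw [h1 k hk]
    simp
  have hcols : ∑ l : J, (if Sum.inr l ∈ T then f (Sum.inr l) else 0)
      = ∑ c ∈ Γ, (if Sum.inr c.2 ∈ T then f (Sum.inr c.2) else 0) := by
    have hc1 : ∑ l ∈ Cols Γ, (if Sum.inr l ∈ T then f (Sum.inr l) else 0)
        = ∑ c ∈ Γ, (if Sum.inr c.2 ∈ T then f (Sum.inr c.2) else 0) :=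
      Finset.sum_image (fun x hx y hy h => hG.inj2 x hx y hy h)
    rw [← hc1]
    apply (Finset.sum_subset (Finset.subset_univ _) _).symm
    intro l _ hl
    rw [h2 l hl]
    simp
  rw [hrows, hcols, ← Finset.sum_add_distrib]

/-- sum of the utopia vector over a coalition -/
lemma sum_upper (hA : ∀ i j, 0 ≤ A i j) (hG : Good A Γ) (T : Finset (I ⊕ J)) :
    ∑ x ∈ T, upperVec (assignGame A) x =
      ∑ c ∈ Γ, ((if Sum.inl c.1 ∈ T then A c.1 c.2 - Cv A Γ c.2 else 0) +
        (if Sum.inr c.2 ∈ T then A c.1 c.2 - Rv A Γ c.1 else 0)) := by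
  rw [sum_corner_decomp A hG (upperVec (assignGame A))
    (fun k hk => upper_nonrow A hA hG hk) (fun l hl => upper_noncol A hA hG hl) T]
  apply Finset.sum_congr rfl
  intro c hc
  rw [upper_corner_row A hA hG hc, upper_corner_col A hA hG hc]

end Vectors

section Lower

variable {Γ : Finset (I × J)}

lemma phi_le_corterm (hA : ∀ i j, 0 ≤ A i j) (hG : Good A Γ) {S : Finset (I ⊕ J)}
    {c : I × J} (hc : c ∈ Γ) :
    phi A Γ S c ≤ (if Sum.inl c.1 ∈ S then A c.1 c.2 - Cv A Γ c.2 else 0) +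
      (if Sum.inr c.2 ∈ S then A c.1 c.2 - Rv A Γ c.1 else 0) := by
  have hRC := RvCv_le A hA hG hc
  by_cases h1 : Sum.inl c.1 ∈ S <;> by_cases h2 : Sum.inr c.2 ∈ S
  · rw [phi_both A Γ h1 h2, if_pos h1, if_pos h2]
    linarith
  · rw [phi_row A Γ h1 h2, if_pos h1, if_neg h2]
    have := rowMax_le_Rv A Γ S c.1
    linarith
  · rw [phi_col A Γ h1 h2, if_neg h1, if_pos h2]
    have := colMax_le_Cv A Γ S c.2
    linarith
  · rw [phi_none A Γ h1 h2, if_neg h1, if_neg h2]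
    simp

/-- generic upper bound for the lower-vector candidates at a corner row -/
lemma lower_bound_row (hA : ∀ i j, 0 ≤ A i j) (hG : Good A Γ) {c : I × J} (hc : c ∈ Γ)
    {S : Finset (I ⊕ J)} (hS : Sum.inl c.1 ∈ S) :
    assignGame A S - ∑ x ∈ S.erase (Sum.inl c.1), upperVec (assignGame A) x ≤ Rv A Γ c.1 := by
  rw [assignGame_eq_sum_phi A hA hG, sum_upper A hA hG]
  rw [sub_le_iff_le_add, ← Finset.add_sum_erase _ _ hc, ← Finset.add_sum_erase _ _ hc]
  have hown : phi A Γ S c ≤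
      ((if Sum.inl c.1 ∈ S.erase (Sum.inl c.1) then A c.1 c.2 - Cv A Γ c.2 else 0) +
        (if Sum.inr c.2 ∈ S.erase (Sum.inl c.1) then A c.1 c.2 - Rv A Γ c.1 else 0))
        + Rv A Γ c.1 := by
    rw [if_neg (Finset.notMem_erase _ _)]
    have hiff : (Sum.inr c.2 ∈ S.erase (Sum.inl c.1)) = (Sum.inr c.2 ∈ S) := by
      apply propext
      exact ⟨fun h => Finset.mem_of_mem_erase h, fun h => Finset.mem_erase.2 ⟨by simp, h⟩⟩
    simp only [hiff]
    by_cases h2 : Sum.inr c.2 ∈ S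
    · rw [phi_both A Γ hS h2, if_pos h2]
      ring_nf
      simp
    · rw [phi_row A Γ hS h2, if_neg h2]
      have := rowMax_le_Rv A Γ S c.1
      linarith
  have hrest : ∑ c' ∈ Γ.erase c, phi A Γ S c' ≤
      ∑ c' ∈ Γ.erase c, ((if Sum.inl c'.1 ∈ S.erase (Sum.inl c.1) then A c'.1 c'.2 - Cv A Γ c'.2
        else 0) + (if Sum.inr c'.2 ∈ S.erase (Sum.inl c.1) then A c'.1 c'.2 - Rv A Γ c'.1
        else 0)) := by
    apply Finset.sum_le_sum
    intro c' hc'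
    have hne : c' ≠ c := Finset.ne_of_mem_erase hc'
    have hc'Γ := Finset.mem_of_mem_erase hc'
    have hiff1 : (Sum.inl c'.1 ∈ S.erase (Sum.inl c.1)) = (Sum.inl c'.1 ∈ S) := by
      apply propext
      refine ⟨fun h => Finset.mem_of_mem_erase h, fun h => Finset.mem_erase.2 ⟨?_, h⟩⟩
      rw [Ne, Sum.inl.injEq]
      exact corner_rows_ne A hG hc'Γ hc hne
    have hiff2 : (Sum.inr c'.2 ∈ S.erase (Sum.inl c.1)) = (Sum.inr c'.2 ∈ S) := by
      apply propext
      exact ⟨fun h => Finset.mem_of_mem_erase h, fun h => Finset.mem_erase.2 ⟨by simp, h⟩⟩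
    simp only [hiff1, hiff2]
    exact phi_le_corterm A hA hG hc'Γ
  linarith

lemma lower_bound_col (hA : ∀ i j, 0 ≤ A i j) (hG : Good A Γ) {c : I × J} (hc : c ∈ Γ)
    {S : Finset (I ⊕ J)} (hS : Sum.inr c.2 ∈ S) :
    assignGame A S - ∑ x ∈ S.erase (Sum.inr c.2), upperVec (assignGame A) x ≤ Cv A Γ c.2 := by
  rw [assignGame_eq_sum_phi A hA hG, sum_upper A hA hG]
  rw [sub_le_iff_le_add, ← Finset.add_sum_erase _ _ hc, ← Finset.add_sum_erase _ _ hc]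
  have hown : phi A Γ S c ≤
      ((if Sum.inl c.1 ∈ S.erase (Sum.inr c.2) then A c.1 c.2 - Cv A Γ c.2 else 0) +
        (if Sum.inr c.2 ∈ S.erase (Sum.inr c.2) then A c.1 c.2 - Rv A Γ c.1 else 0))
        + Cv A Γ c.2 := by
    rw [if_neg (Finset.notMem_erase _ _)]
    have hiff : (Sum.inl c.1 ∈ S.erase (Sum.inr c.2)) = (Sum.inl c.1 ∈ S) := by
      apply propext
      exact ⟨fun h => Finset.mem_of_mem_erase h, fun h => Finset.mem_erase.2 ⟨by simp, h⟩⟩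
    simp only [hiff]
    by_cases h2 : Sum.inl c.1 ∈ S
    · rw [phi_both A Γ h2 hS, if_pos h2]
      ring_nf
      simp
    · rw [phi_col A Γ h2 hS, if_neg h2]
      have := colMax_le_Cv A Γ S c.2
      linarith
  have hrest : ∑ c' ∈ Γ.erase c, phi A Γ S c' ≤
      ∑ c' ∈ Γ.erase c, ((if Sum.inl c'.1 ∈ S.erase (Sum.inr c.2) then A c'.1 c'.2 - Cv A Γ c'.2
        else 0) + (if Sum.inr c'.2 ∈ S.erase (Sum.inr c.2) then A c'.1 c'.2 - Rv A Γ c'.1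
        else 0)) := by
    apply Finset.sum_le_sum
    intro c' hc'
    have hne : c' ≠ c := Finset.ne_of_mem_erase hc'
    have hc'Γ := Finset.mem_of_mem_erase hc'
    have hiff1 : (Sum.inl c'.1 ∈ S.erase (Sum.inr c.2)) = (Sum.inl c'.1 ∈ S) := by
      apply propext
      exact ⟨fun h => Finset.mem_of_mem_erase h, fun h => Finset.mem_erase.2 ⟨by simp, h⟩⟩
    have hiff2 : (Sum.inr c'.2 ∈ S.erase (Sum.inr c.2)) = (Sum.inr c'.2 ∈ S) := by
      apply propext
      refine ⟨fun h => Finset.mem_of_mem_erase h, fun h => Finset.mem_erase.2 ⟨?_, h⟩⟩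
      rw [Ne, Sum.inr.injEq]
      exact corner_cols_ne A hG hc'Γ hc hne
    simp only [hiff1, hiff2]
    exact phi_le_corterm A hA hG hc'Γ
  linarith

lemma lower_bound_nonrow (hA : ∀ i j, 0 ≤ A i j) (hG : Good A Γ) {k : I} (hk : k ∉ Rows Γ)
    {S : Finset (I ⊕ J)} (hS : Sum.inl k ∈ S) :
    assignGame A S - ∑ x ∈ S.erase (Sum.inl k), upperVec (assignGame A) x ≤ 0 := by
  rw [assignGame_eq_sum_phi A hA hG, sum_upper A hA hG, sub_nonpos]
  apply Finset.sum_le_sum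
  intro c hc
  have hiff1 : (Sum.inl c.1 ∈ S.erase (Sum.inl k)) = (Sum.inl c.1 ∈ S) := by
    apply propext
    refine ⟨fun h => Finset.mem_of_mem_erase h, fun h => Finset.mem_erase.2 ⟨?_, h⟩⟩
    rw [Ne, Sum.inl.injEq]
    intro h'
    exact hk (h' ▸ mem_Rows.2 ⟨c, hc, rfl⟩)
  have hiff2 : (Sum.inr c.2 ∈ S.erase (Sum.inl k)) = (Sum.inr c.2 ∈ S) := by
    apply propext
    exact ⟨fun h => Finset.mem_of_mem_erase h, fun h => Finset.mem_erase.2 ⟨by simp, h⟩⟩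
  simp only [hiff1, hiff2]
  exact phi_le_corterm A hA hG hc

lemma lower_bound_noncol (hA : ∀ i j, 0 ≤ A i j) (hG : Good A Γ) {l : J} (hl : l ∉ Cols Γ)
    {S : Finset (I ⊕ J)} (hS : Sum.inr l ∈ S) :
    assignGame A S - ∑ x ∈ S.erase (Sum.inr l), upperVec (assignGame A) x ≤ 0 := by
  rw [assignGame_eq_sum_phi A hA hG, sum_upper A hA hG, sub_nonpos]
  apply Finset.sum_le_sum
  intro c hc
  have hiff1 : (Sum.inl c.1 ∈ S.erase (Sum.inr l)) = (Sum.inl c.1 ∈ S) := by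
    apply propext
    exact ⟨fun h => Finset.mem_of_mem_erase h, fun h => Finset.mem_erase.2 ⟨by simp, h⟩⟩
  have hiff2 : (Sum.inr c.2 ∈ S.erase (Sum.inr l)) = (Sum.inr c.2 ∈ S) := by
    apply propext
    refine ⟨fun h => Finset.mem_of_mem_erase h, fun h => Finset.mem_erase.2 ⟨?_, h⟩⟩
    rw [Ne, Sum.inr.injEq]
    intro h'
    exact hl (h' ▸ mem_Cols.2 ⟨c, hc, rfl⟩)
  simp only [hiff1, hiff2]
  exact phi_le_corterm A hA hG hc

/-- the value of a singleton coalition of any player is zero -/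
lemma w_single (i : I ⊕ J) : assignGame A {i} = 0 := by
  rcases i with i | j
  · exact assignGame_singleton_left A i
  · exact assignGame_singleton_right A j

lemma zero_mem_lower (i : I ⊕ J) :
    (0:ℝ) ∈ {t | ∃ S : Finset (I ⊕ J), i ∈ S ∧
      t = assignGame A S - ∑ j ∈ S.erase i, upperVec (assignGame A) j} := by
  refine ⟨{i}, Finset.mem_singleton_self i, ?_⟩
  rw [Finset.erase_singleton, Finset.sum_empty, w_single, sub_zero]

lemma lowerSet_finite (i : I ⊕ J) :
    {t | ∃ S : Finset (I ⊕ J), i ∈ S ∧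
      t = assignGame A S - ∑ j ∈ S.erase i, upperVec (assignGame A) j}.Finite := by
  have : {t | ∃ S : Finset (I ⊕ J), i ∈ S ∧
      t = assignGame A S - ∑ j ∈ S.erase i, upperVec (assignGame A) j} ⊆
      (fun S : Finset (I ⊕ J) => assignGame A S - ∑ j ∈ S.erase i, upperVec (assignGame A) j) ''
        Set.univ := by
    rintro t ⟨S, -, rfl⟩
    exact ⟨S, Set.mem_univ _, rfl⟩
  exact Set.Finite.subset ((Set.finite_univ).image _) this

lemma lower_nonrow (hA : ∀ i j, 0 ≤ A i j) (hG : Good A Γ) {k : I} (hk : k ∉ Rows Γ) :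
    lowerVec (assignGame A) (Sum.inl k) = 0 := by
  rw [lowerVec]
  apply le_antisymm
  · apply csSup_le ⟨0, zero_mem_lower A _⟩
    rintro t ⟨S, hS, rfl⟩
    exact lower_bound_nonrow A hA hG hk hS
  · apply le_csSup ((lowerSet_finite A _).bddAbove) (zero_mem_lower A _)

lemma lower_noncol (hA : ∀ i j, 0 ≤ A i j) (hG : Good A Γ) {l : J} (hl : l ∉ Cols Γ) :
    lowerVec (assignGame A) (Sum.inr l) = 0 := by
  rw [lowerVec]
  apply le_antisymm
  · apply csSup_le ⟨0, zero_mem_lower A _⟩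
    rintro t ⟨S, hS, rfl⟩
    exact lower_bound_noncol A hA hG hl hS
  · apply le_csSup ((lowerSet_finite A _).bddAbove) (zero_mem_lower A _)

lemma lower_corner_row (hA : ∀ i j, 0 ≤ A i j) (hG : Good A Γ) {c : I × J} (hc : c ∈ Γ) :
    lowerVec (assignGame A) (Sum.inl c.1) = Rv A Γ c.1 := by
  rw [lowerVec]
  have hmem : Rv A Γ c.1 ∈ {t | ∃ S : Finset (I ⊕ J), Sum.inl c.1 ∈ S ∧
      t = assignGame A S - ∑ j ∈ S.erase (Sum.inl c.1), upperVec (assignGame A) j} := by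
    rcases eq_or_lt_of_le (Rv_nonneg A Γ c.1) with h0 | h0
    · refine ⟨{Sum.inl c.1}, Finset.mem_singleton_self _, ?_⟩
      rw [Finset.erase_singleton, Finset.sum_empty, w_single, sub_zero, ← h0]
    · obtain ⟨l, hl1, -, -, hl4⟩ := rowMax_pos_exists A Γ h0
      refine ⟨{Sum.inl c.1, Sum.inr l}, by simp, ?_⟩
      have herase : ({Sum.inl c.1, Sum.inr l} : Finset (I ⊕ J)).erase (Sum.inl c.1)
          = {Sum.inr l} := by
        rw [Finset.pair_comm, Finset.erase_insert_of_ne (by simp), Finset.erase_singleton]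
        · rfl
      have hsum : ∑ j ∈ ({Sum.inl c.1, Sum.inr l} : Finset (I ⊕ J)).erase (Sum.inl c.1),
          upperVec (assignGame A) j = 0 := by
        rw [herase, Finset.sum_singleton, upper_noncol A hA hG hl1]
      rw [hsum, sub_zero, assignGame_eq_sum_phi A hA hG]
      have hw : ∑ c' ∈ Γ, phi A Γ {Sum.inl c.1, Sum.inr l} c' = Rv A Γ c.1 := by
        rw [← Finset.add_sum_erase _ _ hc]
        have h1 : phi A Γ {Sum.inl c.1, Sum.inr l} c = Rv A Γ c.1 := by
          have hnr : Sum.inr c.2 ∉ ({Sum.inl c.1, Sum.inr l} : Finset (I ⊕ J)) := by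
            simp only [Finset.mem_insert, Finset.mem_singleton]
            rintro (h | h)
            · exact nomatch h
            · rw [Sum.inr.injEq] at h
              exact hl1 (h ▸ mem_Cols.2 ⟨c, hc, rfl⟩)
          rw [phi_row A Γ (by simp) hnr]
          apply le_antisymm (rowMax_le_Rv A Γ _ c.1)
          rw [Rv_def, ← hl4]
          exact le_rowMax A Γ hl1 (by simp)
        have h2 : ∑ c' ∈ Γ.erase c, phi A Γ {Sum.inl c.1, Sum.inr l} c' = 0 := by
          apply Finset.sum_eq_zero
          intro c' hc'
          have hne : c' ≠ c := Finset.ne_of_mem_erase hc'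
          have hc'Γ := Finset.mem_of_mem_erase hc'
          apply phi_none A Γ
          · simp only [Finset.mem_insert, Finset.mem_singleton]
            rintro (h | h)
            · rw [Sum.inl.injEq] at h
              exact corner_rows_ne A hG hc'Γ hc hne h
            · exact nomatch h
          · simp only [Finset.mem_insert, Finset.mem_singleton]
            rintro (h | h)
            · exact nomatch h
            · rw [Sum.inr.injEq] at h
              exact hl1 (h ▸ mem_Cols.2 ⟨c', hc'Γ, rfl⟩)
        rw [h1, h2, add_zero]
      rw [hw]
  apply le_antisymm
  · apply csSup_le ⟨_, hmem⟩
    rintro t ⟨S, hS, rfl⟩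
    exact lower_bound_row A hA hG hc hS
  · exact le_csSup ((lowerSet_finite A _).bddAbove) hmem

lemma lower_corner_col (hA : ∀ i j, 0 ≤ A i j) (hG : Good A Γ) {c : I × J} (hc : c ∈ Γ) :
    lowerVec (assignGame A) (Sum.inr c.2) = Cv A Γ c.2 := by
  rw [lowerVec]
  have hmem : Cv A Γ c.2 ∈ {t | ∃ S : Finset (I ⊕ J), Sum.inr c.2 ∈ S ∧
      t = assignGame A S - ∑ j ∈ S.erase (Sum.inr c.2), upperVec (assignGame A) j} := by
    rcases eq_or_lt_of_le (Cv_nonneg A Γ c.2) with h0 | h0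
    · refine ⟨{Sum.inr c.2}, Finset.mem_singleton_self _, ?_⟩
      rw [Finset.erase_singleton, Finset.sum_empty, w_single, sub_zero, ← h0]
    · obtain ⟨k, hk1, -, -, hk4⟩ := colMax_pos_exists A Γ h0
      refine ⟨{Sum.inr c.2, Sum.inl k}, by simp, ?_⟩
      have herase : ({Sum.inr c.2, Sum.inl k} : Finset (I ⊕ J)).erase (Sum.inr c.2)
          = {Sum.inl k} := by
        rw [Finset.pair_comm, Finset.erase_insert_of_ne (by simp), Finset.erase_singleton]
        · rfl
      have hsum : ∑ j ∈ ({Sum.inr c.2, Sum.inl k} : Finset (I ⊕ J)).erase (Sum.inr c.2),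
          upperVec (assignGame A) j = 0 := by
        rw [herase, Finset.sum_singleton, upper_nonrow A hA hG hk1]
      rw [hsum, sub_zero, assignGame_eq_sum_phi A hA hG]
      have hw : ∑ c' ∈ Γ, phi A Γ {Sum.inr c.2, Sum.inl k} c' = Cv A Γ c.2 := by
        rw [← Finset.add_sum_erase _ _ hc]
        have h1 : phi A Γ {Sum.inr c.2, Sum.inl k} c = Cv A Γ c.2 := by
          have hnl : Sum.inl c.1 ∉ ({Sum.inr c.2, Sum.inl k} : Finset (I ⊕ J)) := by
            simp only [Finset.mem_insert, Finset.mem_singleton]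
            rintro (h | h)
            · exact nomatch h
            · rw [Sum.inl.injEq] at h
              exact hk1 (h ▸ mem_Rows.2 ⟨c, hc, rfl⟩)
          rw [phi_col A Γ hnl (by simp)]
          apply le_antisymm (colMax_le_Cv A Γ _ c.2)
          rw [Cv_def, ← hk4]
          exact le_colMax A Γ hk1 (by simp)
        have h2 : ∑ c' ∈ Γ.erase c, phi A Γ {Sum.inr c.2, Sum.inl k} c' = 0 := by
          apply Finset.sum_eq_zero
          intro c' hc'
          have hne : c' ≠ c := Finset.ne_of_mem_erase hc'
          have hc'Γ := Finset.mem_of_mem_erase hc'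
          apply phi_none A Γ
          · simp only [Finset.mem_insert, Finset.mem_singleton]
            rintro (h | h)
            · exact nomatch h
            · rw [Sum.inl.injEq] at h
              exact hk1 (h ▸ mem_Rows.2 ⟨c', hc'Γ, rfl⟩)
          · simp only [Finset.mem_insert, Finset.mem_singleton]
            rintro (h | h)
            · rw [Sum.inr.injEq] at h
              exact corner_cols_ne A hG hc'Γ hc hne h
            · exact nomatch h
        rw [h1, h2, add_zero]
      rw [hw]
  apply le_antisymm
  · apply csSup_le ⟨_, hmem⟩
    rintro t ⟨S, hS, rfl⟩
    exact lower_bound_col A hA hG hc hS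
  · exact le_csSup ((lowerSet_finite A _).bddAbove) hmem

end Lower

section TauCore

variable {Γ : Finset (I × J)}

lemma tau_formula (hA : ∀ i j, 0 ≤ A i j) (hG : Good A Γ) {τ : I ⊕ J → ℝ}
    (hτ : IsTauValue (assignGame A) τ) :
    (∀ c ∈ Γ, τ (Sum.inl c.1) = (A c.1 c.2 + Rv A Γ c.1 - Cv A Γ c.2) / 2 ∧
      τ (Sum.inr c.2) = (A c.1 c.2 + Cv A Γ c.2 - Rv A Γ c.1) / 2) ∧
    (∀ k, k ∉ Rows Γ → τ (Sum.inl k) = 0) ∧ (∀ l, l ∉ Cols Γ → τ (Sum.inr l) = 0) := by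
  obtain ⟨κ, hκ0, hκ1, hform, hsum⟩ := hτ
  have hnonrow : ∀ k, k ∉ Rows Γ → τ (Sum.inl k) = 0 := by
    intro k hk
    rw [hform, upper_nonrow A hA hG hk, lower_nonrow A hA hG hk]
    ring
  have hnoncol : ∀ l, l ∉ Cols Γ → τ (Sum.inr l) = 0 := by
    intro l hl
    rw [hform, upper_noncol A hA hG hl, lower_noncol A hA hG hl]
    ring
  have hτrow : ∀ c ∈ Γ, τ (Sum.inl c.1)
      = κ * (A c.1 c.2 - Cv A Γ c.2) + (1 - κ) * Rv A Γ c.1 := by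
    intro c hc
    rw [hform, upper_corner_row A hA hG hc, lower_corner_row A hA hG hc]
  have hτcol : ∀ c ∈ Γ, τ (Sum.inr c.2)
      = κ * (A c.1 c.2 - Rv A Γ c.1) + (1 - κ) * Cv A Γ c.2 := by
    intro c hc
    rw [hform, upper_corner_col A hA hG hc, lower_corner_col A hA hG hc]
  have hdecomp : ∑ x, τ x = ∑ c ∈ Γ, (τ (Sum.inl c.1) + τ (Sum.inr c.2)) := by
    rw [sum_corner_decomp A hG τ hnonrow hnoncol Finset.univ]
    simp
  have hzero : ∑ c ∈ Γ, ((2*κ - 1) * (A c.1 c.2 - Rv A Γ c.1 - Cv A Γ c.2)) = 0 := by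
    have h1 : ∀ c ∈ Γ, (2*κ - 1) * (A c.1 c.2 - Rv A Γ c.1 - Cv A Γ c.2)
        = (τ (Sum.inl c.1) + τ (Sum.inr c.2)) - A c.1 c.2 := by
      intro c hc
      rw [hτrow c hc, hτcol c hc]
      ring
    rw [Finset.sum_congr rfl h1, Finset.sum_sub_distrib, ← hdecomp, hsum,
      w_univ A hA hG, sub_self]
  by_cases hκhalf : 2*κ - 1 = 0
  · have hκ : κ = 1/2 := by linarith
    refine ⟨fun c hc => ⟨?_, ?_⟩, hnonrow, hnoncol⟩
    · rw [hτrow c hc, hκ]; ring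
    · rw [hτcol c hc, hκ]; ring
  · have hz2 : ∑ c ∈ Γ, (A c.1 c.2 - Rv A Γ c.1 - Cv A Γ c.2) = 0 := by
      rw [← Finset.mul_sum] at hzero
      exact (mul_eq_zero.1 hzero).resolve_left hκhalf
    have hall : ∀ c ∈ Γ, A c.1 c.2 - Rv A Γ c.1 - Cv A Γ c.2 = 0 :=
      (Finset.sum_eq_zero_iff_of_nonneg (fun c' hc' => by
        have := RvCv_le A hA hG hc'; linarith)).1 hz2
    refine ⟨fun c hc => ⟨?_, ?_⟩, hnonrow, hnoncol⟩
    · rw [hτrow c hc]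
      linear_combination (κ - 1/2) * (hall c hc)
    · rw [hτcol c hc]
      linear_combination (κ - 1/2) * (hall c hc)

lemma core_char (hA : ∀ i j, 0 ≤ A i j) (hG : Good A Γ) {x : I ⊕ J → ℝ}
    (hx : InCore (assignGame A) x) :
    (∀ k, k ∉ Rows Γ → x (Sum.inl k) = 0) ∧ (∀ l, l ∉ Cols Γ → x (Sum.inr l) = 0) ∧
    (∀ c ∈ Γ, x (Sum.inl c.1) + x (Sum.inr c.2) = A c.1 c.2 ∧
      Rv A Γ c.1 ≤ x (Sum.inl c.1) ∧ Cv A Γ c.2 ≤ x (Sum.inr c.2)) := by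
  have hnn : ∀ i, 0 ≤ x i := by
    intro i
    have := hx.2 {i}
    rw [w_single, Finset.sum_singleton] at this
    exact this
  have hpair : ∀ (i : I) (j : J), A i j ≤ x (Sum.inl i) + x (Sum.inr j) := by
    intro i j
    have := hx.2 {Sum.inl i, Sum.inr j}
    rw [assignGame_pair A hA, Finset.sum_pair (by simp)] at this
    exact this
  -- split the grand sum into corner players and the rest
  set CP : Finset (I ⊕ J) := Γ.biUnion (fun c => {Sum.inl c.1, Sum.inr c.2}) with hCP
  have hCPmem : ∀ z : I ⊕ J, z ∈ CP ↔ ∃ c ∈ Γ, z = Sum.inl c.1 ∨ z = Sum.inr c.2 := by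
    intro z
    rw [hCP, Finset.mem_biUnion]
    constructor
    · rintro ⟨c, hc, hz⟩
      rcases Finset.mem_insert.1 hz with h | h
      · exact ⟨c, hc, Or.inl h⟩
      · exact ⟨c, hc, Or.inr (Finset.mem_singleton.1 h)⟩
    · rintro ⟨c, hc, h | h⟩
      · exact ⟨c, hc, Finset.mem_insert.2 (Or.inl h)⟩
      · exact ⟨c, hc, Finset.mem_insert.2 (Or.inr (Finset.mem_singleton.2 h))⟩
  have hdisj : Set.PairwiseDisjoint (↑Γ : Set (I × J))
      (fun c : I × J => ({Sum.inl c.1, Sum.inr c.2} : Finset (I ⊕ J))) := by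
    intro c hc c' hc' hne
    simp only [Function.onFun]
    rw [Finset.disjoint_left]
    intro z hz hz'
    rcases Finset.mem_insert.1 hz with h | h <;> rcases Finset.mem_insert.1 hz' with h' | h'
    · rw [h] at h'
      rw [Sum.inl.injEq] at h'
      exact hne (hG.inj1 c hc c' hc' h')
    · rw [Finset.mem_singleton] at h'
      rw [h] at h'
      exact nomatch h'
    · rw [Finset.mem_singleton] at h
      rw [h] at h'
      exact nomatch h'
    · rw [Finset.mem_singleton] at h h'
      rw [h] at h'
      rw [Sum.inr.injEq] at h'
      exact hne (hG.inj2 c hc c' hc' h')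
  have hsumCP : ∑ z ∈ CP, x z = ∑ c ∈ Γ, (x (Sum.inl c.1) + x (Sum.inr c.2)) := by
    rw [hCP, Finset.sum_biUnion hdisj]
    exact Finset.sum_congr rfl (fun c _ => Finset.sum_pair (by simp))
  have hsplit : ∑ z, x z = ∑ z ∈ CP, x z + ∑ z ∈ Finset.univ \ CP, x z := by
    rw [← Finset.sum_sdiff (Finset.subset_univ CP), add_comm]
  have htotal : ∑ c ∈ Γ, ((x (Sum.inl c.1) + x (Sum.inr c.2)) - A c.1 c.2)
      + ∑ z ∈ Finset.univ \ CP, x z = 0 := by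
    rw [Finset.sum_sub_distrib, ← hsumCP]
    have := hx.1
    rw [w_univ A hA hG] at this
    linarith [hsplit]
  have hterm1 : ∀ c ∈ Γ, 0 ≤ (x (Sum.inl c.1) + x (Sum.inr c.2)) - A c.1 c.2 :=
    fun c _ => by linarith [hpair c.1 c.2]
  have hterm2 : ∀ z ∈ Finset.univ \ CP, (0:ℝ) ≤ x z := fun z _ => hnn z
  have h1 : ∀ c ∈ Γ, (x (Sum.inl c.1) + x (Sum.inr c.2)) - A c.1 c.2 = 0 := by
    have hs1 : (0:ℝ) ≤ ∑ c ∈ Γ, ((x (Sum.inl c.1) + x (Sum.inr c.2)) - A c.1 c.2) :=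
      Finset.sum_nonneg hterm1
    have hs2 : (0:ℝ) ≤ ∑ z ∈ Finset.univ \ CP, x z := Finset.sum_nonneg hterm2
    have hz : ∑ c ∈ Γ, ((x (Sum.inl c.1) + x (Sum.inr c.2)) - A c.1 c.2) = 0 := by linarith
    exact (Finset.sum_eq_zero_iff_of_nonneg hterm1).1 hz
  have h2 : ∀ z ∈ Finset.univ \ CP, x z = 0 := by
    have hs1 : (0:ℝ) ≤ ∑ c ∈ Γ, ((x (Sum.inl c.1) + x (Sum.inr c.2)) - A c.1 c.2) :=
      Finset.sum_nonneg hterm1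
    have hz : ∑ z ∈ Finset.univ \ CP, x z = 0 := by linarith [Finset.sum_nonneg hterm2]
    exact (Finset.sum_eq_zero_iff_of_nonneg hterm2).1 hz
  have hxrow0 : ∀ k, k ∉ Rows Γ → x (Sum.inl k) = 0 := by
    intro k hk
    apply h2
    rw [Finset.mem_sdiff]
    refine ⟨Finset.mem_univ _, ?_⟩
    rw [hCPmem]
    rintro ⟨c, hc, h | h⟩
    · rw [Sum.inl.injEq] at h
      exact hk (h ▸ mem_Rows.2 ⟨c, hc, rfl⟩)
    · exact nomatch h
  have hxcol0 : ∀ l, l ∉ Cols Γ → x (Sum.inr l) = 0 := by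
    intro l hl
    apply h2
    rw [Finset.mem_sdiff]
    refine ⟨Finset.mem_univ _, ?_⟩
    rw [hCPmem]
    rintro ⟨c, hc, h | h⟩
    · exact nomatch h
    · rw [Sum.inr.injEq] at h
      exact hl (h ▸ mem_Cols.2 ⟨c, hc, rfl⟩)
  refine ⟨hxrow0, hxcol0, fun c hc => ⟨by linarith [h1 c hc], ?_, ?_⟩⟩
  · apply rowMax_le A Γ (hnn _)
    intro l hl _
    have := hpair c.1 l
    rw [hxcol0 l hl] at this
    linarith
  · apply colMax_le A Γ (hnn _)
    intro k hk _
    have := hpair k c.2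
    rw [hxrow0 k hk] at this
    linarith

lemma incore_of (hA : ∀ i j, 0 ≤ A i j) (hG : Good A Γ) {x : I ⊕ J → ℝ}
    (h1 : ∀ k, k ∉ Rows Γ → x (Sum.inl k) = 0) (h2 : ∀ l, l ∉ Cols Γ → x (Sum.inr l) = 0)
    (h3 : ∀ c ∈ Γ, x (Sum.inl c.1) + x (Sum.inr c.2) = A c.1 c.2)
    (h4 : ∀ c ∈ Γ, Rv A Γ c.1 ≤ x (Sum.inl c.1))
    (h5 : ∀ c ∈ Γ, Cv A Γ c.2 ≤ x (Sum.inr c.2)) :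
    InCore (assignGame A) x := by
  constructor
  · rw [sum_corner_decomp A hG x h1 h2 Finset.univ, w_univ A hA hG]
    apply Finset.sum_congr rfl
    intro c hc
    simp only [Finset.mem_univ, if_pos]
    exact h3 c hc
  · intro S
    rw [assignGame_eq_sum_phi A hA hG, sum_corner_decomp A hG x h1 h2 S]
    apply Finset.sum_le_sum
    intro c hc
    by_cases hl : Sum.inl c.1 ∈ S <;> by_cases hr : Sum.inr c.2 ∈ S
    · rw [phi_both A Γ hl hr, if_pos hl, if_pos hr, h3 c hc]
    · rw [phi_row A Γ hl hr, if_pos hl, if_neg hr, add_zero]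
      exact le_trans (rowMax_le_Rv A Γ S c.1) (h4 c hc)
    · rw [phi_col A Γ hl hr, if_neg hl, if_pos hr, zero_add]
      exact le_trans (colMax_le_Cv A Γ S c.2) (h5 c hc)
    · rw [phi_none A Γ hl hr, if_neg hl, if_neg hr, add_zero]

/-- per-corner excess contribution -/
noncomputable def gex (Γ : Finset (I × J)) (x : I ⊕ J → ℝ) (S : Finset (I ⊕ J))
    (c : I × J) : ℝ :=
  (if Sum.inl c.1 ∈ S then x (Sum.inl c.1) else 0) +
    (if Sum.inr c.2 ∈ S then x (Sum.inr c.2) else 0) - phi A Γ S c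

lemma excess_decomp (hA : ∀ i j, 0 ≤ A i j) (hG : Good A Γ) {x : I ⊕ J → ℝ}
    (h1 : ∀ k, k ∉ Rows Γ → x (Sum.inl k) = 0) (h2 : ∀ l, l ∉ Cols Γ → x (Sum.inr l) = 0)
    (S : Finset (I ⊕ J)) :
    ∑ i ∈ S, x i - assignGame A S = ∑ c ∈ Γ, gex A Γ x S c := by
  rw [assignGame_eq_sum_phi A hA hG, sum_corner_decomp A hG x h1 h2 S]
  rw [← Finset.sum_sub_distrib]
  rfl

lemma gex_nonneg (hA : ∀ i j, 0 ≤ A i j) (hG : Good A Γ) {x : I ⊕ J → ℝ}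
    (hx : InCore (assignGame A) x) {c : I × J} (hc : c ∈ Γ) (S : Finset (I ⊕ J)) :
    0 ≤ gex A Γ x S c := by
  obtain ⟨hz1, hz2, hcore⟩ := core_char A hA hG hx
  obtain ⟨hpair, hbl, hbr⟩ := hcore c hc
  rw [gex]
  by_cases hl : Sum.inl c.1 ∈ S <;> by_cases hr : Sum.inr c.2 ∈ S
  · rw [phi_both A Γ hl hr, if_pos hl, if_pos hr, hpair]
    simp
  · rw [phi_row A Γ hl hr, if_pos hl, if_neg hr, add_zero]
    have := rowMax_le_Rv A Γ S c.1
    linarith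
  · rw [phi_col A Γ hl hr, if_neg hl, if_pos hr, zero_add]
    have := colMax_le_Cv A Γ S c.2
    linarith
  · rw [phi_none A Γ hl hr, if_neg hl, if_neg hr, add_zero]
    simp

lemma gex_zero_of_iff (hA : ∀ i j, 0 ≤ A i j) (hG : Good A Γ) {x : I ⊕ J → ℝ}
    (h3 : ∀ c ∈ Γ, x (Sum.inl c.1) + x (Sum.inr c.2) = A c.1 c.2) {c : I × J} (hc : c ∈ Γ)
    {S : Finset (I ⊕ J)} (hiff : (Sum.inl c.1 ∈ S) ↔ (Sum.inr c.2 ∈ S)) :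
    gex A Γ x S c = 0 := by
  rw [gex]
  by_cases hl : Sum.inl c.1 ∈ S
  · have hr := hiff.1 hl
    rw [phi_both A Γ hl hr, if_pos hl, if_pos hr, h3 c hc]
    ring
  · have hr := fun h => hl (hiff.2 h)
    rw [phi_none A Γ hl hr, if_neg hl, if_neg hr]
    ring

end TauCore

section Lists
open scoped Classical

/-- number of entries at most `m` -/
noncomputable def Cnt (u : List ℝ) (m : ℝ) : ℕ := u.countP (fun a => decide (a ≤ m))

lemma Cnt_cons (a : ℝ) (u : List ℝ) (m : ℝ) :
    Cnt (a :: u) m = Cnt u m + if a ≤ m then 1 else 0 := by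
  rw [Cnt, Cnt, List.countP_cons]
  by_cases h : a ≤ m <;> simp [h]

lemma Cnt_eq_zero {u : List ℝ} {m : ℝ} (h : ∀ a ∈ u, ¬ a ≤ m) : Cnt u m = 0 := by
  rw [Cnt, List.countP_eq_zero]
  intro a ha
  simpa using h a ha

lemma Cnt_pos {u : List ℝ} {a : ℝ} (ha : a ∈ u) {m : ℝ} (h : a ≤ m) : 0 < Cnt u m := by
  rw [Cnt, List.countP_pos_iff]
  exact ⟨a, ha, by simpa using h⟩

lemma lex_first_diff : ∀ (u v : List ℝ), List.Lex (· < ·) v u →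
    u.Pairwise (· ≤ ·) → v.Pairwise (· ≤ ·) → v.length = u.length →
    ∃ m : ℝ, Cnt u m < Cnt v m ∧ ∀ s : ℝ, s < m → Cnt v s = Cnt u s := by
  intro u
  induction u with
  | nil =>
    intro v h _ _ _
    cases h
  | cons b l₂ ih =>
    intro v h hu hv hlen
    cases v with
    | nil => simp at hlen
    | cons a l₁ =>
     cases h with
     | cons h' =>
      obtain ⟨m, hm1, hm2⟩ := ih l₁ h' (List.pairwise_cons.1 hu).2 (List.pairwise_cons.1 hv).2
        (by simpa using hlen)
      refine ⟨m, ?_, ?_⟩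
      · rw [Cnt_cons, Cnt_cons]
        by_cases hbm : b ≤ m <;> simp [hbm] <;> omega
      · intro s hs
        rw [Cnt_cons, Cnt_cons, hm2 s hs]
     | rel hab =>
      refine ⟨a, ?_, ?_⟩
      · have h1 : Cnt (b :: l₂) a = 0 := by
          apply Cnt_eq_zero
          intro z hz
          rcases List.mem_cons.1 hz with rfl | hz
          · exact not_le.2 hab
          · have := (List.pairwise_cons.1 hu).1 z hz
            exact not_le.2 (lt_of_lt_of_le hab this)
        have h2 : 0 < Cnt (a :: l₁) a := Cnt_pos (List.mem_cons_self) le_rfl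
        omega
      · intro s hs
        have h1 : Cnt (b :: l₂) s = 0 := by
          apply Cnt_eq_zero
          intro z hz
          rcases List.mem_cons.1 hz with rfl | hz
          · exact not_le.2 (lt_trans hs hab)
          · have := (List.pairwise_cons.1 hu).1 z hz
            exact not_le.2 (lt_of_lt_of_le (lt_trans hs hab) this)
        have h2 : Cnt (a :: l₁) s = 0 := by
          apply Cnt_eq_zero
          intro z hz
          rcases List.mem_cons.1 hz with rfl | hz
          · exact not_le.2 hs
          · have := (List.pairwise_cons.1 hv).1 z hz
            exact not_le.2 (lt_of_lt_of_le hs this)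
        rw [h1, h2]

end Lists

section Counting
open scoped Classical

variable {α : Type*} [Fintype α]

noncomputable def Fc (v : Finset α → ℝ) (x : α → ℝ) (m : ℝ) : ℕ :=
  ((Finset.univ.filter (fun S : Finset α => S.Nonempty ∧ S ≠ Finset.univ)).filter
    (fun S => ∑ i ∈ S, x i - v S ≤ m)).card

lemma satList_sorted (v : Finset α → ℝ) (x : α → ℝ) : (satList v x).Pairwise (· ≤ ·) :=
  Multiset.pairwise_sort _ _

lemma satList_length (v : Finset α → ℝ) (x : α → ℝ) :
    (satList v x).length
      = (Finset.univ.filter (fun S : Finset α => S.Nonempty ∧ S ≠ Finset.univ)).card := by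
  rw [satList, Multiset.length_sort, Multiset.card_map]
  rfl

lemma cnt_satList (v : Finset α → ℝ) (x : α → ℝ) (m : ℝ) :
    Cnt (satList v x) m = Fc v x m := by
  rw [satList, Fc, Cnt]
  have h1 : ((((Finset.univ.filter
      (fun S : Finset α => S.Nonempty ∧ S ≠ Finset.univ)).val.map
      (fun S => ∑ i ∈ S, x i - v S)).sort (· ≤ ·)).countP (fun a => decide (a ≤ m)))
      = Multiset.countP (fun a => a ≤ m)
        (((Finset.univ.filter (fun S : Finset α => S.Nonempty ∧ S ≠ Finset.univ)).val.map
          (fun S => ∑ i ∈ S, x i - v S))) := by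
    rw [← Multiset.coe_countP]
    congr 1
    exact Multiset.sort_eq _ _
  rw [h1, Multiset.countP_map]
  rfl

end Counting

section Final
open scoped Classical

variable {Γ : Finset (I × J)}

lemma compare_core (hA : ∀ i j, 0 ≤ A i j) (hG : Good A Γ) {x τ : I ⊕ J → ℝ}
    (hx : InCore (assignGame A) x) (hτx : InCore (assignGame A) τ)
    (hτmid : ∀ c ∈ Γ, τ (Sum.inl c.1) = (A c.1 c.2 + Rv A Γ c.1 - Cv A Γ c.2) / 2 ∧
      τ (Sum.inr c.2) = (A c.1 c.2 + Cv A Γ c.2 - Rv A Γ c.1) / 2)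
    (hne : x ≠ τ) :
    ∃ sstar : ℝ,
      (∀ m : ℝ, m ≤ sstar → Fc (assignGame A) τ m ≤ Fc (assignGame A) x m) ∧
      Fc (assignGame A) τ sstar < Fc (assignGame A) x sstar := by
  obtain ⟨hx1, hx2, hx3⟩ := core_char A hA hG hx
  obtain ⟨hτ1, hτ2, hτ3⟩ := core_char A hA hG hτx
  set D : Finset (I × J) := Γ.filter (fun c => x (Sum.inl c.1) ≠ τ (Sum.inl c.1)) with hD
  have hDne : D.Nonempty := by
    by_contra hDe
    apply hne
    rw [Finset.not_nonempty_iff_eq_empty] at hDe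
    have hagree : ∀ c ∈ Γ, x (Sum.inl c.1) = τ (Sum.inl c.1) := by
      intro c hc
      by_contra hcc
      have : c ∈ D := Finset.mem_filter.2 ⟨hc, hcc⟩
      rw [hDe] at this
      exact absurd this (Finset.notMem_empty c)
    funext z
    rcases z with k | l
    · by_cases hk : k ∈ Rows Γ
      · obtain ⟨q, hq⟩ := mem_Rows' hk
        exact hagree (k, q) hq
      · rw [hx1 k hk, hτ1 k hk]
    · by_cases hl : l ∈ Cols Γ
      · obtain ⟨p, hp⟩ := mem_Cols' hl
        have h1 := (hx3 (p, l) hp).1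
        have h2 := (hτ3 (p, l) hp).1
        have h3 := hagree (p, l) hp
        simp only at h1 h2 h3
        linarith
      · rw [hx2 l hl, hτ2 l hl]
  set uf : I × J → ℝ := fun c => min (x (Sum.inl c.1) - Rv A Γ c.1)
      (A c.1 c.2 - x (Sum.inl c.1) - Cv A Γ c.2) with huf
  set sstar := D.inf' hDne uf with hsstar
  have hDmem : ∀ c ∈ D, c ∈ Γ ∧ x (Sum.inl c.1) ≠ τ (Sum.inl c.1) :=
    fun c hc => Finset.mem_filter.1 hc
  have hdelta : ∀ c ∈ D, sstar < (A c.1 c.2 - Rv A Γ c.1 - Cv A Γ c.2) / 2 := by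
    intro c hc
    obtain ⟨hcΓ, hcne⟩ := hDmem c hc
    have h1 : sstar ≤ uf c := Finset.inf'_le uf hc
    have hmidval := (hτmid c hcΓ).1
    have huv : x (Sum.inl c.1) - Rv A Γ c.1 ≠ A c.1 c.2 - x (Sum.inl c.1) - Cv A Γ c.2 := by
      intro heq
      apply hcne
      rw [hmidval]
      linarith
    rcases le_or_gt (x (Sum.inl c.1) - Rv A Γ c.1)
      (A c.1 c.2 - x (Sum.inl c.1) - Cv A Γ c.2) with h | h
    · have hufc : uf c = x (Sum.inl c.1) - Rv A Γ c.1 := min_eq_left h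
      rw [hufc] at h1
      rcases lt_or_eq_of_le h with h' | h'
      · linarith
      · exact absurd h' huv
    · have hufc : uf c = A c.1 c.2 - x (Sum.inl c.1) - Cv A Γ c.2 := min_eq_right h.le
      rw [hufc] at h1
      linarith
  have hP1 : ∀ m : ℝ, m ≤ sstar → ∀ S : Finset (I ⊕ J),
      ∑ i ∈ S, τ i - assignGame A S ≤ m → ∑ i ∈ S, x i - assignGame A S ≤ m := by
    intro m hm S hτS
    rw [excess_decomp A hA hG hτ1 hτ2 S] at hτS
    rw [excess_decomp A hA hG hx1 hx2 S]
    have hττ : ∀ c ∈ Γ, gex A Γ τ S c ≤ m :=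
      fun c hc => le_trans (Finset.single_le_sum
        (fun c' hc' => gex_nonneg A hA hG hτx hc' S) hc) hτS
    have heq : ∀ c ∈ Γ, gex A Γ x S c = gex A Γ τ S c := by
      intro c hc
      by_cases hcD : c ∈ D
      · have hsm : gex A Γ τ S c < (A c.1 c.2 - Rv A Γ c.1 - Cv A Γ c.2) / 2 :=
          lt_of_le_of_lt (le_trans (hττ c hc) hm) (hdelta c hcD)
        have hiff : (Sum.inl c.1 ∈ S) ↔ (Sum.inr c.2 ∈ S) := by
          constructor
          · intro hl
            by_contra hr
            have hform : gex A Γ τ S c = τ (Sum.inl c.1) - rowMax A Γ S c.1 := by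
              rw [gex, phi_row A Γ hl hr, if_pos hl, if_neg hr, add_zero]
            rw [hform, (hτmid c hc).1] at hsm
            have := rowMax_le_Rv A Γ S c.1
            linarith
          · intro hr
            by_contra hl
            have hform : gex A Γ τ S c = τ (Sum.inr c.2) - colMax A Γ S c.2 := by
              rw [gex, phi_col A Γ hl hr, if_neg hl, if_pos hr, zero_add]
            rw [hform, (hτmid c hc).2] at hsm
            have := colMax_le_Cv A Γ S c.2
            linarith
        rw [gex_zero_of_iff A hA hG (fun c' hc' => (hx3 c' hc').1) hc hiff,
          gex_zero_of_iff A hA hG (fun c' hc' => (hτ3 c' hc').1) hc hiff]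
      · have hagree1 : x (Sum.inl c.1) = τ (Sum.inl c.1) := by
          by_contra hcc
          exact hcD (Finset.mem_filter.2 ⟨hc, hcc⟩)
        have hagree2 : x (Sum.inr c.2) = τ (Sum.inr c.2) := by
          have h1 := (hx3 c hc).1
          have h2 := (hτ3 c hc).1
          linarith
        rw [gex, gex, hagree1, hagree2]
    rw [Finset.sum_congr rfl heq]
    exact hτS
  obtain ⟨c0, hc0D, hc0val⟩ := Finset.exists_mem_eq_inf' hDne uf
  obtain ⟨hc0Γ, hc0ne⟩ := hDmem c0 hc0D
  have hδ0 : sstar < (A c0.1 c0.2 - Rv A Γ c0.1 - Cv A Γ c0.2) / 2 := hdelta c0 hc0D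
  have hS0 : ∃ S0 : Finset (I ⊕ J), S0.Nonempty ∧ S0 ≠ Finset.univ ∧
      ∑ i ∈ S0, x i - assignGame A S0 ≤ sstar ∧
      ¬ (∑ i ∈ S0, τ i - assignGame A S0 ≤ sstar) := by
    rcases le_or_gt (x (Sum.inl c0.1) - Rv A Γ c0.1)
      (A c0.1 c0.2 - x (Sum.inl c0.1) - Cv A Γ c0.2) with hcase | hcase
    · have hval : uf c0 = x (Sum.inl c0.1) - Rv A Γ c0.1 := min_eq_left hcase
      obtain ⟨S0, hS0l, hS0r, hS0o, hS0row, hS0nemp, hS0nu⟩ :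
          ∃ S0 : Finset (I ⊕ J), Sum.inl c0.1 ∈ S0 ∧ Sum.inr c0.2 ∉ S0 ∧
            (∀ c' ∈ Γ, c' ≠ c0 → Sum.inl c'.1 ∉ S0 ∧ Sum.inr c'.2 ∉ S0) ∧
            rowMax A Γ S0 c0.1 = Rv A Γ c0.1 ∧ S0.Nonempty ∧ S0 ≠ Finset.univ := by
        rcases eq_or_lt_of_le (Rv_nonneg A Γ c0.1) with h0 | h0
        · refine ⟨{Sum.inl c0.1}, by simp, by simp, ?_, ?_, by simp, ?_⟩
          · intro c' hc' hne'
            constructor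
            · simp only [Finset.mem_singleton, Sum.inl.injEq]
              exact corner_rows_ne A hG hc' hc0Γ hne'
            · simp
          · rw [← h0]
            apply le_antisymm
            · apply rowMax_le A Γ le_rfl
              intro l hl hmem
              simp at hmem
            · exact rowMax_nonneg A Γ _ _
          · intro hU
            have : Sum.inr c0.2 ∈ ({Sum.inl c0.1} : Finset (I ⊕ J)) := by
              rw [hU]; exact Finset.mem_univ _
            simp at this
        · obtain ⟨l, hl1, hl2, hl3, hl4⟩ := rowMax_pos_exists A Γ h0
          refine ⟨{Sum.inl c0.1, Sum.inr l}, by simp, ?_, ?_, ?_, by simp, ?_⟩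
          · simp only [Finset.mem_insert, Finset.mem_singleton]
            rintro (h | h)
            · exact nomatch h
            · rw [Sum.inr.injEq] at h
              exact hl1 (h ▸ mem_Cols.2 ⟨c0, hc0Γ, rfl⟩)
          · intro c' hc' hne'
            constructor
            · simp only [Finset.mem_insert, Finset.mem_singleton]
              rintro (h | h)
              · rw [Sum.inl.injEq] at h
                exact corner_rows_ne A hG hc' hc0Γ hne' h
              · exact nomatch h
            · simp only [Finset.mem_insert, Finset.mem_singleton]
              rintro (h | h)
              · exact nomatch h
              · rw [Sum.inr.injEq] at h
                exact hl1 (h ▸ mem_Cols.2 ⟨c', hc', rfl⟩)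
          · apply le_antisymm (rowMax_le_Rv A Γ _ c0.1)
            rw [Rv_def, ← hl4]
            exact le_rowMax A Γ hl1 (by simp)
          · intro hU
            have hmemu : Sum.inr c0.2 ∈ ({Sum.inl c0.1, Sum.inr l} : Finset (I ⊕ J)) := by
              rw [hU]; exact Finset.mem_univ _
            simp only [Finset.mem_insert, Finset.mem_singleton] at hmemu
            rcases hmemu with h | h
            · exact nomatch h
            · rw [Sum.inr.injEq] at h
              exact hl1 (h.symm ▸ mem_Cols.2 ⟨c0, hc0Γ, rfl⟩)
      have hexval : ∀ z : I ⊕ J → ℝ, (∀ k, k ∉ Rows Γ → z (Sum.inl k) = 0) →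
          (∀ l, l ∉ Cols Γ → z (Sum.inr l) = 0) →
          ∑ i ∈ S0, z i - assignGame A S0 = z (Sum.inl c0.1) - Rv A Γ c0.1 := by
        intro z hz1 hz2
        rw [excess_decomp A hA hG hz1 hz2 S0, ← Finset.add_sum_erase _ _ hc0Γ]
        have hrest : ∑ c' ∈ Γ.erase c0, gex A Γ z S0 c' = 0 := by
          apply Finset.sum_eq_zero
          intro c' hc'
          have hne' := Finset.ne_of_mem_erase hc'
          have hc'Γ := Finset.mem_of_mem_erase hc'
          obtain ⟨ho1, ho2⟩ := hS0o c' hc'Γ hne'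
          rw [gex, phi_none A Γ ho1 ho2, if_neg ho1, if_neg ho2]
          ring
        rw [hrest, add_zero, gex, phi_row A Γ hS0l hS0r, if_pos hS0l, if_neg hS0r,
          add_zero, hS0row]
      refine ⟨S0, hS0nemp, hS0nu, ?_, ?_⟩
      · rw [hexval x hx1 hx2, hsstar, hc0val, hval]
      · rw [hexval τ hτ1 hτ2, (hτmid c0 hc0Γ).1]
        intro hcon
        linarith
    · have hval : uf c0 = A c0.1 c0.2 - x (Sum.inl c0.1) - Cv A Γ c0.2 := min_eq_right hcase.le
      obtain ⟨S0, hS0r, hS0l, hS0o, hS0col, hS0nemp, hS0nu⟩ :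
          ∃ S0 : Finset (I ⊕ J), Sum.inr c0.2 ∈ S0 ∧ Sum.inl c0.1 ∉ S0 ∧
            (∀ c' ∈ Γ, c' ≠ c0 → Sum.inl c'.1 ∉ S0 ∧ Sum.inr c'.2 ∉ S0) ∧
            colMax A Γ S0 c0.2 = Cv A Γ c0.2 ∧ S0.Nonempty ∧ S0 ≠ Finset.univ := by
        rcases eq_or_lt_of_le (Cv_nonneg A Γ c0.2) with h0 | h0
        · refine ⟨{Sum.inr c0.2}, by simp, by simp, ?_, ?_, by simp, ?_⟩
          · intro c' hc' hne'
            constructor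
            · simp
            · simp only [Finset.mem_singleton, Sum.inr.injEq]
              exact corner_cols_ne A hG hc' hc0Γ hne'
          · rw [← h0]
            apply le_antisymm
            · apply colMax_le A Γ le_rfl
              intro k hk hmem
              simp at hmem
            · exact colMax_nonneg A Γ _ _
          · intro hU
            have : Sum.inl c0.1 ∈ ({Sum.inr c0.2} : Finset (I ⊕ J)) := by
              rw [hU]; exact Finset.mem_univ _
            simp at this
        · obtain ⟨k, hk1, hk2, hk3, hk4⟩ := colMax_pos_exists A Γ h0
          refine ⟨{Sum.inr c0.2, Sum.inl k}, by simp, ?_, ?_, ?_, by simp, ?_⟩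
          · simp only [Finset.mem_insert, Finset.mem_singleton]
            rintro (h | h)
            · exact nomatch h
            · rw [Sum.inl.injEq] at h
              exact hk1 (h ▸ mem_Rows.2 ⟨c0, hc0Γ, rfl⟩)
          · intro c' hc' hne'
            constructor
            · simp only [Finset.mem_insert, Finset.mem_singleton]
              rintro (h | h)
              · exact nomatch h
              · rw [Sum.inl.injEq] at h
                exact hk1 (h ▸ mem_Rows.2 ⟨c', hc', rfl⟩)
            · simp only [Finset.mem_insert, Finset.mem_singleton]
              rintro (h | h)
              · rw [Sum.inr.injEq] at h
                exact corner_cols_ne A hG hc' hc0Γ hne' h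
              · exact nomatch h
          · apply le_antisymm (colMax_le_Cv A Γ _ c0.2)
            rw [Cv_def, ← hk4]
            exact le_colMax A Γ hk1 (by simp)
          · intro hU
            have hmemu : Sum.inl c0.1 ∈ ({Sum.inr c0.2, Sum.inl k} : Finset (I ⊕ J)) := by
              rw [hU]; exact Finset.mem_univ _
            simp only [Finset.mem_insert, Finset.mem_singleton] at hmemu
            rcases hmemu with h | h
            · exact nomatch h
            · rw [Sum.inl.injEq] at h
              exact hk1 (h.symm ▸ mem_Rows.2 ⟨c0, hc0Γ, rfl⟩)
      have hexval : ∀ z : I ⊕ J → ℝ, (∀ k, k ∉ Rows Γ → z (Sum.inl k) = 0) →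
          (∀ l, l ∉ Cols Γ → z (Sum.inr l) = 0) →
          ∑ i ∈ S0, z i - assignGame A S0 = z (Sum.inr c0.2) - Cv A Γ c0.2 := by
        intro z hz1 hz2
        rw [excess_decomp A hA hG hz1 hz2 S0, ← Finset.add_sum_erase _ _ hc0Γ]
        have hrest : ∑ c' ∈ Γ.erase c0, gex A Γ z S0 c' = 0 := by
          apply Finset.sum_eq_zero
          intro c' hc'
          have hne' := Finset.ne_of_mem_erase hc'
          have hc'Γ := Finset.mem_of_mem_erase hc'
          obtain ⟨ho1, ho2⟩ := hS0o c' hc'Γ hne'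
          rw [gex, phi_none A Γ ho1 ho2, if_neg ho1, if_neg ho2]
          ring
        rw [hrest, add_zero, gex, phi_col A Γ hS0l hS0r, if_neg hS0l, if_pos hS0r,
          zero_add, hS0col]
      refine ⟨S0, hS0nemp, hS0nu, ?_, ?_⟩
      · rw [hexval x hx1 hx2, hsstar, hc0val, hval]
        have hpx := (hx3 c0 hc0Γ).1
        linarith
      · rw [hexval τ hτ1 hτ2, (hτmid c0 hc0Γ).2]
        intro hcon
        linarith
  obtain ⟨S0, hS0nemp, hS0nu, hS0x, hS0τ⟩ := hS0
  refine ⟨sstar, ?_, ?_⟩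
  · intro m hm
    apply Finset.card_le_card
    apply Finset.monotone_filter_right
    intro S _ hS
    exact hP1 m hm S hS
  · apply Finset.card_lt_card
    rw [Finset.ssubset_iff_of_subset (Finset.monotone_filter_right _
      (fun S _ hS => hP1 sstar le_rfl S hS))]
    refine ⟨S0, ?_, ?_⟩
    · simp only [Finset.mem_filter]
      exact ⟨⟨Finset.mem_univ _, hS0nemp, hS0nu⟩, hS0x⟩
    · intro hmem
      simp only [Finset.mem_filter] at hmem
      exact hS0τ hmem.2

end Final

theorem final_theorem {I J : Type*} [Fintype I] [Fintype J]
    [Nonempty I] [Nonempty J] [DecidableEq I] [DecidableEq J]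
    (A : I → J → ℝ) (hA : ∀ i j, 0 ≤ A i j)
    (hadm : ∃ y, IsPMAS (assignGame A) y)
    (τ : I ⊕ J → ℝ) (hτ : IsTauValue (assignGame A) τ) :
    IsNucleolus (assignGame A) τ ∧ ∀ x, IsNucleolus (assignGame A) x → x = τ := by
  classical
  obtain ⟨Γ, hG⟩ := exists_good A hA hadm
  obtain ⟨hτmid, hτ1, hτ2⟩ := tau_formula A hA hG hτ
  have hτcore : InCore (assignGame A) τ := by
    apply incore_of A hA hG hτ1 hτ2
    · intro c hc
      rw [(hτmid c hc).1, (hτmid c hc).2]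
      ring
    · intro c hc
      rw [(hτmid c hc).1]
      have := RvCv_le A hA hG hc
      linarith
    · intro c hc
      rw [(hτmid c hc).2]
      have := RvCv_le A hA hG hc
      linarith
  have hlen : ∀ y : I ⊕ J → ℝ,
      (satList (assignGame A) y).length = (satList (assignGame A) τ).length := by
    intro y
    rw [satList_length, satList_length]
  have hnotlex : ∀ x : I ⊕ J → ℝ, InCore (assignGame A) x → x ≠ τ →
      ¬ List.Lex (· < ·) (satList (assignGame A) τ) (satList (assignGame A) x) := by
    intro x hx hne hlex
    obtain ⟨sstar, hp1, hp2⟩ := compare_core A hA hG hx hτcore hτmid hne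
    obtain ⟨m, hm1, hm2⟩ := lex_first_diff (satList (assignGame A) x)
      (satList (assignGame A) τ) hlex (satList_sorted _ _) (satList_sorted _ _) (hlen x).symm
    rw [cnt_satList, cnt_satList] at hm1
    by_cases hms : m ≤ sstar
    · have := hp1 m hms
      omega
    · have heq := hm2 sstar (not_le.1 hms)
      rw [cnt_satList, cnt_satList] at heq
      omega
  have htri := trichotomous_of (r := List.Lex ((· < ·) : ℝ → ℝ → Prop))
  constructor
  · refine ⟨hτcore, ?_⟩
    intro y hy
    by_cases hne : y = τ
    · left
      rw [hne]
    · have h3 := hnotlex y hy hne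
      rcases htri (satList (assignGame A) y) (satList (assignGame A) τ) with h | h | h
      · right; exact h
      · left; exact h
      · exact absurd h h3
  · intro x hx
    by_contra hne
    have hxc := hx.1
    have h3 := hnotlex x hxc hne
    have hlex : List.Lex (· < ·) (satList (assignGame A) x) (satList (assignGame A) τ) := by
      rcases htri (satList (assignGame A) x) (satList (assignGame A) τ) with h | h | h
      · exact h
      · exfalso
        obtain ⟨sstar, hp1, hp2⟩ := compare_core A hA hG hxc hτcore hτmid hne
        have heq : Cnt (satList (assignGame A) x) sstar
            = Cnt (satList (assignGame A) τ) sstar := by rw [h]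
        rw [cnt_satList, cnt_satList] at heq
        omega
      · exact absurd h h3
    rcases hx.2 τ hτcore with h | h
    · rw [h] at hlex
      exact (irrefl _) hlex
    · exact asymm hlex h

end AssignPMAS

/-- In a PMAS-admissible assignment game the nucleolus coincides
with the tau-value: the tau-value is the (unique) nucleolus. -/
theorem assignGame_pmas_nucleolus_eq_tau {I J : Type*} [Fintype I] [Fintype J]
    [Nonempty I] [Nonempty J] [DecidableEq I] [DecidableEq J]
    (A : I → J → ℝ) (hA : ∀ i j, 0 ≤ A i j)
    (hadm : ∃ y, IsPMAS (assignGame A) y)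
    (τ : I ⊕ J → ℝ) (hτ : IsTauValue (assignGame A) τ) :
    IsNucleolus (assignGame A) τ ∧ ∀ x, IsNucleolus (assignGame A) x → x = τ :=
  AssignPMAS.final_theorem A hA hadm τ hτ
end

section
/- Let (I ∪ J, w) be the assignment game with I = {1}, J = {2,3,4} induced by the row vector (a_{12}, a_{13}, a_{14}) = (a, b, c), where a ≥ b ≥ c > 0. Then the tau-value of w equals its nucleolus, and both equal the allocation x with x_1 = (a+b)/2, x_2 = (a−b)/2, x_3 = 0, x_4 = 0. -/
open Finset

-- ===== auxiliary material for the main theorem =====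

namespace AG15

abbrev P : Type := Fin 1 ⊕ Fin 3
abbrev i1 : P := Sum.inl 0
abbrev j0 : P := Sum.inr 0
abbrev j1 : P := Sum.inr 1
abbrev j2 : P := Sum.inr 2

lemma matching_iff (S : Finset P) (μ : Finset (Fin 1 × Fin 3)) :
    IsMatching S μ ↔ μ = ∅ ∨ ∃ j : Fin 3, Sum.inl 0 ∈ S ∧ Sum.inr j ∈ S ∧ μ = {(0, j)} := by
  constructor
  · rintro ⟨h1, h2, _⟩
    rcases Finset.eq_empty_or_nonempty μ with h | ⟨p, hp⟩
    · exact Or.inl h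
    · refine Or.inr ⟨p.2, ?_, (h1 p hp).2, ?_⟩
      · have := (h1 p hp).1
        have hp1 : p.1 = 0 := Subsingleton.elim _ _
        rwa [hp1] at this
      · have hp0 : p = (0, p.2) := Prod.ext (Subsingleton.elim _ _) rfl
        ext q
        simp only [Finset.mem_singleton]
        constructor
        · intro hq
          have hq' : q = p := h2 q hq p hp (Subsingleton.elim _ _)
          rw [hq']; exact hp0
        · intro h
          rw [h, ← hp0]; exact hp
  · rintro (rfl | ⟨j, hS, hj, rfl⟩)
    · exact ⟨by simp, by simp, by simp⟩
    · refine ⟨?_, ?_, ?_⟩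
      · rintro p hp
        simp only [Finset.mem_singleton] at hp
        subst hp
        exact ⟨hS, hj⟩
      · intro p hp q hq _
        simp only [Finset.mem_singleton] at hp hq; rw [hp, hq]
      · intro p hp q hq _
        simp only [Finset.mem_singleton] at hp hq; rw [hp, hq]

lemma image_matchings (a b c : ℝ) (S : Finset P) :
    ((fun μ : Finset (Fin 1 × Fin 3) => ∑ p ∈ μ, ![![a,b,c]] p.1 p.2) '' {μ | IsMatching S μ})
      = {x | x = 0 ∨ ∃ j : Fin 3, Sum.inl 0 ∈ S ∧ Sum.inr j ∈ S ∧ x = ![a,b,c] j} := by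
  ext x
  simp only [Set.mem_image, Set.mem_setOf_eq]
  constructor
  · rintro ⟨μ, hμ, rfl⟩
    rcases (matching_iff S μ).1 hμ with rfl | ⟨j, h1, h2, rfl⟩
    · exact Or.inl (by simp)
    · exact Or.inr ⟨j, h1, h2, by simp⟩
  · rintro (rfl | ⟨j, h1, h2, rfl⟩)
    · exact ⟨∅, (matching_iff S ∅).2 (Or.inl rfl), by simp⟩
    · exact ⟨{(0, j)}, (matching_iff S _).2 (Or.inr ⟨j, h1, h2, rfl⟩), by simp⟩

lemma w_eq (a b c : ℝ) (hab : b ≤ a) (hbc : c ≤ b) (hc : 0 ≤ c)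
    (S : Finset P) :
    assignGame ![![a,b,c]] S =
      if Sum.inl 0 ∈ S then
        (if Sum.inr 0 ∈ S then a else if Sum.inr 1 ∈ S then b
          else if Sum.inr 2 ∈ S then c else 0)
      else 0 := by
  have hb : 0 ≤ b := hc.trans hbc
  have ha : 0 ≤ a := hb.trans hab
  rw [assignGame, image_matchings]
  have key : ∀ v : ℝ, 0 ≤ v →
      ((Sum.inl 0 ∈ S → ∀ j : Fin 3, Sum.inr j ∈ S → ![a,b,c] j ≤ v)) →
      (v = 0 ∨ ∃ j : Fin 3, Sum.inl 0 ∈ S ∧ Sum.inr j ∈ S ∧ v = ![a,b,c] j) →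
      sSup {x | x = 0 ∨ ∃ j : Fin 3, Sum.inl 0 ∈ S ∧ Sum.inr j ∈ S ∧ x = ![a,b,c] j} = v := by
    intro v hv hub hmem
    apply IsGreatest.csSup_eq
    constructor
    · exact hmem
    · rintro x (rfl | ⟨j, h1, h2, rfl⟩)
      · exact hv
      · exact hub h1 j h2
  split_ifs with h1 h2 h3 h4
  · apply key a ha
    · intro _ j hj
      fin_cases j <;> simp [hab, hbc.trans hab]
    · exact Or.inr ⟨0, h1, h2, by simp⟩
  · apply key b hb
    · intro _ j hj
      fin_cases j <;> simp_all [hbc]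
    · exact Or.inr ⟨1, h1, h3, by simp⟩
  · apply key c hc
    · intro _ j hj
      fin_cases j <;> simp_all
    · exact Or.inr ⟨2, h1, h4, by simp⟩
  · apply key 0 le_rfl
    · intro _ j hj
      fin_cases j <;> simp_all
    · exact Or.inl rfl
  · apply key 0 le_rfl
    · intro h; exact absurd h h1
    · exact Or.inl rfl

def sets : List (Finset P) :=
  [{j1}, {j2}, {i1, j0}, {j1, j2}, {i1, j0, j1}, {i1, j0, j2},
   {i1}, {j0}, {i1, j1}, {i1, j2}, {j0, j1}, {j0, j2}, {i1, j1, j2}, {j0, j1, j2}]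

lemma satList_eq (v : Finset P → ℝ) (y : P → ℝ) :
    satList v y = Multiset.sort
      (↑(List.map (fun S => ∑ i ∈ S, y i - v S) sets) : Multiset ℝ) (· ≤ ·) := by
  rw [satList]
  congr 1
  rw [← Multiset.map_coe]
  congr 1
  rw [Finset.filter_congr_decidable]
  decide

lemma sort_replicate_append (k : ℕ) (l : List ℝ) (h : ∀ x ∈ l, (0:ℝ) ≤ x) :
    Multiset.sort (↑(List.replicate k (0:ℝ) ++ l)) (· ≤ ·)
      = List.replicate k (0:ℝ) ++ Multiset.sort (↑l : Multiset ℝ) (· ≤ ·) := by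
  have hperm : List.Perm (Multiset.sort (↑(List.replicate k (0:ℝ) ++ l) : Multiset ℝ) (· ≤ ·))
      (List.replicate k (0:ℝ) ++ Multiset.sort (↑l : Multiset ℝ) (· ≤ ·)) := by
    rw [← Multiset.coe_eq_coe, Multiset.sort_eq, ← Multiset.coe_add, ← Multiset.coe_add,
      Multiset.sort_eq]
  have hs1 : List.Pairwise (· ≤ ·)
      (Multiset.sort (↑(List.replicate k (0:ℝ) ++ l) : Multiset ℝ) (· ≤ ·)) :=
    Multiset.pairwise_sort _ _
  have hs2 : List.Pairwise (· ≤ ·)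
      (List.replicate k (0:ℝ) ++ Multiset.sort (↑l : Multiset ℝ) (· ≤ ·)) := by
    refine List.pairwise_append.2 ⟨?_, Multiset.pairwise_sort _ _, ?_⟩
    · exact List.pairwise_replicate.2 (Or.inr le_rfl)
    · intro x hx y hy
      rw [List.eq_of_mem_replicate hx]
      exact h y ((Multiset.mem_sort (α := ℝ) (· ≤ ·)).1 hy)
  exact List.Perm.eq_of_pairwise' hs1 hs2 hperm

lemma lex_prefix {r : ℝ → ℝ → Prop} (l l1 l2 : List ℝ) (h : List.Lex r l1 l2) :
    List.Lex r (l ++ l1) (l ++ l2) := by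
  induction l with
  | nil => exact h
  | cons x xs ih => exact List.Lex.cons ih

lemma sorted_lex (k : ℕ) (l1 l2 : List ℝ) (d u : ℝ)
    (h1 : ∀ x ∈ l1, (0:ℝ) ≤ x) (h2 : ∀ x ∈ l2, d ≤ x) (hu : u ∈ l1) (hud : u < d)
    (hne : l2 ≠ []) :
    List.Lex (· < ·) (Multiset.sort (↑(List.replicate k (0:ℝ) ++ l1) : Multiset ℝ) (· ≤ ·))
      (Multiset.sort (↑(List.replicate k (0:ℝ) ++ l2) : Multiset ℝ) (· ≤ ·)) := by
  have h2' : ∀ x ∈ l2, (0:ℝ) ≤ x := fun x hx => le_trans (le_trans (h1 u hu) hud.le) (h2 x hx)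
  rw [sort_replicate_append k l1 h1, sort_replicate_append k l2 h2']
  apply lex_prefix
  have hu1 : u ∈ Multiset.sort (↑l1 : Multiset ℝ) (· ≤ ·) := by
    rw [Multiset.mem_sort (α := ℝ) (· ≤ ·)]; exact hu
  have hne2 : Multiset.sort (↑l2 : Multiset ℝ) (· ≤ ·) ≠ [] := by
    intro h
    rcases List.exists_mem_of_ne_nil l2 hne with ⟨z, hz⟩
    have : z ∈ Multiset.sort (↑l2 : Multiset ℝ) (· ≤ ·) := by
      rw [Multiset.mem_sort (α := ℝ) (· ≤ ·)]; exact hz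
    rw [h] at this; exact absurd this (List.not_mem_nil (a := z))
  obtain ⟨x1, t1, e1⟩ := List.exists_cons_of_ne_nil (List.ne_nil_of_mem hu1)
  obtain ⟨x2, t2, e2⟩ := List.exists_cons_of_ne_nil hne2
  rw [e1, e2]
  apply List.Lex.rel
  have hs1 : (x1 :: t1).Pairwise (· ≤ ·) := e1 ▸ Multiset.pairwise_sort _ _
  have hx1u : x1 ≤ u := by
    rw [e1] at hu1
    rcases List.mem_cons.1 hu1 with h | h
    · exact h.symm.le
    · exact (List.pairwise_cons.1 hs1).1 u h
  have hx2 : d ≤ x2 := by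
    have : x2 ∈ Multiset.sort (↑l2 : Multiset ℝ) (· ≤ ·) := by
      rw [e2]; exact List.mem_cons_self
    exact h2 x2 ((Multiset.mem_sort (α := ℝ) (· ≤ ·)).1 this)
  linarith

lemma map_sets (a b c t : ℝ) (hab : b ≤ a) (hbc : c ≤ b) (hc : 0 ≤ c)
    (y : P → ℝ) (hy1 : y i1 = t) (hy0 : y j0 = a - t)
    (hyq1 : y j1 = 0) (hyq2 : y j2 = 0) :
    List.map (fun S => ∑ i ∈ S, y i - assignGame ![![a,b,c]] S) sets
      = List.replicate 6 (0:ℝ) ++ [t, a-t, t-b, t-c, a-t, a-t, t-b, a-t] := by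
  simp only [sets, List.map_cons, List.map_nil]
  simp [w_eq a b c hab hbc hc, hy1, hy0, hyq1, hyq2, Finset.sum_insert, Finset.sum_singleton,
    Finset.mem_insert, Finset.mem_singleton]

end AG15


/-- For the assignment game with one row player and three column
players induced by the row vector `(a, b, c)` with `a ≥ b ≥ c > 0`, the
tau-value equals the nucleolus, and both equal
`(x_1, x_2, x_3, x_4) = ((a+b)/2, (a-b)/2, 0, 0)`. -/
theorem assignGame_one_row_tau_eq_nucleolus (a b c : ℝ)
    (hab : b ≤ a) (hbc : c ≤ b) (hc : 0 < c) :
    IsTauValue (assignGame ![![a, b, c]])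
      (Sum.elim ![(a + b) / 2] ![(a - b) / 2, 0, 0]) ∧
    IsNucleolus (assignGame ![![a, b, c]])
      (Sum.elim ![(a + b) / 2] ![(a - b) / 2, 0, 0]) := by
  have hc0 : (0:ℝ) ≤ c := hc.le
  have hb0 : (0:ℝ) ≤ b := hc0.trans hbc
  have ha0 : (0:ℝ) ≤ a := hb0.trans hab
  set v := assignGame ![![a, b, c]] with hvdef
  set x : Fin 1 ⊕ Fin 3 → ℝ := Sum.elim ![(a + b) / 2] ![(a - b) / 2, 0, 0] with hxdef
  have hw : ∀ S, v S = if Sum.inl 0 ∈ S then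
      (if Sum.inr 0 ∈ S then a else if Sum.inr 1 ∈ S then b
        else if Sum.inr 2 ∈ S then c else 0) else 0 := by
    intro S; rw [hvdef]; exact AG15.w_eq a b c hab hbc hc0 S
  -- x component values
  have hxi : x (Sum.inl 0) = (a + b) / 2 := by simp [hxdef]
  have hx0 : x (Sum.inr 0) = (a - b) / 2 := by simp [hxdef]
  have hx1 : x (Sum.inr 1) = 0 := by simp [hxdef]
  have hx2 : x (Sum.inr 2) = 0 := by simp [hxdef]
  have hxnn : ∀ i, 0 ≤ x i := by
    rintro (i | j)
    · obtain rfl : i = 0 := Subsingleton.elim _ _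
      rw [hxi]; linarith
    · fin_cases j
      · show 0 ≤ x (Sum.inr 0); rw [hx0]; linarith
      · show 0 ≤ x (Sum.inr 1); rw [hx1]
      · show 0 ≤ x (Sum.inr 2); rw [hx2]
  -- game values
  have hvuniv : v Finset.univ = a := by rw [hw]; simp
  -- upper vector
  have hM1 : upperVec v (Sum.inl 0) = a := by
    rw [upperVec, hw, hw]
    simp (config := { decide := true }) [Finset.mem_erase]
  have hM2 : upperVec v (Sum.inr 0) = a - b := by
    rw [upperVec, hw, hw]
    simp (config := { decide := true }) [Finset.mem_erase]
  have hM3 : upperVec v (Sum.inr 1) = 0 := by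
    rw [upperVec, hw, hw]
    simp (config := { decide := true }) [Finset.mem_erase]
  have hM4 : upperVec v (Sum.inr 2) = 0 := by
    rw [upperVec, hw, hw]
    simp (config := { decide := true }) [Finset.mem_erase]
  have hMnn : ∀ i, 0 ≤ upperVec v i := by
    rintro (i | j)
    · obtain rfl : i = 0 := Subsingleton.elim _ _
      rw [hM1]; exact ha0
    · fin_cases j
      · show 0 ≤ upperVec v (Sum.inr 0); rw [hM2]; linarith
      · show 0 ≤ upperVec v (Sum.inr 1); rw [hM3]
      · show 0 ≤ upperVec v (Sum.inr 2); rw [hM4]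
  -- lower vector
  have hm1 : lowerVec v (Sum.inl 0) = b := by
    rw [lowerVec]
    apply IsGreatest.csSup_eq
    constructor
    · refine ⟨{Sum.inl 0, Sum.inr 1}, by simp, ?_⟩
      have herase : ({Sum.inl 0, Sum.inr 1} : Finset (Fin 1 ⊕ Fin 3)).erase (Sum.inl 0)
          = {Sum.inr 1} := by decide
      rw [herase, Finset.sum_singleton, hM3, hw]
      simp (config := { decide := true })
    · rintro z ⟨S, hiS, rfl⟩
      rw [hw, if_pos hiS]
      by_cases h0 : (Sum.inr 0 : Fin 1 ⊕ Fin 3) ∈ S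
      · rw [if_pos h0]
        have hsub : upperVec v (Sum.inr 0) ≤ ∑ j ∈ S.erase (Sum.inl 0), upperVec v j :=
          Finset.single_le_sum (fun i _ => hMnn i) (Finset.mem_erase.2 ⟨by simp, h0⟩)
        rw [hM2] at hsub
        linarith
      · rw [if_neg h0]
        have hsum : 0 ≤ ∑ j ∈ S.erase (Sum.inl 0), upperVec v j :=
          Finset.sum_nonneg (fun i _ => hMnn i)
        split_ifs <;> linarith
  have hmcol : ∀ j : Fin 3, lowerVec v (Sum.inr j) = 0 := by
    intro j
    rw [lowerVec]
    apply IsGreatest.csSup_eq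
    constructor
    · refine ⟨{Sum.inr j}, Finset.mem_singleton_self _, ?_⟩
      rw [Finset.erase_singleton, Finset.sum_empty, hw]
      simp
    · rintro z ⟨S, hjS, rfl⟩
      rw [hw]
      by_cases hp : (Sum.inl 0 : Fin 1 ⊕ Fin 3) ∈ S
      · rw [if_pos hp]
        have hsub : upperVec v (Sum.inl 0) ≤ ∑ k ∈ S.erase (Sum.inr j), upperVec v k :=
          Finset.single_le_sum (fun i _ => hMnn i) (Finset.mem_erase.2 ⟨by simp, hp⟩)
        rw [hM1] at hsub
        split_ifs <;> linarith
      · rw [if_neg hp]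
        have hsum : 0 ≤ ∑ k ∈ S.erase (Sum.inr j), upperVec v k :=
          Finset.sum_nonneg (fun i _ => hMnn i)
        linarith
  have hxsum : ∑ i, x i = v Finset.univ := by
    rw [hvuniv]
    rw [Fintype.sum_sum_type]
    simp only [Fin.sum_univ_succ, Fin.sum_univ_zero, Fin.succ_zero_eq_one,
      Fin.succ_one_eq_two, hxi, hx0, hx1, hx2]
    ring
  have hxcore : InCore v x := by
    refine ⟨hxsum, ?_⟩
    intro S
    rw [hw]
    split_ifs with h1 h2 h3 h4
    · have hsub : ({Sum.inl 0, Sum.inr 0} : Finset (Fin 1 ⊕ Fin 3)) ⊆ S := by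
        intro z hz
        simp only [Finset.mem_insert, Finset.mem_singleton] at hz
        rcases hz with rfl | rfl
        · exact h1
        · exact h2
      have hle := Finset.sum_le_sum_of_subset_of_nonneg hsub (fun i _ _ => hxnn i)
      have hpair : ∑ i ∈ ({Sum.inl 0, Sum.inr 0} : Finset (Fin 1 ⊕ Fin 3)), x i = a := by
        rw [Finset.sum_pair (by simp), hxi, hx0]; ring
      linarith
    · have hsub : ({Sum.inl 0} : Finset (Fin 1 ⊕ Fin 3)) ⊆ S := by
        intro z hz
        simp only [Finset.mem_singleton] at hz
        subst hz; exact h1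
      have hle := Finset.sum_le_sum_of_subset_of_nonneg hsub (fun i _ _ => hxnn i)
      rw [Finset.sum_singleton, hxi] at hle
      linarith
    · have hsub : ({Sum.inl 0} : Finset (Fin 1 ⊕ Fin 3)) ⊆ S := by
        intro z hz
        simp only [Finset.mem_singleton] at hz
        subst hz; exact h1
      have hle := Finset.sum_le_sum_of_subset_of_nonneg hsub (fun i _ _ => hxnn i)
      rw [Finset.sum_singleton, hxi] at hle
      linarith
    · exact Finset.sum_nonneg (fun i _ => hxnn i)
    · exact Finset.sum_nonneg (fun i _ => hxnn i)
  refine ⟨⟨1/2, by norm_num, by norm_num, ?_, ?_⟩, hxcore, ?_⟩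
  · rintro (i | j)
    · obtain rfl : i = 0 := Subsingleton.elim _ _
      rw [hxi, hM1, hm1]; ring
    · fin_cases j
      · show x (Sum.inr 0) = 1/2 * upperVec v (Sum.inr 0) + (1 - 1/2) * lowerVec v (Sum.inr 0)
        rw [hx0, hM2, hmcol 0]; ring
      · show x (Sum.inr 1) = 1/2 * upperVec v (Sum.inr 1) + (1 - 1/2) * lowerVec v (Sum.inr 1)
        rw [hx1, hM3, hmcol 1]; ring
      · show x (Sum.inr 2) = 1/2 * upperVec v (Sum.inr 2) + (1 - 1/2) * lowerVec v (Sum.inr 2)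
        rw [hx2, hM4, hmcol 2]; ring
  · exact hxsum
  · -- nucleolus maximality
    intro y hy
    obtain ⟨hysum, hyS⟩ := hy
    rw [hvuniv] at hysum
    rw [Fintype.sum_sum_type] at hysum
    simp only [Fin.sum_univ_succ, Fin.sum_univ_zero, Fin.succ_zero_eq_one,
      Fin.succ_one_eq_two] at hysum
    have hq1 : 0 ≤ y (Sum.inr 1) := by
      have h := hyS {Sum.inr 1}
      rw [hw] at h
      simpa using h
    have hq2 : 0 ≤ y (Sum.inr 2) := by
      have h := hyS {Sum.inr 2}
      rw [hw] at h
      simpa using h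
    have hq0 : 0 ≤ y (Sum.inr 0) := by
      have h := hyS {Sum.inr 0}
      rw [hw] at h
      simpa using h
    have hpair : a ≤ y (Sum.inl 0) + y (Sum.inr 0) := by
      have h := hyS {Sum.inl 0, Sum.inr 0}
      rw [hw] at h
      rw [Finset.sum_pair (by simp)] at h
      simpa using h
    have hpb : b ≤ y (Sum.inl 0) + y (Sum.inr 1) := by
      have h := hyS {Sum.inl 0, Sum.inr 1}
      rw [hw] at h
      rw [Finset.sum_pair (by simp)] at h
      simpa using h
    have hy1 : y (Sum.inr 1) = 0 := by linarith
    have hy2 : y (Sum.inr 2) = 0 := by linarith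
    have hy0 : y (Sum.inr 0) = a - y (Sum.inl 0) := by linarith
    have hyb : b ≤ y (Sum.inl 0) := by linarith
    have hya : y (Sum.inl 0) ≤ a := by linarith
    by_cases ht : y (Sum.inl 0) = (a + b) / 2
    · left
      have hxy : y = x := by
        funext i
        rcases i with i | j
        · obtain rfl : i = 0 := Subsingleton.elim _ _
          rw [hxi, ht]
        · fin_cases j
          · show y (Sum.inr 0) = x (Sum.inr 0); rw [hx0, hy0, ht]; ring
          · show y (Sum.inr 1) = x (Sum.inr 1); rw [hx1, hy1]
          · show y (Sum.inr 2) = x (Sum.inr 2); rw [hx2, hy2]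
      rw [hxy]
    · right
      rw [AG15.satList_eq v y, AG15.satList_eq v x]
      rw [AG15.map_sets a b c (y (Sum.inl 0)) hab hbc hc0 y rfl hy0 hy1 hy2,
        AG15.map_sets a b c ((a + b)/2) hab hbc hc0 x hxi
          (by rw [hx0]; ring) hx1 hx2]
      set t := y (Sum.inl 0) with htdef
      apply AG15.sorted_lex 6 _ _ ((a - b)/2)
        (if t - b < (a - b)/2 then t - b else a - t)
      · intro z hz
        simp only [List.mem_cons, List.not_mem_nil, or_false] at hz
        rcases hz with rfl | rfl | rfl | rfl | rfl | rfl | rfl | rfl <;> linarith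
      · intro z hz
        simp only [List.mem_cons, List.not_mem_nil, or_false] at hz
        rcases hz with rfl | rfl | rfl | rfl | rfl | rfl | rfl | rfl <;> linarith
      · split_ifs with h
        · simp only [List.mem_cons]; tauto
        · simp only [List.mem_cons]; tauto
      · split_ifs with h
        · exact h
        · push_neg at h
          have hlt : (a + b) / 2 < t := lt_of_le_of_ne (by linarith) (Ne.symm ht)
          linarith
      · simp
end

section
/- Let (I ∪ J, w) be the assignment game with row players I = {1,2,3} and column players J = {4,5,6} induced by the matrix with rows (a, b, d), (c, 0, 0), (f, 0, 0) (i.e. a_{14} = a, a_{15} = b, a_{16} = d, a_{24} = c, a_{34} = f, all other entries 0), where a ≥ b + c, b ≥ d > 0, and c ≥ f > 0. Then the tau-value of w equals its nucleolus, and both equal the allocation x with x_1 = (a+b−c)/2, x_2 = x_3 = 0, x_4 = (a−b+c)/2, x_5 = x_6 = 0. -/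
open Finset

/-!
Only the corner players 1 and 4 matter. Every vector `(p, 0, 0; q, 0, 0)` with `p ≥ b`, `q ≥ c`,
`p + q ≥ a` is a dual cover of the matrix, so it bounds the game from above, while single pairs
bound it from below. Hence the core is the segment `{(t, 0, 0; a - t, 0, 0) : b ≤ t ≤ a - c}`,
the upper vector is `(a - c, 0, 0; a - b, 0, 0)` and the lower vector `(b, 0, 0; c, 0, 0)`, so
`τ` is their midpoint `t = (a + b - c) / 2`. At a core point `t`, the coalitions containing both
or neither corner player have satisfaction `0` and all others at least `min (t - b) (a - t - c)`,
with equality at `{1, 5}` or `{2, 4}`; the midpoint is the unique maximizer of this minimum, so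
it lexicographically beats every other core point at the first entry after those zeros.
-/
namespace List

variable {α : Type*} [LinearOrder α]

theorem Pairwise.head_of_countP_pos {r : α} {t : List α} (hl : (r :: t).Pairwise (· ≤ ·))
    {p : α → Bool} (hp : ∀ x y, x ≤ y → p y → p x) (h : 0 < (r :: t).countP p) : p r := by
  by_contra hr
  have : (r :: t).countP p = 0 := by
    rw [countP_eq_zero]
    intro x hx hpx
    rcases mem_cons.1 hx with rfl | hx
    · exact hr hpx
    · exact hr (hp r x (rel_of_pairwise_cons hl hx) hpx)
  omega

theorem lex_lt_of_countP {m e : α} {k : ℕ} {l₁ l₂ : List α}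
    (h₁ : l₁.Pairwise (· ≤ ·)) (h₂ : l₂.Pairwise (· ≤ ·)) (hlen : l₁.length = l₂.length)
    (hm₁ : ∀ r ∈ l₁, m ≤ r) (hm₂ : ∀ r ∈ l₂, m ≤ r)
    (hk₁ : k ≤ l₁.countP (· ≤ m)) (hk₂ : k ≤ l₂.countP (· ≤ m))
    (he₁ : k < l₁.countP (· < e)) (he₂ : l₂.countP (· < e) ≤ k) :
    Lex (· < ·) l₁ l₂ := by
  -- the first `k` entries of both lists are `m`; the next one is `< e` in `l₁` and `≥ e` in `l₂`
  have hlt : ∀ x y : α, x ≤ y → decide (y < e) → decide (x < e) := by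
    simpa using fun x y hxy => hxy.trans_lt
  have hle : ∀ x y : α, x ≤ y → decide (y ≤ m) → decide (x ≤ m) := by
    simpa using fun x y hxy => hxy.trans
  induction k generalizing l₁ l₂ with
  | zero =>
    obtain _ | ⟨r₁, t₁⟩ := l₁
    · simp at he₁
    obtain _ | ⟨r₂, t₂⟩ := l₂
    · simp at hlen
    have hr₁ : r₁ < e := by simpa using h₁.head_of_countP_pos hlt he₁
    have hr₂ : e ≤ r₂ := by
      by_contra! hr₂
      simp [hr₂] at he₂
    exact .rel (hr₁.trans_le hr₂)
  | succ k ih =>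
    obtain _ | ⟨r₁, t₁⟩ := l₁
    · simp at he₁
    obtain _ | ⟨r₂, t₂⟩ := l₂
    · simp at hlen
    have hr₁ : r₁ = m := le_antisymm (by simpa using h₁.head_of_countP_pos hle (by omega))
      (hm₁ r₁ mem_cons_self)
    have hr₂ : r₂ = m := le_antisymm (by simpa using h₂.head_of_countP_pos hle (by omega))
      (hm₂ r₂ mem_cons_self)
    have hme : m < e := hr₁ ▸ by simpa using h₁.head_of_countP_pos hlt (by omega)
    subst hr₁ hr₂
    refine .cons (ih h₁.of_cons h₂.of_cons (by simpa using hlen)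
      (fun r hr => hm₁ r (mem_cons_of_mem _ hr)) (fun r hr => hm₂ r (mem_cons_of_mem _ hr))
      ?_ ?_ ?_ ?_) <;> simp_all

end List

section Satisfaction

variable {α : Type*} [Fintype α] (v : Finset α → ℝ) (x : α → ℝ)

theorem satList_pairwise : (satList v x).Pairwise (· ≤ ·) := Multiset.pairwise_sort _ _

theorem length_satList_eq (y : α → ℝ) : (satList v x).length = (satList v y).length := by
  simp [satList]

theorem countP_satList [DecidableEq α] (q : ℝ → Bool) :
    (satList v x).countP q =
      #(univ.filter fun S : Finset α => (S.Nonempty ∧ S ≠ univ) ∧ q (∑ i ∈ S, x i - v S)) := by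
  conv_lhs => rw [show q = fun r => decide (q r = true) by simp]
  rw [satList, ← Multiset.coe_countP, Multiset.sort_eq, Multiset.countP_map,
    filter_congr_decidable, ← filter_val, filter_filter]
  rfl

variable {v x}

theorem InCore.nonneg_of_mem_satList (hx : InCore v x) {r : ℝ} (hr : r ∈ satList v x) :
    0 ≤ r := by
  classical
  obtain ⟨S, -, rfl⟩ := Multiset.mem_map.1 ((Multiset.mem_sort _).1 hr)
  exact sub_nonneg.2 (hx.2 S)

end Satisfaction

section AssignmentGame

variable {I J : Type*}

theorem isMatching_empty (S : Finset (I ⊕ J)) : IsMatching S (∅ : Finset (I × J)) := by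
  simp [IsMatching]

theorem isMatching_singleton {S : Finset (I ⊕ J)} {i : I} {j : J} (hi : Sum.inl i ∈ S)
    (hj : Sum.inr j ∈ S) : IsMatching S {(i, j)} := by
  simp [IsMatching, hi, hj]

theorem IsMatching.sum_le_of_cover {A : I → J → ℝ} {S : Finset (I ⊕ J)} {μ : Finset (I × J)}
    (hμ : IsMatching S μ) {u : I → ℝ} {v : J → ℝ} (hu : 0 ≤ u) (hv : 0 ≤ v)
    (hA : ∀ i j, A i j ≤ u i + v j) :
    ∑ p ∈ μ, A p.1 p.2 ≤ ∑ s ∈ S, Sum.elim u v s := by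
  classical
  obtain ⟨hmem, hfst, hsnd⟩ := hμ
  have hleft : μ.image Prod.fst ⊆ S.toLeft := fun i hi => by
    obtain ⟨p, hp, rfl⟩ := mem_image.1 hi
    exact mem_toLeft.2 (hmem p hp).1
  have hright : μ.image Prod.snd ⊆ S.toRight := fun j hj => by
    obtain ⟨p, hp, rfl⟩ := mem_image.1 hj
    exact mem_toRight.2 (hmem p hp).2
  calc ∑ p ∈ μ, A p.1 p.2
      ≤ ∑ p ∈ μ, u p.1 + ∑ p ∈ μ, v p.2 := by
        rw [← sum_add_distrib]; exact sum_le_sum fun p _ => hA _ _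
    _ = ∑ i ∈ μ.image Prod.fst, u i + ∑ j ∈ μ.image Prod.snd, v j := by
        rw [sum_image fun p hp q hq => hfst p hp q hq,
          sum_image fun p hp q hq => hsnd p hp q hq]
    _ ≤ ∑ i ∈ S.toLeft, u i + ∑ j ∈ S.toRight, v j :=
        add_le_add (sum_le_sum_of_subset_of_nonneg hleft fun i _ _ => hu i)
          (sum_le_sum_of_subset_of_nonneg hright fun j _ _ => hv j)
    _ = ∑ s ∈ S, Sum.elim u v s := (sum_sum_eq_sum_toLeft_add_sum_toRight S (Sum.elim u v)).symm

variable [Fintype I] [Fintype J] (A : I → J → ℝ) (S : Finset (I ⊕ J))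

theorem sum_le_assignGame {μ : Finset (I × J)} (hμ : IsMatching S μ) :
    ∑ p ∈ μ, A p.1 p.2 ≤ assignGame A S :=
  le_csSup (Set.toFinite _).bddAbove ⟨μ, hμ, rfl⟩

theorem assignGame_nonneg : 0 ≤ assignGame A S := by
  simpa using sum_le_assignGame A S (isMatching_empty S)

theorem le_assignGame {i : I} {j : J} (hi : Sum.inl i ∈ S) (hj : Sum.inr j ∈ S) :
    A i j ≤ assignGame A S := by
  simpa using sum_le_assignGame A S (isMatching_singleton hi hj)

variable {A S}

theorem assignGame_le_sum_of_cover {u : I → ℝ} {v : J → ℝ} (hu : 0 ≤ u) (hv : 0 ≤ v)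
    (hA : ∀ i j, A i j ≤ u i + v j) : assignGame A S ≤ ∑ s ∈ S, Sum.elim u v s :=
  csSup_le ⟨_, ∅, isMatching_empty S, rfl⟩ fun _ ⟨_, hμ, hμr⟩ =>
    hμr ▸ hμ.sum_le_of_cover hu hv hA

end AssignmentGame

theorem lowerVec_eq_of_forall_le_of_eq {α : Type*} [Fintype α] [DecidableEq α]
    {v : Finset α → ℝ} {i : α} {t : ℝ}
    (hle : ∀ S, i ∈ S → v S ≤ ∑ j ∈ S, upperVec v j - upperVec v i + t)
    {T : Finset α} (hT : i ∈ T) (hTt : v T = ∑ j ∈ T, upperVec v j - upperVec v i + t) :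
    lowerVec v i = t := by
  refine IsGreatest.csSup_eq ⟨⟨T, hT, ?_⟩, ?_⟩
  · rw [sum_erase_eq_sub hT, hTt]
    ring
  · rintro _ ⟨S, hS, rfl⟩
    linarith [hle S hS, sum_erase_eq_sub (f := upperVec v) hS]

section GammaGame

open Sum

def gammaMatrix (a b c d f : ℝ) : Fin 3 → Fin 3 → ℝ := ![![a, b, d], ![c, 0, 0], ![f, 0, 0]]

/-- Players `1, 2, 3` are `inl 0, inl 1, inl 2` and players `4, 5, 6` are `inr 0, inr 1, inr 2`. -/
def cornerAlloc (p q : ℝ) : Fin 3 ⊕ Fin 3 → ℝ := Sum.elim ![p, 0, 0] ![q, 0, 0]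

theorem cornerAlloc_apply (p q : ℝ) (s : Fin 3 ⊕ Fin 3) :
    cornerAlloc p q s = (if s = inl 0 then p else 0) + (if s = inr 0 then q else 0) := by
  rcases s with i | j
  · fin_cases i <;> simp [cornerAlloc]
  · fin_cases j <;> simp [cornerAlloc]

@[simp]
theorem cornerAlloc_inl_zero (p q : ℝ) : cornerAlloc p q (inl 0) = p := rfl

@[simp]
theorem cornerAlloc_inr_zero (p q : ℝ) : cornerAlloc p q (inr 0) = q := rfl

theorem cornerAlloc_of_ne (p q : ℝ) {s : Fin 3 ⊕ Fin 3} (h1 : s ≠ inl 0) (h4 : s ≠ inr 0) :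
    cornerAlloc p q s = 0 := by
  simp [cornerAlloc_apply, h1, h4]

theorem sum_cornerAlloc (p q : ℝ) (S : Finset (Fin 3 ⊕ Fin 3)) :
    ∑ s ∈ S, cornerAlloc p q s = (if inl 0 ∈ S then p else 0) + (if inr 0 ∈ S then q else 0) := by
  simp only [cornerAlloc_apply, sum_add_distrib, sum_ite_eq']

def cornerBalanced : Finset (Finset (Fin 3 ⊕ Fin 3)) :=
  univ.filter fun S => (S.Nonempty ∧ S ≠ univ) ∧ (inl 0 ∈ S ↔ inr 0 ∈ S)

variable {a b c d f : ℝ}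

local notation "𝒢" => assignGame (gammaMatrix a b c d f)

theorem assignGame_gammaMatrix_le (hbd : d ≤ b) (hd : 0 ≤ d) (hcf : f ≤ c) (hf : 0 ≤ f)
    {p q : ℝ} (hp : b ≤ p) (hq : c ≤ q) (hpq : a ≤ p + q) (S : Finset (Fin 3 ⊕ Fin 3)) :
    𝒢 S ≤ ∑ s ∈ S, cornerAlloc p q s := by
  have hdp : d ≤ p := hbd.trans hp
  have hfq : f ≤ q := hcf.trans hq
  refine assignGame_le_sum_of_cover (u := ![p, 0, 0]) (v := ![q, 0, 0]) ?_ ?_ ?_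
  · intro i; fin_cases i <;> simp [hd.trans hdp]
  · intro j; fin_cases j <;> simp [hf.trans hfq]
  · intro i j; fin_cases i <;> fin_cases j <;> simp [gammaMatrix, hp, hq, hpq, hdp, hfq]

variable (hdom : b + c ≤ a) (hbd : d ≤ b) (hd : 0 ≤ d) (hcf : f ≤ c) (hf : 0 ≤ f)
include hdom hbd hd hcf hf

theorem assignGame_gammaMatrix_eq_a {S : Finset (Fin 3 ⊕ Fin 3)} (h1 : inl 0 ∈ S)
    (h4 : inr 0 ∈ S) : 𝒢 S = a := by
  refine le_antisymm ?_ (by simpa [gammaMatrix] using le_assignGame (gammaMatrix a b c d f) S h1 h4)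
  simpa [sum_cornerAlloc, h1, h4] using
    assignGame_gammaMatrix_le hbd hd hcf hf (p := a - c) (by linarith) le_rfl (by linarith) S

theorem assignGame_gammaMatrix_eq_b {S : Finset (Fin 3 ⊕ Fin 3)} (h1 : inl 0 ∈ S)
    (h5 : inr 1 ∈ S) (h4 : inr 0 ∉ S) : 𝒢 S = b := by
  refine le_antisymm ?_ (by simpa [gammaMatrix] using le_assignGame (gammaMatrix a b c d f) S h1 h5)
  simpa [sum_cornerAlloc, h1, h4] using
    assignGame_gammaMatrix_le hbd hd hcf hf (q := a - b) le_rfl (by linarith) (by linarith) S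

theorem assignGame_gammaMatrix_eq_c {S : Finset (Fin 3 ⊕ Fin 3)} (h2 : inl 1 ∈ S)
    (h4 : inr 0 ∈ S) (h1 : inl 0 ∉ S) : 𝒢 S = c := by
  refine le_antisymm ?_ (by simpa [gammaMatrix] using le_assignGame (gammaMatrix a b c d f) S h2 h4)
  simpa [sum_cornerAlloc, h1, h4] using
    assignGame_gammaMatrix_le hbd hd hcf hf (p := a - c) (by linarith) le_rfl (by linarith) S

theorem assignGame_gammaMatrix_eq_zero {S : Finset (Fin 3 ⊕ Fin 3)} (h1 : inl 0 ∉ S)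
    (h4 : inr 0 ∉ S) : 𝒢 S = 0 := by
  refine le_antisymm ?_ (assignGame_nonneg _ S)
  simpa [sum_cornerAlloc, h1, h4] using
    assignGame_gammaMatrix_le hbd hd hcf hf (p := a - c) (by linarith) le_rfl (by linarith) S

theorem upperVec_gammaMatrix : upperVec 𝒢 = cornerAlloc (a - c) (a - b) := by
  have hN := assignGame_gammaMatrix_eq_a hdom hbd hd hcf hf (mem_univ (inl 0)) (mem_univ (inr 0))
  funext s
  rw [upperVec, hN]
  by_cases h1 : s = inl 0
  · rw [h1, cornerAlloc_inl_zero,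
      assignGame_gammaMatrix_eq_c hdom hbd hd hcf hf (by simp) (by simp) (by simp)]
  by_cases h4 : s = inr 0
  · rw [h4, cornerAlloc_inr_zero,
      assignGame_gammaMatrix_eq_b hdom hbd hd hcf hf (by simp) (by simp) (by simp)]
  rw [cornerAlloc_of_ne _ _ h1 h4, sub_eq_zero,
    assignGame_gammaMatrix_eq_a hdom hbd hd hcf hf (by simp [Ne.symm h1]) (by simp [Ne.symm h4])]

theorem lowerVec_gammaMatrix_inl_zero : lowerVec 𝒢 (inl 0) = b := by
  refine lowerVec_eq_of_forall_le_of_eq (fun S hS => ?_) (T := {inl 0, inr 1}) (by simp) ?_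
  · have := assignGame_gammaMatrix_le hbd hd hcf hf (a := a) (q := a - b) le_rfl
      (by linarith) (by linarith) S
    rw [upperVec_gammaMatrix hdom hbd hd hcf hf, cornerAlloc_inl_zero, sum_cornerAlloc,
      if_pos hS]
    rw [sum_cornerAlloc, if_pos hS] at this
    split_ifs at this ⊢ <;> linarith
  · rw [upperVec_gammaMatrix hdom hbd hd hcf hf, sum_cornerAlloc,
      assignGame_gammaMatrix_eq_b hdom hbd hd hcf hf (by simp) (by simp) (by simp)]
    simp

theorem lowerVec_gammaMatrix_inr_zero : lowerVec 𝒢 (inr 0) = c := by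
  refine lowerVec_eq_of_forall_le_of_eq (fun S hS => ?_) (T := {inl 1, inr 0}) (by simp) ?_
  · have := assignGame_gammaMatrix_le hbd hd hcf hf (a := a) (p := a - c) (by linarith)
      le_rfl (by linarith) S
    rw [upperVec_gammaMatrix hdom hbd hd hcf hf, cornerAlloc_inr_zero, sum_cornerAlloc,
      if_pos hS]
    rw [sum_cornerAlloc, if_pos hS] at this
    split_ifs at this ⊢ <;> linarith
  · rw [upperVec_gammaMatrix hdom hbd hd hcf hf, sum_cornerAlloc,
      assignGame_gammaMatrix_eq_c hdom hbd hd hcf hf (by simp) (by simp) (by simp)]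
    simp

theorem lowerVec_gammaMatrix_of_ne {s : Fin 3 ⊕ Fin 3} (h1 : s ≠ inl 0) (h4 : s ≠ inr 0) :
    lowerVec 𝒢 s = 0 := by
  refine lowerVec_eq_of_forall_le_of_eq (fun S hS => ?_) (T := {s}) (by simp) ?_
  · have := assignGame_gammaMatrix_le hbd hd hcf hf (a := a) (p := a - c) (q := a - b)
      (by linarith) (by linarith) (by linarith) S
    rwa [upperVec_gammaMatrix hdom hbd hd hcf hf, cornerAlloc_of_ne _ _ h1 h4, sub_zero,
      add_zero]
  · rw [upperVec_gammaMatrix hdom hbd hd hcf hf, sum_singleton, sub_self, zero_add,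
      assignGame_gammaMatrix_eq_zero hdom hbd hd hcf hf (by simp [Ne.symm h1])
        (by simp [Ne.symm h4])]

theorem lowerVec_gammaMatrix : lowerVec 𝒢 = cornerAlloc b c := by
  funext s
  by_cases h1 : s = inl 0
  · subst h1
    exact lowerVec_gammaMatrix_inl_zero hdom hbd hd hcf hf
  by_cases h4 : s = inr 0
  · subst h4
    exact lowerVec_gammaMatrix_inr_zero hdom hbd hd hcf hf
  rw [lowerVec_gammaMatrix_of_ne hdom hbd hd hcf hf h1 h4, cornerAlloc_of_ne _ _ h1 h4]

theorem isTauValue_gammaMatrix :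
    IsTauValue 𝒢 (cornerAlloc ((a + b - c) / 2) ((a - b + c) / 2)) := by
  refine ⟨1 / 2, by norm_num, by norm_num, fun s => ?_, ?_⟩
  · rw [upperVec_gammaMatrix hdom hbd hd hcf hf, lowerVec_gammaMatrix hdom hbd hd hcf hf]
    simp only [cornerAlloc_apply]
    split_ifs <;> ring
  · rw [sum_cornerAlloc,
      assignGame_gammaMatrix_eq_a hdom hbd hd hcf hf (mem_univ (inl 0)) (mem_univ (inr 0))]
    simp only [mem_univ, if_true]
    ring

theorem inCore_cornerAlloc {t : ℝ} (hbt : b ≤ t) (htc : t ≤ a - c) :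
    InCore 𝒢 (cornerAlloc t (a - t)) := by
  refine ⟨?_, assignGame_gammaMatrix_le hbd hd hcf hf hbt (by linarith) (by linarith)⟩
  rw [sum_cornerAlloc,
    assignGame_gammaMatrix_eq_a hdom hbd hd hcf hf (mem_univ (inl 0)) (mem_univ (inr 0))]
  simp

theorem exists_eq_cornerAlloc_of_inCore {y : Fin 3 ⊕ Fin 3 → ℝ} (hy : InCore 𝒢 y) :
    ∃ t, b ≤ t ∧ t ≤ a - c ∧ y = cornerAlloc t (a - t) := by
  have hy0 (s : Fin 3 ⊕ Fin 3) : 0 ≤ y s := by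
    simpa using (assignGame_nonneg _ {s}).trans (hy.2 {s})
  have hle {s : Fin 3 ⊕ Fin 3} (h1 : s ≠ inl 0) (h4 : s ≠ inr 0) :
      y (inl 0) + y (inr 0) + y s ≤ a := by
    have := sum_le_sum_of_subset_of_nonneg (subset_univ {inl 0, inr 0, s}) fun s _ _ => hy0 s
    rwa [sum_insert (by simp [Ne.symm h1]), sum_pair (Ne.symm h4), ← add_assoc, hy.1,
      assignGame_gammaMatrix_eq_a hdom hbd hd hcf hf (mem_univ _) (mem_univ _)] at this
  have h14 := hy.2 {inl 0, inr 0}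
  rw [sum_pair (by simp), assignGame_gammaMatrix_eq_a hdom hbd hd hcf hf (by simp) (by simp)] at h14
  have h15 := hy.2 {inl 0, inr 1}
  rw [sum_pair (by simp),
    assignGame_gammaMatrix_eq_b hdom hbd hd hcf hf (by simp) (by simp) (by simp)] at h15
  have h24 := hy.2 {inl 1, inr 0}
  rw [sum_pair (by simp),
    assignGame_gammaMatrix_eq_c hdom hbd hd hcf hf (by simp) (by simp) (by simp)] at h24
  have hy4 : y (inr 0) = a - y (inl 0) := by
    linarith [hle (s := inl 1) (by simp) (by simp), hy0 (inl 1)]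
  have hz {s : Fin 3 ⊕ Fin 3} (h1 : s ≠ inl 0) (h4 : s ≠ inr 0) : y s = 0 := by
    linarith [hle h1 h4, hy0 s]
  refine ⟨y (inl 0), by linarith [hz (s := inr 1) (by simp) (by simp)],
    by linarith [hz (s := inl 1) (by simp) (by simp)], funext fun s => ?_⟩
  by_cases h1 : s = inl 0
  · rw [h1, cornerAlloc_inl_zero]
  by_cases h4 : s = inr 0
  · rw [h4, cornerAlloc_inr_zero, hy4]
  rw [hz h1 h4, cornerAlloc_of_ne _ _ h1 h4]

theorem sum_cornerAlloc_sub_assignGame_of_iff (t : ℝ) {S : Finset (Fin 3 ⊕ Fin 3)}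
    (hS : inl 0 ∈ S ↔ inr 0 ∈ S) : ∑ s ∈ S, cornerAlloc t (a - t) s - 𝒢 S = 0 := by
  rw [sum_cornerAlloc]
  by_cases h1 : inl 0 ∈ S
  · rw [if_pos h1, if_pos (hS.1 h1), assignGame_gammaMatrix_eq_a hdom hbd hd hcf hf h1 (hS.1 h1)]
    ring
  · rw [if_neg h1, if_neg (mt hS.2 h1), assignGame_gammaMatrix_eq_zero hdom hbd hd hcf hf h1
      (mt hS.2 h1)]
    ring

theorem min_le_sum_cornerAlloc_sub_assignGame (t : ℝ) {S : Finset (Fin 3 ⊕ Fin 3)}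
    (hS : ¬(inl 0 ∈ S ↔ inr 0 ∈ S)) :
    min (t - b) (a - t - c) ≤ ∑ s ∈ S, cornerAlloc t (a - t) s - 𝒢 S := by
  have hb := assignGame_gammaMatrix_le hbd hd hcf hf (a := a) (q := a - b) le_rfl
    (by linarith) (by linarith) S
  have hc := assignGame_gammaMatrix_le hbd hd hcf hf (a := a) (p := a - c) (by linarith)
    le_rfl (by linarith) S
  rw [sum_cornerAlloc] at hb hc ⊢
  by_cases h1 : inl 0 ∈ S
  · have h4 : inr 0 ∉ S := fun h4 => hS (iff_of_true h1 h4)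
    simp only [h1, h4, if_true, if_false] at hb ⊢
    linarith [min_le_left (t - b) (a - t - c)]
  · have h4 : inr 0 ∈ S := by_contra fun h4 => hS (iff_of_false h1 h4)
    simp only [h1, h4, if_true, if_false] at hc ⊢
    linarith [min_le_right (t - b) (a - t - c)]

theorem cornerBalanced_subset_filter (t : ℝ) {q : ℝ → Bool} (hq : q 0) :
    cornerBalanced ⊆ univ.filter fun S => (S.Nonempty ∧ S ≠ univ) ∧
      q (∑ s ∈ S, cornerAlloc t (a - t) s - 𝒢 S) := fun S hS => by
  simp only [cornerBalanced, mem_filter] at hS ⊢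
  rw [sum_cornerAlloc_sub_assignGame_of_iff hdom hbd hd hcf hf t hS.2.2]
  exact ⟨hS.1, hS.2.1, hq⟩

theorem card_cornerBalanced_le_countP (t : ℝ) {q : ℝ → Bool} (hq : q 0) :
    #cornerBalanced ≤ (satList 𝒢 (cornerAlloc t (a - t))).countP q := by
  rw [countP_satList]
  exact card_le_card (cornerBalanced_subset_filter hdom hbd hd hcf hf t hq)

theorem card_cornerBalanced_lt_countP (t : ℝ) {q : ℝ → Bool} (hq : q 0)
    {T : Finset (Fin 3 ⊕ Fin 3)} (hT : T.Nonempty ∧ T ≠ univ) (hT' : ¬(inl 0 ∈ T ↔ inr 0 ∈ T))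
    (hqT : q (∑ s ∈ T, cornerAlloc t (a - t) s - 𝒢 T)) :
    #cornerBalanced < (satList 𝒢 (cornerAlloc t (a - t))).countP q := by
  have hTB : T ∉ cornerBalanced := by simp [cornerBalanced, hT']
  rw [countP_satList]
  exact (card_lt_card (ssubset_insert hTB)).trans_le (card_le_card (insert_subset
    (by simp [hT, hqT]) (cornerBalanced_subset_filter hdom hbd hd hcf hf t hq)))

theorem countP_satList_cornerAlloc_le_card_cornerBalanced {t e : ℝ}
    (he : e ≤ min (t - b) (a - t - c)) :
    (satList 𝒢 (cornerAlloc t (a - t))).countP (· < e) ≤ #cornerBalanced := by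
  rw [countP_satList]
  refine card_le_card fun S hS => ?_
  simp only [cornerBalanced, mem_filter, decide_eq_true_eq] at hS ⊢
  refine ⟨hS.1, hS.2.1, by_contra fun hS' => ?_⟩
  linarith [min_le_sum_cornerAlloc_sub_assignGame hdom hbd hd hcf hf t hS']

theorem lex_satList_cornerAlloc {t : ℝ} (hbt : b ≤ t) (htc : t ≤ a - c)
    (ht : t ≠ (a + b - c) / 2) :
    List.Lex (· < ·) (satList 𝒢 (cornerAlloc t (a - t)))
      (satList 𝒢 (cornerAlloc ((a + b - c) / 2) (a - (a + b - c) / 2))) := by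
  have he : 0 < (a - b - c) / 2 := by
    by_contra! he
    exact ht (by linarith)
  refine List.lex_lt_of_countP (m := 0) (e := (a - b - c) / 2) (k := #cornerBalanced)
    (satList_pairwise _ _) (satList_pairwise _ _) (length_satList_eq _ _ _)
    (fun _ => (inCore_cornerAlloc hdom hbd hd hcf hf hbt htc).nonneg_of_mem_satList)
    (fun _ => (inCore_cornerAlloc hdom hbd hd hcf hf (by linarith) (by linarith)
      ).nonneg_of_mem_satList)
    (card_cornerBalanced_le_countP hdom hbd hd hcf hf _ (by simp))
    (card_cornerBalanced_le_countP hdom hbd hd hcf hf _ (by simp)) ?_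
    (countP_satList_cornerAlloc_le_card_cornerBalanced hdom hbd hd hcf hf
      (le_min (by linarith) (by linarith)))
  rcases ht.lt_or_gt with ht | ht
  · refine card_cornerBalanced_lt_countP hdom hbd hd hcf hf t (by simpa using he)
      (T := {inl 0, inr 1}) ⟨by simp, by decide⟩ (by simp) ?_
    rw [sum_pair (by simp), cornerAlloc_inl_zero, cornerAlloc_of_ne _ _ (by simp) (by simp),
      assignGame_gammaMatrix_eq_b hdom hbd hd hcf hf (by simp) (by simp) (by simp),
      decide_eq_true_eq]
    linarith
  · refine card_cornerBalanced_lt_countP hdom hbd hd hcf hf t (by simpa using he)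
      (T := {inl 1, inr 0}) ⟨by simp, by decide⟩ (by simp) ?_
    rw [sum_pair (by simp), cornerAlloc_inr_zero, cornerAlloc_of_ne _ _ (by simp) (by simp),
      assignGame_gammaMatrix_eq_c hdom hbd hd hcf hf (by simp) (by simp) (by simp),
      decide_eq_true_eq]
    linarith

theorem isNucleolus_gammaMatrix :
    IsNucleolus 𝒢 (cornerAlloc ((a + b - c) / 2) ((a - b + c) / 2)) := by
  rw [show (a - b + c) / 2 = a - (a + b - c) / 2 by ring]
  refine ⟨inCore_cornerAlloc hdom hbd hd hcf hf (by linarith) (by linarith), fun y hy => ?_⟩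
  obtain ⟨t, hbt, htc, rfl⟩ := exists_eq_cornerAlloc_of_inCore hdom hbd hd hcf hf hy
  rcases eq_or_ne t ((a + b - c) / 2) with rfl | ht
  · exact Or.inl rfl
  · exact Or.inr (lex_satList_cornerAlloc hdom hbd hd hcf hf hbt htc ht)

end GammaGame

/-- For the assignment game with rows `(a, b, d), (c, 0, 0),
(f, 0, 0)`, where `a ≥ b + c`, `b ≥ d > 0`, `c ≥ f > 0`, the tau-value equals
the nucleolus, and both equal the allocation `((a+b-c)/2, 0, 0; (a-b+c)/2, 0, 0)`. -/
theorem assignGame_gamma_tau_eq_nucleolus (a b c d f : ℝ)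
    (hdom : b + c ≤ a) (hbd : d ≤ b) (hd : 0 < d) (hcf : f ≤ c) (hf : 0 < f) :
    IsTauValue (assignGame ![![a, b, d], ![c, 0, 0], ![f, 0, 0]])
      (Sum.elim ![(a + b - c) / 2, 0, 0] ![(a - b + c) / 2, 0, 0]) ∧
    IsNucleolus (assignGame ![![a, b, d], ![c, 0, 0], ![f, 0, 0]])
      (Sum.elim ![(a + b - c) / 2, 0, 0] ![(a - b + c) / 2, 0, 0]) :=
  ⟨isTauValue_gammaMatrix hdom hbd hd.le hcf hf.le,
    isNucleolus_gammaMatrix hdom hbd hd.le hcf hf.le⟩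
end

section
/- Consider the TU game (N,v) with N = {1,2,3,4} and v({1,2}) = 2, v({1,3}) = v({1,2,3}) = 3, v({1,4}) = v({1,2,4}) = 4, v({1,3,4}) = 5, v(N) = 8, and v(T) = 0 for every other coalition T ⊆ N. Then: (i) (N,v) is PMAS-admissible; (ii) the allocation y = (1, 2, 2, 3) lies in the core of (N,v); and (iii) y is not PMAS-extendable. -/
open Finset

/-- The 4-player veto-controlled game of Example 4 (players 1,2,3,4 modeled as
`0,1,2,3 : Fin 4`): `v({1,2}) = 2`, `v({1,3}) = v({1,2,3}) = 3`,
`v({1,4}) = v({1,2,4}) = 4`, `v({1,3,4}) = 5`, `v(N) = 8`, all else `0`. -/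
def vetoGame : Finset (Fin 4) → ℝ := fun S =>
  if S = {0, 1} then 2
  else if S = {0, 2} ∨ S = {0, 1, 2} then 3
  else if S = {0, 3} ∨ S = {0, 1, 3} then 4
  else if S = {0, 2, 3} then 5
  else if S = Finset.univ then 8
  else 0

/-- Natural-number version of `vetoGame`. -/
def vetoGameN : Finset (Fin 4) → ℕ := fun S =>
  if S = {0, 1} then 2
  else if S = {0, 2} ∨ S = {0, 1, 2} then 3
  else if S = {0, 3} ∨ S = {0, 1, 3} then 4
  else if S = {0, 2, 3} then 5
  else if S = Finset.univ then 8
  else 0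

lemma vetoGame_cast (S : Finset (Fin 4)) : vetoGame S = (vetoGameN S : ℝ) := by
  unfold vetoGame vetoGameN
  split_ifs <;> norm_num

lemma vetoGameN_mono : ∀ S T : Finset (Fin 4), S ⊆ T → vetoGameN S ≤ vetoGameN T := by
  decide

lemma vetoGameN_core : ∀ S : Finset (Fin 4),
    vetoGameN S ≤ ∑ i ∈ S, (![1, 2, 2, 3] : Fin 4 → ℕ) i := by
  decide

lemma vetoGame_zero_of_not_mem (S : Finset (Fin 4)) (h : (0 : Fin 4) ∉ S) :
    vetoGame S = 0 := by
  unfold vetoGame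
  split_ifs with h1 h2 h3 h4 h5
  · subst h1; simp at h
  · rcases h2 with h2 | h2 <;> (subst h2; simp at h)
  · rcases h3 with h3 | h3 <;> (subst h3; simp at h)
  · subst h4; simp at h
  · subst h5; simp at h
  · rfl

lemma sum_cast_y (S : Finset (Fin 4)) :
    ∑ i ∈ S, (![1, 2, 2, 3] : Fin 4 → ℝ) i
      = ((∑ i ∈ S, (![1, 2, 2, 3] : Fin 4 → ℕ) i : ℕ) : ℝ) := by
  rw [Nat.cast_sum]
  refine Finset.sum_congr rfl fun i _ => ?_
  fin_cases i <;> norm_num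

/-- The game `vetoGame` is PMAS-admissible, the allocation
`y = (1, 2, 2, 3)` lies in its core, but `y` is not PMAS-extendable. -/
theorem vetoGame_core_not_extendable :
    (∃ y, IsPMAS vetoGame y) ∧ InCore vetoGame ![1, 2, 2, 3] ∧
      ¬ PMASExtendable vetoGame ![1, 2, 2, 3] := by
  refine ⟨⟨fun S i => if i = 0 then vetoGame S else 0, ?_, ?_⟩, ⟨?_, ?_⟩, ?_⟩
  · -- efficiency of the veto PMAS
    intro S _
    rw [Finset.sum_ite_eq' S (0 : Fin 4) (fun _ => vetoGame S)]
    split_ifs with h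
    · rfl
    · exact (vetoGame_zero_of_not_mem S h).symm
  · -- monotonicity of the veto PMAS
    intro S T hST i _
    by_cases hi : i = 0
    · simp only [hi, if_pos rfl]
      rw [vetoGame_cast, vetoGame_cast]
      exact_mod_cast vetoGameN_mono S T hST
    · simp [hi]
  · -- efficiency of y
    have : vetoGame Finset.univ = 8 := by
      rw [vetoGame_cast, show vetoGameN Finset.univ = 8 from by decide]
      norm_num
    rw [this, Fin.sum_univ_four]
    norm_num
    rw [show (![1, 2, 2, 3] : Fin 4 → ℝ) 2 = 2 from rfl, show (![1, 2, 2, 3] : Fin 4 → ℝ) 3 = 3 from rfl]; norm_num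
  · -- core inequalities
    intro S
    rw [vetoGame_cast, sum_cast_y]
    exact_mod_cast vetoGameN_core S
  · -- y is not PMAS-extendable
    rintro ⟨x, ⟨heff, hmono⟩, hx⟩
    have h02 : ({0, 2} : Finset (Fin 4)) ⊆ {0, 2, 3} := by decide
    have h03 : ({0, 3} : Finset (Fin 4)) ⊆ {0, 2, 3} := by decide
    have h03u : ({0, 3} : Finset (Fin 4)) ⊆ Finset.univ := Finset.subset_univ _
    have e1 : x {0, 2} 0 + x {0, 2} 2 = 3 := by
      have := heff {0, 2} (by decide)
      rw [Finset.sum_pair (by decide : (0 : Fin 4) ≠ 2)] at this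
      rw [this, vetoGame_cast, show vetoGameN {0, 2} = 3 from by decide]
      norm_num
    have e2 : x {0, 3} 0 + x {0, 3} 3 = 4 := by
      have := heff {0, 3} (by decide)
      rw [Finset.sum_pair (by decide : (0 : Fin 4) ≠ 3)] at this
      rw [this, vetoGame_cast, show vetoGameN {0, 3} = 4 from by decide]
      norm_num
    have e3 : x {0, 2, 3} 0 + x {0, 2, 3} 2 + x {0, 2, 3} 3 = 5 := by
      have := heff {0, 2, 3} (by decide)
      rw [show ({0, 2, 3} : Finset (Fin 4)) = insert 0 {2, 3} by rfl,
        Finset.sum_insert (by decide), Finset.sum_pair (by decide : (2 : Fin 4) ≠ 3)] at this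
      rw [← add_assoc] at this
      rw [this, vetoGame_cast, show vetoGameN {0, 2, 3} = 5 from by decide]
      norm_num
    have m1 : x {0, 2} 0 ≤ x {0, 2, 3} 0 := hmono _ _ h02 0 (by decide)
    have m2 : x {0, 2} 2 ≤ x {0, 2, 3} 2 := hmono _ _ h02 2 (by decide)
    have m3 : x {0, 3} 3 ≤ x {0, 2, 3} 3 := hmono _ _ h03 3 (by decide)
    have m4 : x {0, 3} 0 ≤ x Finset.univ 0 := hmono _ _ h03u 0 (by decide)
    have hx0 : x Finset.univ 0 = 1 := by rw [hx 0]; norm_num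
    linarith
end
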